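/- arXiv:1702.06907 — 13 statements merged into one kernel-verified Lean document; each statement's English description precedes it below -/
import Mathlib

section
/- Let n be a natural number and let U : Fin n → Set ℝ be a family of subsets of ℝ, each of which is open and convex. Then the set of codewords {(fun i => decide (p ∈ U i)) : Fin n → Bool | p ∈ ℝ} is finite and has cardinality at most 2n + 1. -/
/- The codeword of a point `p` with respect to a family `U` of subsets of `ℝ`. -/
open Classical in
noncomputable def codeword {k : ℕ} (U : Fin k → Set ℝ) (p : ℝ) : Fin k → Bool :=
  fun i => decide (p ∈ U i)

/-- The code of `U` over a set `S` of sensors. -/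
def code {k : ℕ} (U : Fin k → Set ℝ) (S : Set ℝ) : Set (Fin k → Bool) :=
  codeword U '' S

namespace CodeAux

variable {n : ℕ} {U : Fin n → Set ℝ}

lemma cw_true_iff (U : Fin n → Set ℝ) (x : ℝ) (i : Fin n) :
    codeword U x i = true ↔ x ∈ U i := by
  simp [codeword]

lemma cw_eq_of_iff {x y : ℝ} (h : ∀ i, x ∈ U i ↔ y ∈ U i) :
    codeword U x = codeword U y := by
  funext i
  exact decide_eq_decide.mpr (h i)

lemma mem_of_between {s : Set ℝ} (hconv : Convex ℝ s) {x y z : ℝ}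
    (hx : x ∈ s) (hy : y ∈ s) (h1 : x ≤ z) (h2 : z ≤ y) : z ∈ s :=
  hconv.ordConnected.out hx hy ⟨h1, h2⟩

lemma exists_ball {s : Set ℝ} (hopen : IsOpen s) {x : ℝ} (hx : x ∈ s) :
    ∃ ε > 0, Set.Ioo (x - ε) (x + ε) ⊆ s := by
  obtain ⟨ε, hε, h⟩ := Metric.isOpen_iff.1 hopen x hx
  exact ⟨ε, hε, by rw [← Real.ball_eq_Ioo]; exact h⟩

/-- Near `-∞`, the codeword is eventually constant. -/
lemma aux_bot (U : Fin n → Set ℝ) (hconv : ∀ i, Convex ℝ (U i)) :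
    ∃ M : ℝ, ∀ x ≤ M, ∀ y ≤ M, codeword U x = codeword U y := by
  have h : ∀ i : Fin n, ∃ m : ℝ, ∀ x ≤ m, ∀ y ≤ m, (x ∈ U i ↔ y ∈ U i) := by
    intro i
    by_cases hb : BddBelow (U i)
    · obtain ⟨B, hB⟩ := hb
      refine ⟨B - 1, fun x hx y hy => iff_of_false (fun h => ?_) (fun h => ?_)⟩
      · have := hB h; linarith
      · have := hB h; linarith
    · rw [not_bddBelow_iff] at hb
      obtain ⟨q, hq, _⟩ := hb 0
      refine ⟨q, fun x hx y hy => iff_of_true ?_ ?_⟩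
      · obtain ⟨z, hz, hzx⟩ := hb x
        exact mem_of_between (hconv i) hz hq hzx.le hx
      · obtain ⟨z, hz, hzy⟩ := hb y
        exact mem_of_between (hconv i) hz hq hzy.le hy
  choose m hm using h
  refine ⟨(insert (0 : ℝ) (Finset.univ.image m)).min' (by simp), fun x hx y hy => ?_⟩
  apply cw_eq_of_iff
  intro i
  have hmi : (insert (0 : ℝ) (Finset.univ.image m)).min' (by simp) ≤ m i :=
    Finset.min'_le _ _ (by simp)
  exact hm i x (le_trans hx hmi) y (le_trans hy hmi)

/-- Just to the right of any point, the codeword is constant. -/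
lemma aux_right (U : Fin n → Set ℝ) (hconv : ∀ i, Convex ℝ (U i)) (a : ℝ) :
    ∃ d : ℝ, 0 < d ∧ ∀ x ∈ Set.Ioo a (a + d), ∀ y ∈ Set.Ioo a (a + d),
      codeword U x = codeword U y := by
  have h : ∀ i : Fin n, ∃ d : ℝ, 0 < d ∧ ∀ x ∈ Set.Ioo a (a + d), ∀ y ∈ Set.Ioo a (a + d),
      (x ∈ U i ↔ y ∈ U i) := by
    intro i
    by_cases hmem : ∀ e, 0 < e → ∃ p ∈ Set.Ioo a (a + e), p ∈ U i
    · obtain ⟨p, hp, hpU⟩ := hmem 1 one_pos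
      have hsub : Set.Ioo a p ⊆ U i := by
        rintro q ⟨hq1, hq2⟩
        obtain ⟨p', hp', hp'U⟩ := hmem (q - a) (by linarith)
        exact mem_of_between (hconv i) hp'U hpU (by linarith [hp'.2]) hq2.le
      refine ⟨p - a, by linarith [hp.1], fun x hx y hy => iff_of_true ?_ ?_⟩
      · exact hsub ⟨hx.1, by linarith [hx.2]⟩
      · exact hsub ⟨hy.1, by linarith [hy.2]⟩
    · push_neg at hmem
      obtain ⟨e, he, hout⟩ := hmem
      exact ⟨e, he, fun x hx y hy => iff_of_false (hout x hx) (hout y hy)⟩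
  choose d hd hdc using h
  refine ⟨(insert (1 : ℝ) (Finset.univ.image d)).min' (by simp), ?_, ?_⟩
  · rw [Finset.lt_min'_iff]
    intro b hb
    simp only [Finset.mem_insert, Finset.mem_image] at hb
    rcases hb with rfl | ⟨i, _, rfl⟩
    · exact one_pos
    · exact hd i
  · intro x hx y hy
    apply cw_eq_of_iff
    intro i
    have hmi : (insert (1 : ℝ) (Finset.univ.image d)).min' (by simp) ≤ d i :=
      Finset.min'_le _ _ (by simp)
    exact hdc i x ⟨hx.1, by linarith [hx.2]⟩ y ⟨hy.1, by linarith [hy.2]⟩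

/-- Just to the left of any point, the codeword is constant. -/
lemma aux_left (U : Fin n → Set ℝ) (hconv : ∀ i, Convex ℝ (U i)) (a : ℝ) :
    ∃ d : ℝ, 0 < d ∧ ∀ x ∈ Set.Ioo (a - d) a, ∀ y ∈ Set.Ioo (a - d) a,
      codeword U x = codeword U y := by
  have h : ∀ i : Fin n, ∃ d : ℝ, 0 < d ∧ ∀ x ∈ Set.Ioo (a - d) a, ∀ y ∈ Set.Ioo (a - d) a,
      (x ∈ U i ↔ y ∈ U i) := by
    intro i
    by_cases hmem : ∀ e, 0 < e → ∃ p ∈ Set.Ioo (a - e) a, p ∈ U i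
    · obtain ⟨p, hp, hpU⟩ := hmem 1 one_pos
      have hsub : Set.Ioo p a ⊆ U i := by
        rintro q ⟨hq1, hq2⟩
        obtain ⟨p', hp', hp'U⟩ := hmem (a - q) (by linarith)
        exact mem_of_between (hconv i) hpU hp'U hq1.le (by linarith [hp'.1])
      refine ⟨a - p, by linarith [hp.2], fun x hx y hy => iff_of_true ?_ ?_⟩
      · exact hsub ⟨by linarith [hx.1], hx.2⟩
      · exact hsub ⟨by linarith [hy.1], hy.2⟩
    · push_neg at hmem
      obtain ⟨e, he, hout⟩ := hmem
      exact ⟨e, he, fun x hx y hy => iff_of_false (hout x hx) (hout y hy)⟩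
  choose d hd hdc using h
  refine ⟨(insert (1 : ℝ) (Finset.univ.image d)).min' (by simp), ?_, ?_⟩
  · rw [Finset.lt_min'_iff]
    intro b hb
    simp only [Finset.mem_insert, Finset.mem_image] at hb
    rcases hb with rfl | ⟨i, _, rfl⟩
    · exact one_pos
    · exact hd i
  · intro x hx y hy
    apply cw_eq_of_iff
    intro i
    have hmi : (insert (1 : ℝ) (Finset.univ.image d)).min' (by simp) ≤ d i :=
      Finset.min'_le _ _ (by simp)
    exact hdc i x ⟨by linarith [hx.1], hx.2⟩ y ⟨by linarith [hy.1], hy.2⟩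

/-- The key trichotomy: every codeword is the codeword at `-∞`, or the right-local
codeword at `sInf (U i)`, or the codeword at `sSup (U i)`, for some `i`. -/
lemma tricho (U : Fin n → Set ℝ) (hopen : ∀ i, IsOpen (U i)) (hconv : ∀ i, Convex ℝ (U i))
    (M : ℝ) (hM : ∀ x ≤ M, ∀ y ≤ M, codeword U x = codeword U y)
    (rd : ℝ → ℝ) (hrd : ∀ a, 0 < rd a)
    (R : ℝ → Fin n → Bool)
    (hR : ∀ a, ∀ x ∈ Set.Ioo a (a + rd a), codeword U x = R a)
    (ld : ℝ → ℝ) (hld : ∀ a, 0 < ld a)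
    (L : ℝ → Fin n → Bool)
    (hL : ∀ a, ∀ x ∈ Set.Ioo (a - ld a) a, codeword U x = L a)
    (p : ℝ) :
    codeword U p = codeword U M ∨ (∃ i, codeword U p = R (sInf (U i))) ∨
      (∃ i, codeword U p = codeword U (sSup (U i))) := by
  classical
  by_cases h0 : codeword U p = codeword U M
  · exact Or.inl h0
  right
  set c := codeword U p with hc
  set A := {x : ℝ | codeword U x = c} with hA
  have hpA : p ∈ A := rfl
  have hAlb : ∀ x ∈ A, M < x := by
    intro x hx
    by_contra hxm
    push_neg at hxm
    exact h0 (hx ▸ (hM x hxm M le_rfl))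
  have hbdd : BddBelow A := ⟨M, fun x hx => (hAlb x hx).le⟩
  set a := sInf A with ha
  have haleb : ∀ x ∈ A, a ≤ x := fun x hx => csInf_le hbdd hx
  have hnotlt : ∀ x, x < a → codeword U x ≠ c := by
    intro x hxa hx
    exact absurd (haleb x hx) (not_le.2 hxa)
  -- the left-local codeword differs from c
  have hl0 : (a - ld a / 2) ∈ Set.Ioo (a - ld a) a := by
    constructor <;> [linarith [hld a]; linarith [hld a]]
  have hl0cw : codeword U (a - ld a / 2) = L a := hL a _ hl0
  have hLne : L a ≠ c := by
    intro h
    exact hnotlt (a - ld a / 2) (by linarith [hld a]) (hl0cw.trans h)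
  -- left-local membership facts
  have hLmem : ∀ i, L a i = true → ∀ x ∈ Set.Ioo (a - ld a) a, x ∈ U i := by
    intro i hi x hx
    rw [← cw_true_iff U x i, hL a x hx]; exact hi
  have hLnotmem : ∀ i, L a i = false → ∀ x ∈ Set.Ioo (a - ld a) a, x ∉ U i := by
    intro i hi x hx hmem
    rw [← cw_true_iff U x i, hL a x hx] at hmem
    rw [hi] at hmem; exact Bool.false_ne_true hmem
  have hRmem : ∀ i, R a i = true → ∀ x ∈ Set.Ioo a (a + rd a), x ∈ U i := by
    intro i hi x hx
    rw [← cw_true_iff U x i, hR a x hx]; exact hi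
  have hRnotmem : ∀ i, R a i = false → ∀ x ∈ Set.Ioo a (a + rd a), x ∉ U i := by
    intro i hi x hx hmem
    rw [← cw_true_iff U x i, hR a x hx] at hmem
    rw [hi] at hmem; exact Bool.false_ne_true hmem
  -- claim 1 : codeword at a is c, or the right-local codeword at a is c
  have hclaim : codeword U a = c ∨ R a = c := by
    obtain ⟨x, hxA, hxlt⟩ :=
      exists_lt_of_csInf_lt ⟨p, hpA⟩ (show sInf A < a + rd a by rw [← ha]; linarith [hrd a])
    rcases eq_or_lt_of_le (haleb x hxA) with he | hlt
    · left; rw [he]; exact hxA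
    · right; rw [← hR a x ⟨hlt, hxlt⟩]; exact hxA
  -- Case: the codeword at the point a itself is c
  have casePt : codeword U a = c → ∃ i, c = codeword U (sSup (U i)) := by
    intro hca
    -- there is a "fall" coordinate
    have hfall : ∃ i, L a i = true ∧ c i = false := by
      by_contra hno
      push_neg at hno
      apply hLne
      funext i
      cases hLi : L a i with
      | false =>
        cases hci : c i with
        | false => rfl
        | true =>
          -- a ∈ U i, openness contradicts left constancy
          exfalso
          have haU : a ∈ U i := by rw [← cw_true_iff U a i, hca]; exact hci
          obtain ⟨ε, hε, hball⟩ := exists_ball (hopen i) haU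
          have hx : (a - min ε (ld a) / 2) ∈ Set.Ioo (a - ld a) a := by
            constructor
            · have := min_le_right ε (ld a); linarith [hld a]
            · have := lt_min hε (hld a); linarith
          refine hLnotmem i hLi _ hx (hball ⟨?_, ?_⟩)
          · have := min_le_left ε (ld a); linarith [hε]
          · have := lt_min hε (hld a); linarith [hε]
      | true =>
        have := hno i hLi
        revert this
        cases c i <;> simp
    obtain ⟨i, hLi, hci⟩ := hfall
    have hanotU : a ∉ U i := by
      intro hmem
      rw [← cw_true_iff U a i, hca, hci] at hmem
      exact Bool.false_ne_true hmem
    have hl0U : (a - ld a / 2) ∈ U i := hLmem i hLi _ hl0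
    have hub : ∀ y ∈ U i, y ≤ a := by
      intro y hy
      by_contra hya
      push_neg at hya
      exact hanotU (mem_of_between (hconv i) hl0U hy (by linarith [hld a]) hya.le)
    have hsup : sSup (U i) = a := by
      refine le_antisymm (csSup_le ⟨_, hl0U⟩ hub) ?_
      by_contra hlt
      push_neg at hlt
      set y := a - min (a - sSup (U i)) (ld a) / 2 with hy
      have hyI : y ∈ Set.Ioo (a - ld a) a := by
        constructor
        · have := min_le_right (a - sSup (U i)) (ld a); simp only [hy]; linarith [hld a]
        · have := lt_min (by linarith : (0:ℝ) < a - sSup (U i)) (hld a)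
          simp only [hy]; linarith
      have hyU : y ∈ U i := hLmem i hLi _ hyI
      have h1 : y ≤ sSup (U i) := le_csSup ⟨a, hub⟩ hyU
      have := min_le_left (a - sSup (U i)) (ld a)
      have : sSup (U i) < y := by simp only [hy]; linarith [lt_min (by linarith : (0:ℝ) < a - sSup (U i)) (hld a)]
      linarith
    exact ⟨i, by rw [hsup]; exact hca.symm⟩
  rcases hclaim with hca | hra
  · exact Or.inr (casePt hca)
  -- Case : the right-local codeword at a is c
  by_cases hrise : ∃ i, L a i = false ∧ c i = true
  · -- rising coordinate : charge to sInf (U i)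
    obtain ⟨i, hLi, hci⟩ := hrise
    left
    have hRi : R a i = true := by rw [hra]; exact hci
    have hr0 : (a + rd a / 2) ∈ Set.Ioo a (a + rd a) := by
      constructor <;> [linarith [hrd a]; linarith [hrd a]]
    have hr0U : (a + rd a / 2) ∈ U i := hRmem i hRi _ hr0
    have hlb : ∀ y ∈ U i, a ≤ y := by
      intro y hy
      by_contra hya
      push_neg at hya
      rcases le_or_gt y (a - ld a / 2) with hy2 | hy2
      · exact hLnotmem i hLi _ hl0 (mem_of_between (hconv i) hy hr0U hy2 (by linarith [hld a, hrd a]))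
      · exact hLnotmem i hLi y ⟨by linarith [hld a], hya⟩ hy
    have hinf : sInf (U i) = a := by
      refine le_antisymm ?_ (le_csInf ⟨_, hr0U⟩ hlb)
      by_contra hlt
      push_neg at hlt
      set x := a + min (sInf (U i) - a) (rd a) / 2 with hx
      have hxI : x ∈ Set.Ioo a (a + rd a) := by
        constructor
        · have := lt_min (by linarith : (0:ℝ) < sInf (U i) - a) (hrd a)
          simp only [hx]; linarith
        · have := min_le_right (sInf (U i) - a) (rd a); simp only [hx]; linarith [hrd a]
      have hxU : x ∈ U i := hRmem i hRi _ hxI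
      have h1 : sInf (U i) ≤ x := csInf_le ⟨a, hlb⟩ hxU
      have := min_le_left (sInf (U i) - a) (rd a)
      have : x < sInf (U i) := by
        simp only [hx]
        linarith [lt_min (by linarith : (0:ℝ) < sInf (U i) - a) (hrd a)]
      linarith
    exact ⟨i, by rw [hinf]; exact hra.symm⟩
  · -- no rising coordinate : show codeword at a is c, then use casePt
    push_neg at hrise
    apply Or.inr
    apply casePt
    funext i
    cases hci : c i with
    | true =>
      have hLi : L a i = true := by
        cases hLa : L a i with
        | false => exact absurd hci (by simpa using hrise i hLa)
        | true => rfl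
      have hl0U : (a - ld a / 2) ∈ U i := hLmem i hLi _ hl0
      have hRi : R a i = true := by rw [hra]; exact hci
      have hr0 : (a + rd a / 2) ∈ Set.Ioo a (a + rd a) := by
        constructor <;> [linarith [hrd a]; linarith [hrd a]]
      have hr0U : (a + rd a / 2) ∈ U i := hRmem i hRi _ hr0
      have : a ∈ U i :=
        mem_of_between (hconv i) hl0U hr0U (by linarith [hld a]) (by linarith [hrd a])
      rw [cw_true_iff U a i]; exact this
    | false =>
      have hRi : R a i = false := by rw [hra]; exact hci
      rw [← Bool.not_eq_true]
      rw [cw_true_iff U a i]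
      intro haU
      obtain ⟨ε, hε, hball⟩ := exists_ball (hopen i) haU
      have hx : (a + min ε (rd a) / 2) ∈ Set.Ioo a (a + rd a) := by
        constructor
        · have := lt_min hε (hrd a); linarith
        · have := min_le_right ε (rd a); linarith [hrd a]
      refine hRnotmem i hRi _ hx (hball ⟨?_, ?_⟩)
      · have := lt_min hε (hrd a); linarith [hε]
      · have := min_le_left ε (rd a); linarith [hε]

end CodeAux

/-- The code over all of `ℝ` of a family of `n` open convex subsets of `ℝ`
is finite, of cardinality at most `2 n + 1`. -/
theorem code_of_open_convex_finite_card_le (n : ℕ) (U : Fin n → Set ℝ)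
    (hopen : ∀ i, IsOpen (U i)) (hconv : ∀ i, Convex ℝ (U i)) :
    (code U Set.univ).Finite ∧ (code U Set.univ).ncard ≤ 2 * n + 1 := by
  classical
  obtain ⟨M, hM⟩ := CodeAux.aux_bot U hconv
  choose rd hrd hrc using CodeAux.aux_right U hconv
  choose ld hld hlc using CodeAux.aux_left U hconv
  set R : ℝ → Fin n → Bool := fun a => codeword U (a + rd a / 2) with hRdef
  set L : ℝ → Fin n → Bool := fun a => codeword U (a - ld a / 2) with hLdef
  have hR : ∀ a, ∀ x ∈ Set.Ioo a (a + rd a), codeword U x = R a := by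
    intro a x hx
    exact hrc a x hx _ ⟨by linarith [hrd a], by linarith [hrd a]⟩
  have hL : ∀ a, ∀ x ∈ Set.Ioo (a - ld a) a, codeword U x = L a := by
    intro a x hx
    exact hlc a x hx _ ⟨by linarith [hld a], by linarith [hld a]⟩
  set T : Set (Fin n → Bool) :=
    insert (codeword U M)
      ((Set.range fun i => R (sInf (U i))) ∪ (Set.range fun i => codeword U (sSup (U i))))
    with hT
  have hsub : code U Set.univ ⊆ T := by
    rintro c ⟨p, -, rfl⟩
    rcases CodeAux.tricho U hopen hconv M hM rd hrd R hR ld hld L hL p with h | ⟨i, h⟩ | ⟨i, h⟩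
    · exact Or.inl h
    · exact Or.inr (Or.inl ⟨i, h.symm⟩)
    · exact Or.inr (Or.inr ⟨i, h.symm⟩)
  have hfin : T.Finite :=
    ((Set.finite_range _).union (Set.finite_range _)).insert _
  refine ⟨hfin.subset hsub, ?_⟩
  have h1 : (code U Set.univ).ncard ≤ T.ncard := Set.ncard_le_ncard hsub hfin
  have h2 : T.ncard ≤ ((Set.range fun i => R (sInf (U i))) ∪
      (Set.range fun i => codeword U (sSup (U i)))).ncard + 1 := Set.ncard_insert_le _ _
  have h3 : ((Set.range fun i => R (sInf (U i))) ∪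
      (Set.range fun i => codeword U (sSup (U i)))).ncard ≤
      (Set.range fun i => R (sInf (U i))).ncard +
      (Set.range fun i => codeword U (sSup (U i))).ncard := Set.ncard_union_le _ _
  have hrange : ∀ f : Fin n → (Fin n → Bool), (Set.range f).ncard ≤ n := by
    intro f
    have := Set.ncard_image_le (f := f) (s := Set.univ) Set.finite_univ
    rw [Set.image_univ] at this
    simpa [Set.ncard_univ] using this
  have h4 := hrange (fun i : Fin n => R (sInf (U i)))
  have h5 := hrange (fun i : Fin n => codeword U (sSup (U i)))
  omega
end

section
/- Let C be a finite set of vectors in Fin k → Bool. There exist a family U : Fin k → Set ℝ with each U i open and convex and a finite set S ⊆ ℝ such that the code of U over S equals C, if and only if there exist N : ℕ and a CO Boolean matrix M : Fin k → Fin N → Bool whose set of columns equals C. -/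
/-- A Boolean row vector has consecutive ones: any entry between two `true`s is `true`. -/
def RowCO {N : ℕ} (v : Fin N → Bool) : Prop :=
  ∀ p q j : Fin N, p ≤ j → j ≤ q → v p = true → v q = true → v j = true

/-- A Boolean matrix has the consecutive-ones property. -/
def CO {k N : ℕ} (M : Fin k → Fin N → Bool) : Prop := ∀ r, RowCO (M r)

/-- A Boolean matrix has the circular consecutive-ones property:
in each row either the `true` entries or the `false` entries are consecutive. -/
def CCO {k N : ℕ} (M : Fin k → Fin N → Bool) : Prop :=
  ∀ r, RowCO (M r) ∨ RowCO (fun j => !(M r j))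

/-- The column of `M` at position `j`. -/
def col {k N : ℕ} (M : Fin k → Fin N → Bool) (j : Fin N) : Fin k → Bool := fun r => M r j

/-- Two Boolean vectors are harmonious if one dominates the other pointwise. -/
def Harmonious {k : ℕ} (x y : Fin k → Bool) : Prop :=
  (∀ r, x r ≤ y r) ∨ (∀ r, y r ≤ x r)

/-- A harmonious consecutive-ones matrix: CO and every pair of adjacent columns is harmonious. -/
def HCO {k N : ℕ} (M : Fin k → Fin N → Bool) : Prop :=
  CO M ∧ ∀ (j : ℕ) (h : j + 1 < N),
    Harmonious (col M ⟨j, Nat.lt_of_succ_lt h⟩) (col M ⟨j + 1, h⟩)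

open Classical in
noncomputable def rowSet {N : ℕ} (v : Fin N → Bool) : Set ℝ :=
  if h : (Finset.univ.filter (fun j => v j = true)).Nonempty then
    Set.Ioo (((Finset.univ.filter (fun j => v j = true)).min' h : ℕ) - 1 : ℝ)
      (((Finset.univ.filter (fun j => v j = true)).max' h : ℕ) + 1 : ℝ)
  else ∅

lemma rowSet_isOpen {N : ℕ} (v : Fin N → Bool) : IsOpen (rowSet v) := by
  unfold rowSet; split <;> [exact isOpen_Ioo; exact isOpen_empty]

lemma rowSet_convex {N : ℕ} (v : Fin N → Bool) : Convex ℝ (rowSet v) := by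
  unfold rowSet; split <;> [exact convex_Ioo _ _; exact convex_empty]

lemma mem_rowSet {N : ℕ} (v : Fin N → Bool) (hv : RowCO v) (j : Fin N) :
    ((j : ℕ) : ℝ) ∈ rowSet v ↔ v j = true := by
  unfold rowSet
  set F := Finset.univ.filter (fun j => v j = true) with hF
  by_cases h : F.Nonempty
  · rw [dif_pos h]
    constructor
    · rintro ⟨h1, h2⟩
      have hmin : F.min' h ≤ j := by
        rw [Fin.le_def]
        have : ((F.min' h : ℕ) : ℝ) < (j : ℕ) + 1 := by linarith
        exact Nat.lt_succ_iff.mp (by exact_mod_cast this)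
      have hmax : j ≤ F.max' h := by
        rw [Fin.le_def]
        have : ((j : ℕ) : ℝ) < ((F.max' h : ℕ)) + 1 := by linarith
        exact Nat.lt_succ_iff.mp (by exact_mod_cast this)
      have hmin' : v (F.min' h) = true := by
        have := F.min'_mem h; simpa [hF] using this
      have hmax' : v (F.max' h) = true := by
        have := F.max'_mem h; simpa [hF] using this
      exact hv _ _ j hmin hmax hmin' hmax'
    · intro hj
      have hjF : j ∈ F := by simp [hF, hj]
      have h1 : F.min' h ≤ j := Finset.min'_le F j hjF
      have h2 : j ≤ F.max' h := Finset.le_max' F j hjF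
      have c1 : ((F.min' h : ℕ) : ℝ) ≤ (j : ℕ) := by exact_mod_cast Fin.le_def.mp h1
      have c2 : ((j : ℕ) : ℝ) ≤ ((F.max' h : ℕ) : ℝ) := by exact_mod_cast Fin.le_def.mp h2
      exact ⟨by linarith, by linarith⟩
  · rw [dif_neg h]
    simp only [Set.mem_empty_iff_false, false_iff]
    intro hj
    exact h ⟨j, by simp [hF, hj]⟩

/-- A finite code `C` is sensor-sparse realizable in `ℝ¹` (by open convex sets and a finite
sensor set) iff `C` is the set of columns of a consecutive-ones matrix. -/
theorem sparse_realizable_iff_CO (k : ℕ) (C : Finset (Fin k → Bool)) :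
    (∃ (U : Fin k → Set ℝ) (S : Set ℝ), (∀ i, IsOpen (U i)) ∧ (∀ i, Convex ℝ (U i)) ∧
      S.Finite ∧ code U S = ↑C) ↔
    (∃ (N : ℕ) (M : Fin k → Fin N → Bool), CO M ∧ Set.range (col M) = ↑C) := by
  constructor
  · rintro ⟨U, S, hopen, hconv, hfin, hcode⟩
    classical
    set T := hfin.toFinset with hT
    refine ⟨T.card, fun r j => decide ((T.orderIsoOfFin rfl j : ℝ) ∈ U r), ?_, ?_⟩
    · intro r p q j hpj hjq hp hq
      simp only [decide_eq_true_eq] at *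
      have hmono := (T.orderIsoOfFin rfl).monotone
      have h1 : (T.orderIsoOfFin rfl p : ℝ) ≤ (T.orderIsoOfFin rfl j : ℝ) := hmono hpj
      have h2 : (T.orderIsoOfFin rfl j : ℝ) ≤ (T.orderIsoOfFin rfl q : ℝ) := hmono hjq
      exact (hconv r).ordConnected.out hp hq ⟨h1, h2⟩
    · have hrange : Set.range (fun j => (T.orderIsoOfFin rfl j : ℝ)) = S := by
        have h1 : Set.range (fun j => (T.orderIsoOfFin rfl j : ℝ))
            = Subtype.val '' Set.range (T.orderIsoOfFin rfl) := by
          rw [← Set.range_comp]; rfl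
        rw [h1, (T.orderIsoOfFin rfl).surjective.range_eq, Set.image_univ,
          Subtype.range_coe]
        exact hfin.coe_toFinset
      have h2 : Set.range (col (fun r j => decide ((T.orderIsoOfFin rfl j : ℝ) ∈ U r)))
          = codeword U '' Set.range (fun j => (T.orderIsoOfFin rfl j : ℝ)) := by
        rw [← Set.range_comp]
        rfl
      rw [h2, hrange, ← hcode]; rfl
  · rintro ⟨N, M, hCO, hcols⟩
    classical
    refine ⟨fun r => rowSet (M r), Set.range (fun j : Fin N => ((j : ℕ) : ℝ)),fun r => rowSet_isOpen _,
      fun r => rowSet_convex _, Set.finite_range _, ?_⟩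
    have h2 : code (fun r => rowSet (M r)) (Set.range (fun j : Fin N => ((j : ℕ) : ℝ)))
        = Set.range (col M) := by
      unfold code
      rw [← Set.range_comp]
      have hfun : ((codeword fun r => rowSet (M r)) ∘ fun j : Fin N => ((j : ℕ) : ℝ)) = col M := by
        funext j r
        simp only [Function.comp, codeword, col]
        by_cases h : M r j = true
        · simp [h, (mem_rowSet (M r) (hCO r) j).mpr h]
        · simp only [Bool.not_eq_true] at h
          have : ((j : ℕ) : ℝ) ∉ rowSet (M r) := fun hc => by
            simpa [h] using (mem_rowSet (M r) (hCO r) j).mp hc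
          simp [h, this]
      rw [hfun]
    rw [h2, hcols]
end

section
/- Let C be a finite set of vectors in Fin k → Bool. Define the incompatibility graph I(C) as the simple graph whose vertices are the ordered pairs (a, b) of distinct elements of C, with an edge joining (a, b) and (b, a) for every pair of distinct a, b ∈ C, and an edge joining (a, b) and (b, c) whenever there exists a coordinate r ∈ Fin k with a r = true, c r = true and b r = false. Then there exists a CO Boolean matrix with pairwise distinct columns whose set of columns equals C if and only if the graph I(C) is bipartite. -/
/-- Vertices of the incompatibility graph: ordered pairs of distinct elements of `C`,
the pair `(a, b)` signifying "`a` is to the left of `b`". -/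
def IncompatVert {k : ℕ} (C : Finset (Fin k → Bool)) :=
  {p : (Fin k → Bool) × (Fin k → Bool) // p.1 ∈ C ∧ p.2 ∈ C ∧ p.1 ≠ p.2}

/-- The (non-symmetrized) incompatibility between `(a, b)` and `(b, c)`: there is a row
where `a` and `c` are `true` while `b` is `false`. -/
def IncompatPairCond {k : ℕ} (u v : (Fin k → Bool) × (Fin k → Bool)) : Prop :=
  u.2 = v.1 ∧ ∃ r, u.1 r = true ∧ v.2 r = true ∧ u.2 r = false

/-- The incompatibility graph of a code `C`. -/
def IncompatGraph {k : ℕ} (C : Finset (Fin k → Bool)) : SimpleGraph (IncompatVert C) where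
  Adj u v := u ≠ v ∧
    ((u.1.1 = v.1.2 ∧ u.1.2 = v.1.1) ∨ IncompatPairCond u.1 v.1 ∨ IncompatPairCond v.1 u.1)
  symm := by
    constructor
    rintro u v ⟨hne, h⟩
    exact ⟨hne.symm, by tauto⟩
  loopless := by
    constructor
    rintro u ⟨hne, -⟩
    exact hne rfl

/-! A CO ordering of `C` colours the vertex `(a, b)` by whether `a` comes before `b`: if some
row has `a` and `c` but not `b`, then `b` does not lie between `a` and `c`, so the two ends of every
edge get different colours.

Conversely, read a 2-colouring as a tournament `a ≺ b` ("`(a, b)` has colour `0`"). The edges say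
that exactly one of `a ≺ b`, `b ≺ a` holds, and that `b` sees `a` and `c` on the same side whenever
`b` may not lie between them, i.e. whenever `a ⊓ c ≰ b`. Quicksort with respect to `≺` then gives a
CO ordering: pick a pivot `z`, order `{y | y ≺ z}` and `{y | z ≺ y}` recursively with `z` kept as
their last, respectively first, element, and concatenate. A forbidden triple across the pivot
forces `a ⊓ c ≰ z` for some `a ≺ z ≺ c`, which would put `a` and `c` on the same side of `z`. -/

open List

theorem Pi.bool_inf_le_iff {ι : Type*} {a b c : ι → Bool} :
    a ⊓ c ≤ b ↔ ∀ r, a r = true → c r = true → b r = true := by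
  simp [Pi.le_def, Bool.le_iff_imp]

theorem Pi.bool_not_inf_le_iff {ι : Type*} {a b c : ι → Bool} :
    ¬ a ⊓ c ≤ b ↔ ∃ r, a r = true ∧ c r = true ∧ b r = false := by
  simp [Pi.bool_inf_le_iff]

theorem CO_iff_inf_le {k N : ℕ} (M : Fin k → Fin N → Bool) :
    CO M ↔ ∀ i j m : Fin N, i < j → j < m → col M i ⊓ col M m ≤ col M j := by
  simp only [Pi.bool_inf_le_iff, col]
  constructor
  · exact fun hM i j m hij hjm r => hM r i m j hij.le hjm.le
  · intro h r p q j hpj hjq hp hq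
    rcases hpj.lt_or_eq with hpj | rfl
    · rcases hjq.lt_or_eq with hjq | rfl
      · exact h p j q hpj hjq r hp hq
      · exact hq
    · exact hp

section

variable {α : Type*} [SemilatticeInf α]

/-- Over `Fin k → Bool`, `a ⊓ c ≤ b` says that every row with a one in columns `a` and `c` also
has a one in column `b`. -/
def COList (l : List α) : Prop := ∀ a b c, [a, b, c] <+ l → a ⊓ c ≤ b

namespace COList

theorem of_length_le_two {l : List α} (h : l.length ≤ 2) : COList l := fun a b c habc => by
  have := habc.length_le
  simp only [List.length_cons, List.length_nil] at this
  omega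

theorem inf_le_getElem {l : List α} (hl : COList l) {i j m : Fin l.length}
    (hij : i < j) (hjm : j < m) : l[i] ⊓ l[m] ≤ l[j] :=
  hl _ _ _ <| List.map_getElem_sublist (is := [i, j, m]) <| by
    simp [hij, hjm, hij.trans hjm]

theorem append_cons {l₁ l₂ : List α} {z : α} (h₁ : COList (l₁ ++ [z]))
    (h₂ : COList (z :: l₂)) (hz : ∀ a ∈ l₁, ∀ c ∈ l₂, a ⊓ c ≤ z) :
    COList (l₁ ++ z :: l₂) := by
  intro a b c habc
  obtain ⟨s, t, hst, hs, ht⟩ := List.sublist_append_iff.1 habc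
  rcases s with _ | ⟨a', _ | ⟨b', _ | ⟨c', _ | ⟨d, s⟩⟩⟩⟩ <;>
    simp only [List.nil_append, List.cons_append, List.cons.injEq] at hst
  · exact h₂ a b c (hst ▸ ht)
  · obtain ⟨rfl, rfl⟩ := hst
    have ha : a ∈ l₁ := hs.subset (by simp)
    rcases List.sublist_cons_iff.1 ht with hbc | ⟨_, hbc, hc⟩
    · have hc : c ∈ l₂ := hbc.subset (by simp)
      calc a ⊓ c ≤ z ⊓ c := le_inf (hz a ha c hc) inf_le_right
        _ ≤ b := h₂ z b c (hbc.cons_cons z)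
    · obtain ⟨rfl, rfl⟩ := List.cons.inj hbc
      exact hz a ha c (hc.subset (by simp))
  · obtain ⟨rfl, rfl, rfl⟩ := hst
    have habz : [a, b, z] <+ l₁ ++ [z] := hs.append (List.Sublist.refl [z])
    rcases List.mem_cons.1 (ht.subset (List.mem_singleton_self c)) with rfl | hc
    · exact h₁ a b c habz
    · calc a ⊓ c ≤ a ⊓ z := le_inf inf_le_left (hz a (hs.subset (by simp)) c hc)
        _ ≤ b := h₁ a b z habz
  · obtain ⟨rfl, rfl, rfl, rfl⟩ := hst
    exact h₁ a b c (hs.trans (List.sublist_append_left l₁ [z]))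
  · simp at hst

end COList

end

section Partition

variable {α : Type*} [DecidableEq α] {S : Finset α} {z : α} {l₁ l₂ : List α}
  {p : α → Prop} [DecidablePred p]

theorem toFinset_append_cons_of_filter (hz : z ∈ S) (hl₁ : l₁.toFinset = (S.erase z).filter p)
    (hl₂ : l₂.toFinset = (S.erase z).filter (¬ p ·)) : (l₁ ++ z :: l₂).toFinset = S := by
  rw [List.toFinset_append, List.toFinset_cons, hl₁, hl₂, Finset.union_insert,
    Finset.filter_union_filter_not_eq, Finset.insert_erase hz]

theorem nodup_append_cons_of_filter (h₁ : l₁.Nodup) (h₂ : l₂.Nodup)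
    (hl₁ : l₁.toFinset = (S.erase z).filter p)
    (hl₂ : l₂.toFinset = (S.erase z).filter (¬ p ·)) : (l₁ ++ z :: l₂).Nodup := by
  have hmem₁ : ∀ x ∈ l₁, x ≠ z ∧ p x := fun x hx => by
    simp_all [← List.mem_toFinset]
  have hmem₂ : ∀ x ∈ l₂, x ≠ z ∧ ¬ p x := fun x hx => by
    simp_all [← List.mem_toFinset]
  refine List.nodup_append.2
    ⟨h₁, List.nodup_cons.2 ⟨fun hz => (hmem₂ z hz).1 rfl, h₂⟩, ?_⟩
  rintro x hx _ (_ | ⟨_, hy⟩) rfl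
  · exact (hmem₁ x hx).1 rfl
  · exact (hmem₂ x hy).2 (hmem₁ x hx).2

end Partition

section Tournament

variable {α : Type*} [SemilatticeInf α] {C : Finset α} {T : α → α → Prop}

/-- `T a b` reads "`a` is placed before `b`". -/
structure IsCOTournament (C : Finset α) (T : α → α → Prop) : Prop where
  iff_not_symm : ∀ a ∈ C, ∀ b ∈ C, a ≠ b → (T a b ↔ ¬ T b a)
  iff_of_not_inf_le : ∀ a ∈ C, ∀ b ∈ C, ∀ c ∈ C, ¬ a ⊓ c ≤ b → (T a b ↔ T c b)

theorem COList.append_cons_of_pivot (hT : IsCOTournament C T) {z : α} (hz : z ∈ C)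
    {l₁ l₂ : List α} (hl₁ : ∀ a ∈ l₁, a ∈ C ∧ T a z) (hl₂ : ∀ c ∈ l₂, c ∈ C ∧ T z c)
    (h₁ : COList (l₁ ++ [z])) (h₂ : COList (z :: l₂)) : COList (l₁ ++ z :: l₂) := by
  refine COList.append_cons h₁ h₂ fun a ha c hc => ?_
  by_contra hac
  obtain ⟨haC, haz⟩ := hl₁ a ha
  obtain ⟨hcC, hzc⟩ := hl₂ c hc
  have hzc' : z ≠ c := by rintro rfl; exact hac inf_le_right
  exact (hT.iff_not_symm z hz c hcC hzc').1 hzc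
    ((hT.iff_of_not_inf_le a haC z hz c hcC hac).1 haz)

theorem IsCOTournament.exists_coList_between [DecidableEq α] (hT : IsCOTournament C T)
    (S : Finset α) (hS : S ⊆ C) (u v : Option α)
    (hu : ∀ x ∈ u, x ∈ C ∧ ∀ y ∈ S, T x y) (hv : ∀ x ∈ v, x ∈ C ∧ ∀ y ∈ S, T y x) :
    ∃ l : List α, l.Nodup ∧ l.toFinset = S ∧ COList (u.toList ++ l ++ v.toList) := by
  classical
  induction S using Finset.strongInduction generalizing u v with | _ S ih =>
  rcases S.eq_empty_or_nonempty with rfl | ⟨z, hz⟩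
  · exact ⟨[], List.nodup_nil, rfl, COList.of_length_le_two (by cases u <;> cases v <;> simp)⟩
  set L := (S.erase z).filter (T · z)
  set R := (S.erase z).filter (¬ T · z)
  have hLS : L ⊂ S := (Finset.filter_subset _ _).trans_ssubset (Finset.erase_ssubset hz)
  have hRS : R ⊂ S := (Finset.filter_subset _ _).trans_ssubset (Finset.erase_ssubset hz)
  have hL : ∀ y ∈ L, T y z := fun y hy => (Finset.mem_filter.1 hy).2
  have hR : ∀ y ∈ R, T z y := fun y hy => by
    obtain ⟨hyz, hyS⟩ := Finset.mem_erase.1 (Finset.mem_of_mem_filter y hy)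
    exact (hT.iff_not_symm z (hS hz) y (hS hyS) (Ne.symm hyz)).2 (Finset.mem_filter.1 hy).2
  obtain ⟨lL, hndL, hlL, hcoL⟩ := ih L hLS (hLS.subset.trans hS) u (some z)
    (fun x hx => ⟨(hu x hx).1, fun y hy => (hu x hx).2 y (hLS.subset hy)⟩)
    (by rintro _ ⟨⟩; exact ⟨hS hz, hL⟩)
  obtain ⟨lR, hndR, hlR, hcoR⟩ := ih R hRS (hRS.subset.trans hS) (some z) v
    (by rintro _ ⟨⟩; exact ⟨hS hz, hR⟩)
    (fun x hx => ⟨(hv x hx).1, fun y hy => (hv x hx).2 y (hRS.subset hy)⟩)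
  refine ⟨lL ++ z :: lR, nodup_append_cons_of_filter hndL hndR hlL hlR,
    toFinset_append_cons_of_filter hz hlL hlR, ?_⟩
  have hcoL' : COList ((u.toList ++ lL) ++ [z]) := by simpa using hcoL
  have hcoR' : COList (z :: (lR ++ v.toList)) := by simpa using hcoR
  have := COList.append_cons_of_pivot hT (hS hz) ?_ ?_ hcoL' hcoR'
  · simpa only [List.append_assoc, List.cons_append] using this
  · intro a ha
    rcases List.mem_append.1 ha with ha | ha
    · exact ⟨(hu a (Option.mem_toList.1 ha)).1, (hu a (Option.mem_toList.1 ha)).2 z hz⟩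
    · have haL : a ∈ L := hlL ▸ List.mem_toFinset.2 ha
      exact ⟨hS (hLS.subset haL), hL a haL⟩
  · intro c hc
    rcases List.mem_append.1 hc with hc | hc
    · have hcR : c ∈ R := hlR ▸ List.mem_toFinset.2 hc
      exact ⟨hS (hRS.subset hcR), hR c hcR⟩
    · exact ⟨(hv c (Option.mem_toList.1 hc)).1, (hv c (Option.mem_toList.1 hc)).2 z hz⟩

theorem IsCOTournament.exists_coList [DecidableEq α] (hT : IsCOTournament C T) :
    ∃ l : List α, l.Nodup ∧ l.toFinset = C ∧ COList l := by
  simpa using hT.exists_coList_between C subset_rfl none none (by simp) (by simp)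

end Tournament

namespace IncompatGraph

variable {k : ℕ} {C : Finset (Fin k → Bool)}

theorem adj_swap {a b : Fin k → Bool} (ha : a ∈ C) (hb : b ∈ C) (hab : a ≠ b) :
    (IncompatGraph C).Adj ⟨(a, b), ha, hb, hab⟩ ⟨(b, a), hb, ha, hab.symm⟩ :=
  ⟨fun h => hab (congrArg (·.1.1) h), Or.inl ⟨rfl, rfl⟩⟩

theorem adj_of_not_inf_le {a b c : Fin k → Bool} (ha : a ∈ C) (hb : b ∈ C) (hc : c ∈ C)
    (hab : a ≠ b) (hbc : b ≠ c) (h : ¬ a ⊓ c ≤ b) :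
    (IncompatGraph C).Adj ⟨(a, b), ha, hb, hab⟩ ⟨(b, c), hb, hc, hbc⟩ :=
  ⟨fun h => hab (congrArg (·.1.1) h), Or.inr (Or.inl ⟨rfl, Pi.bool_not_inf_le_iff.1 h⟩)⟩

theorem colorable_of_inf_le {ι : Type*} [LinearOrder ι] (e : ι → Fin k → Bool)
    (hC : ↑C ⊆ Set.range e) (he : ∀ i j m, i < j → j < m → e i ⊓ e m ≤ e j) :
    (IncompatGraph C).Colorable 2 := by
  choose pos hpos using fun x (hx : x ∈ C) => hC hx
  have hpos_ne : ∀ a ha b hb, a ≠ b → pos a ha ≠ pos b hb := fun a ha b hb hab h =>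
    hab (by rw [← hpos a ha, ← hpos b hb, h])
  have hlt : ∀ a ha b hb c hc, ¬ a ⊓ c ≤ b → a ≠ b → b ≠ c →
      ¬ (pos a ha < pos b hb ↔ pos b hb < pos c hc) := by
    intro a ha b hb c hc habc hab hbc hiff
    have h₁ := he (pos a ha) (pos b hb) (pos c hc)
    have h₂ := he (pos c hc) (pos b hb) (pos a ha)
    rw [hpos, hpos, hpos] at h₁ h₂
    rcases (hpos_ne a ha b hb hab).lt_or_gt with hab' | hba'
    · exact habc (h₁ hab' (hiff.1 hab'))
    · have hcb : pos c hc < pos b hb := (hpos_ne b hb c hc hbc).lt_or_gt.resolve_left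
        fun hbc' => (hiff.2 hbc').asymm hba'
      exact habc (inf_comm c a ▸ h₂ hcb hba')
  refine (SimpleGraph.Coloring.mk (fun p => decide (pos _ p.2.1 < pos _ p.2.2.1)) ?_).colorable
  rintro ⟨⟨a, b⟩, ha, hb, hab⟩ ⟨⟨b', c⟩, hb', hc, hbc⟩
    ⟨-, ⟨rfl, rfl⟩ | ⟨rfl, hr⟩ | ⟨rfl, hr⟩⟩ <;> rw [Ne, decide_eq_decide]
  · intro hiff
    rcases (hpos_ne a ha b hb hab).lt_or_gt with h | h
    · exact (hiff.1 h).asymm h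
    · exact (hiff.2 h).asymm h
  · exact hlt a ha b hb c hc (Pi.bool_not_inf_le_iff.2 hr) hab hbc
  · rw [Iff.comm]
    exact hlt _ hb' _ ha _ hb (Pi.bool_not_inf_le_iff.2 hr) hbc hab

theorem exists_coList_of_colorable (h : (IncompatGraph C).Colorable 2) :
    ∃ l : List (Fin k → Bool), l.Nodup ∧ l.toFinset = C ∧ COList l := by
  obtain ⟨χ⟩ := h
  let T a b := ∃ h : a ∈ C ∧ b ∈ C ∧ a ≠ b, χ ⟨(a, b), h⟩ = 0
  have hT : ∀ a b (h : a ∈ C ∧ b ∈ C ∧ a ≠ b), T a b ↔ χ ⟨(a, b), h⟩ = 0 :=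
    fun a b h => ⟨fun ⟨_, h'⟩ => h', fun h' => ⟨h, h'⟩⟩
  refine IsCOTournament.exists_coList (T := T)
    ⟨fun a ha b hb hab => ?_, fun a ha b hb c hc habc => ?_⟩
  · have := χ.valid (adj_swap ha hb hab)
    rw [hT a b ⟨ha, hb, hab⟩, hT b a ⟨hb, ha, hab.symm⟩]
    omega
  · have hab : a ≠ b := by rintro rfl; exact habc inf_le_left
    have hbc : b ≠ c := by rintro rfl; exact habc inf_le_right
    have h₁ := χ.valid (adj_of_not_inf_le ha hb hc hab hbc habc)
    have h₂ := χ.valid (adj_swap hc hb hbc.symm)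
    rw [hT a b ⟨ha, hb, hab⟩, hT c b ⟨hc, hb, hbc.symm⟩]
    omega

end IncompatGraph

/-- A finite code `C` is the column set of a CO matrix with pairwise distinct columns
iff its incompatibility graph is bipartite (i.e. 2-colorable). -/
theorem CO_ordering_iff_incompatGraph_bipartite (k : ℕ) (C : Finset (Fin k → Bool)) :
    (∃ (N : ℕ) (M : Fin k → Fin N → Bool), CO M ∧ Function.Injective (col M) ∧
      Set.range (col M) = ↑C) ↔ (IncompatGraph C).Colorable 2 := by
  constructor
  · rintro ⟨N, M, hM, -, hrange⟩
    exact IncompatGraph.colorable_of_inf_le (col M) hrange.symm.subset ((CO_iff_inf_le M).1 hM)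
  · intro h
    obtain ⟨l, hnd, rfl, hl⟩ := IncompatGraph.exists_coList_of_colorable h
    refine ⟨l.length, fun r j => l[j] r, (CO_iff_inf_le _).2 fun _ _ _ => hl.inf_le_getElem,
      List.nodup_iff_injective_get.1 hnd, ?_⟩
    rw [List.coe_toFinset, ← Set.range_list_get]
    rfl
end

section
/- Let M : Fin k → Fin N → Bool be a CO Boolean matrix and let S be a set of its rows. Consider the graph on column positions Fin N in which positions p and q are adjacent if and only if there exists a row r ∈ S with M r p = true and M r q = true. If positions p and q are connected in this graph, then for every column position j with min p q < j < max p q there exists a row r ∈ S with M r j = true (i.e., the column at position j is not identically false on S). -/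
/-- The overlap graph on column positions: `p` and `q` are adjacent iff some row in `S`
is `true` at both positions. -/
def OverlapGraph {k N : ℕ} (M : Fin k → Fin N → Bool) (S : Set (Fin k)) :
    SimpleGraph (Fin N) where
  Adj p q := p ≠ q ∧ ∃ r ∈ S, M r p = true ∧ M r q = true
  symm := by
    constructor
    rintro p q ⟨hne, r, hr, h1, h2⟩
    exact ⟨hne.symm, r, hr, h2, h1⟩
  loopless := by
    constructor
    rintro p ⟨hne, -⟩
    exact hne rfl

open Set

theorem RowCO.uIcc_subset {N : ℕ} {v : Fin N → Bool} (hv : RowCO v) {p q : Fin N}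
    (hp : v p = true) (hq : v q = true) : uIcc p q ⊆ {j | v j = true} := by
  intro j hj
  rcases mem_uIcc.mp hj with ⟨hpj, hjq⟩ | ⟨hqj, hjp⟩
  · exact hv p q j hpj hjq hp hq
  · exact hv q p j hqj hjp hq hp

namespace SimpleGraph

variable {α : Type*} [LinearOrder α] {G : SimpleGraph α} {T : Set α}

theorem Walk.uIcc_subset_insert (hG : ∀ u v, G.Adj u v → uIcc u v ⊆ T) {p q : α} :
    G.Walk p q → uIcc p q ⊆ insert p T
  | .nil => by simp
  | .cons (v := a) hpa w => by
    have hpaT : uIcc p a ⊆ T := hG p a hpa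
    have haT : insert a T = T := insert_eq_of_mem (hpaT right_mem_uIcc)
    calc uIcc p q ⊆ uIcc p a ∪ uIcc a q := uIcc_subset_uIcc_union_uIcc
      _ ⊆ T := union_subset hpaT (haT ▸ w.uIcc_subset_insert hG)
      _ ⊆ insert p T := subset_insert p T

theorem Reachable.uIoo_subset (hG : ∀ u v, G.Adj u v → uIcc u v ⊆ T) {p q : α}
    (h : G.Reachable p q) : uIoo p q ⊆ T := by
  obtain ⟨w⟩ := h
  intro j hj
  have hjp : j ≠ p := fun hjp => left_notMem_uIoo (hjp ▸ hj)
  exact (w.uIcc_subset_insert hG (uIoo_subset_uIcc_self hj)).resolve_left hjp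

end SimpleGraph

theorem OverlapGraph.adj_uIcc_subset {k N : ℕ} {M : Fin k → Fin N → Bool} (hCO : CO M)
    {S : Set (Fin k)} {u v : Fin N} (huv : (OverlapGraph M S).Adj u v) :
    uIcc u v ⊆ {j | ∃ r ∈ S, M r j = true} := by
  obtain ⟨-, r, hr, hu, hv⟩ := huv
  exact fun j hj => ⟨r, hr, (hCO r).uIcc_subset hu hv hj⟩

/-- In a CO matrix, if column positions `p` and `q` are connected in the overlap graph of a
set `S` of rows, then every column position strictly between `p` and `q` is not identically
`false` on `S`. -/
theorem not_zero_on_S_of_between_connected {k N : ℕ} (M : Fin k → Fin N → Bool)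
    (hCO : CO M) (S : Set (Fin k)) (p q : Fin N)
    (hconn : (OverlapGraph M S).Reachable p q) (j : Fin N)
    (h1 : min p q < j) (h2 : j < max p q) :
    ∃ r ∈ S, M r j = true :=
  hconn.uIoo_subset (fun _ _ => OverlapGraph.adj_uIcc_subset hCO) ⟨h1, h2⟩
end

section
/- Let M : Fin k → Fin N → Bool be a CO Boolean matrix with pairwise distinct columns, and suppose vectors x, y, z occur as the columns at positions p, q, s respectively. Suppose z is bound between x and y, i.e., there exist rows r1, r2 ∈ Fin k with x r1 = true, y r1 = false, x r2 = false, y r2 = true, and z r1 = true, z r2 = true. Then s lies strictly between p and q (min p q < s < max p q). -/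
/-- In a CO matrix with pairwise distinct columns, if the column `z` at position `s` is bound
between the columns `x` (at position `p`) and `y` (at position `q`), then `s` lies strictly
between `p` and `q`. -/
theorem bound_between_lies_between {k N : ℕ} (M : Fin k → Fin N → Bool)
    (hCO : CO M) (hinj : Function.Injective (col M))
    (p q s : Fin N) (x y z : Fin k → Bool)
    (hx : col M p = x) (hy : col M q = y) (hz : col M s = z)
    (r1 r2 : Fin k)
    (hxr1 : x r1 = true) (hyr1 : y r1 = false)
    (hxr2 : x r2 = false) (hyr2 : y r2 = true)
    (hzr1 : z r1 = true) (hzr2 : z r2 = true) :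
    min p q < s ∧ s < max p q := by

  subst hx hy hz
  have h1p : M r1 p = true := hxr1
  have h1q : M r1 q = false := hyr1
  have h2p : M r2 p = false := hxr2
  have h2q : M r2 q = true := hyr2
  have h1s : M r1 s = true := hzr1
  have h2s : M r2 s = true := hzr2
  rcases lt_trichotomy p q with hpq | hpq | hpq
  · refine ⟨?_, ?_⟩
    · rw [min_eq_left hpq.le]
      by_contra h
      push_neg at h
      have := hCO r2 s q p h hpq.le h2s h2q
      simp [h2p] at this
    · rw [max_eq_right hpq.le]
      by_contra h
      push_neg at h
      have := hCO r1 p s q hpq.le h h1p h1s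
      simp [h1q] at this
  · exfalso
    subst hpq
    rw [h1p] at h1q
    exact absurd h1q (by simp)
  · refine ⟨?_, ?_⟩
    · rw [min_eq_right hpq.le]
      by_contra h
      push_neg at h
      have := hCO r1 s p q h hpq.le h1s h1p
      simp [h1q] at this
    · rw [max_eq_left hpq.le]
      by_contra h
      push_neg at h
      have := hCO r2 q s p hpq.le h h2q h2s
      simp [h2p] at this
end

section
/- Let L be a finite set of vectors in Fin k → Bool and suppose there exists an HCO multiordering of L. Then every CO ordering of L extends to an HCO multiordering of L: for every CO Boolean matrix B with pairwise distinct columns and set of columns equal to L, there exist an HCO Boolean matrix B' whose set of columns equals L and a strictly monotone map from the column positions of B to the column positions of B' under which corresponding columns are equal. -/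
lemma bool_le_iff {x y : Bool} : x ≤ y ↔ (x = true → y = true) := by
  cases x <;> cases y <;> simp

lemma bool_eq_iff {x y : Bool} (h1 : x = true → y = true) (h2 : y = true → x = true) : x = y := by
  cases x <;> cases y <;> simp_all

lemma cross {P : ℕ → Prop} [DecidablePred P] {a b : ℕ} (hab : a ≤ b) (ha : P a) (hb : ¬ P b) :
    ∃ t, a ≤ t ∧ t + 1 ≤ b ∧ P t ∧ ¬ P (t + 1) := by
  by_contra h
  push_neg at h
  apply hb
  have key : ∀ t, a ≤ t → t ≤ b → P t := by
    intro t
    induction t with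
    | zero => intro h1 _; exact (Nat.le_zero.mp h1) ▸ ha
    | succ t ih =>
      intro h1 h2
      rcases Nat.lt_or_ge a (t + 1) with h3 | h3
      · have hat : a ≤ t := Nat.lt_succ_iff.mp h3
        exact h t hat h2 (ih hat (le_trans (Nat.le_succ t) h2))
      · exact (le_antisymm h1 h3) ▸ ha
  exact key b hab le_rfl

/-- Core step: if a harmonious (comparable) pair of columns of `B` straddles positions
`j, j+1` and both dominate the meet of columns `j` and `j+1`, the meet is one of them. -/
lemma core {k n : ℕ} (B : Fin k → Fin n → Bool) (hB : CO B)
    (j : ℕ) (hj : j + 1 < n) (u v : Fin n) (hu : u.1 ≤ j) (hv : j + 1 ≤ v.1)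
    (c1 c2 : Fin k → Bool) (h1 : c1 = col B u) (h2 : c2 = col B v)
    (hcomp : Harmonious c1 c2)
    (hlow1 : ∀ r, B r ⟨j, Nat.lt_of_succ_lt hj⟩ = true → B r ⟨j + 1, hj⟩ = true → c1 r = true)
    (hlow2 : ∀ r, B r ⟨j, Nat.lt_of_succ_lt hj⟩ = true → B r ⟨j + 1, hj⟩ = true → c2 r = true) :
    (fun r => B r ⟨j, Nat.lt_of_succ_lt hj⟩ && B r ⟨j + 1, hj⟩) = c1 ∨
    (fun r => B r ⟨j, Nat.lt_of_succ_lt hj⟩ && B r ⟨j + 1, hj⟩) = c2 := by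
  have huj : u ≤ (⟨j, Nat.lt_of_succ_lt hj⟩ : Fin n) := by
    simp only [Fin.le_def]; exact hu
  have huj' : u ≤ (⟨j + 1, hj⟩ : Fin n) := by
    simp only [Fin.le_def]; omega
  have hvj : (⟨j, Nat.lt_of_succ_lt hj⟩ : Fin n) ≤ v := by
    simp only [Fin.le_def]; omega
  have hvj' : (⟨j + 1, hj⟩ : Fin n) ≤ v := by
    simp only [Fin.le_def]; exact hv
  rcases hcomp with hle | hle
  · left
    funext r
    apply bool_eq_iff
    · intro h
      rw [Bool.and_eq_true] at h
      exact hlow1 r h.1 h.2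
    · intro h
      have hu' : B r u = true := by rw [h1] at h; exact h
      have hv' : B r v = true := by
        have := bool_le_iff.mp (hle r) h
        rw [h2] at this; exact this
      rw [Bool.and_eq_true]
      exact ⟨hB r u v _ huj hvj hu' hv', hB r u v _ huj' hvj' hu' hv'⟩
  · right
    funext r
    apply bool_eq_iff
    · intro h
      rw [Bool.and_eq_true] at h
      exact hlow2 r h.1 h.2
    · intro h
      have hv' : B r v = true := by rw [h2] at h; exact h
      have hu' : B r u = true := by
        have := bool_le_iff.mp (hle r) h
        rw [h1] at this; exact this
      rw [Bool.and_eq_true]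
      exact ⟨hB r u v _ huj hvj hu' hv', hB r u v _ huj' hvj' hu' hv'⟩

lemma meet_mem {k n : ℕ} (L : Finset (Fin k → Bool))
    (hex : ∃ (N : ℕ) (A : Fin k → Fin N → Bool), HCO A ∧ Set.range (col A) = ↑L)
    (B : Fin k → Fin n → Bool)
    (hB : CO B) (hinj : Function.Injective (col B)) (hrange : Set.range (col B) = ↑L)
    (j : ℕ) (hj : j + 1 < n) :
    (fun r => B r ⟨j, Nat.lt_of_succ_lt hj⟩ && B r ⟨j + 1, hj⟩) ∈ L := by
  obtain ⟨N, A, hA, hrA⟩ := hex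
  -- occurrences of the two columns in A
  have hxL : col B ⟨j, Nat.lt_of_succ_lt hj⟩ ∈ Set.range (col A) := by
    rw [hrA, ← hrange]; exact Set.mem_range_self _
  obtain ⟨p, hp⟩ := hxL
  have hyL : col B ⟨j + 1, hj⟩ ∈ Set.range (col A) := by
    rw [hrA, ← hrange]; exact Set.mem_range_self _
  obtain ⟨q, hq⟩ := hyL
  -- every column of A corresponds to a column of B
  have hgex : ∀ t : Fin N, ∃ u : Fin n, col B u = col A t := by
    intro t
    have : col A t ∈ Set.range (col B) := by
      rw [hrange, ← hrA]; exact Set.mem_range_self _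
    exact this
  choose g hg using hgex
  have hgp : (g p).1 = j := by
    have h1 : col B (g p) = col B ⟨j, Nat.lt_of_succ_lt hj⟩ := by rw [hg, hp]
    have := hinj h1
    exact congrArg Fin.val this
  have hgq : (g q).1 = j + 1 := by
    have h1 : col B (g q) = col B ⟨j + 1, hj⟩ := by rw [hg, hq]
    have := hinj h1
    exact congrArg Fin.val this
  have hpq : p.1 ≠ q.1 := by
    intro h
    have : p = q := Fin.ext h
    rw [this, hq] at hp
    have := hinj hp
    have := congrArg Fin.val this
    simp at this
  -- the "B-position" function, as a function on ℕ
  set G : ℕ → ℕ := fun t => if h : t < N then (g ⟨t, h⟩).1 else 0 with hG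
  have hGval : ∀ (t : ℕ) (h : t < N), G t = (g ⟨t, h⟩).1 := by
    intro t h; simp [hG, h]
  rcases Nat.lt_or_ge p.1 q.1 with hlt | hge
  · -- p before q
    have hPa : G p.1 ≤ j := by rw [hGval p.1 p.isLt]; simp [hgp]
    have hPb : ¬ G q.1 ≤ j := by rw [hGval q.1 q.isLt]; simp only [Fin.eta]; omega
    obtain ⟨t, htp, htq, hPt, hPt1⟩ := cross (P := fun t => G t ≤ j) (le_of_lt hlt) hPa hPb
    have ht1N : t + 1 < N := lt_of_le_of_lt htq q.isLt
    have htN : t < N := Nat.lt_of_succ_lt ht1N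
    have hu : (g ⟨t, htN⟩).1 ≤ j := by rw [← hGval t htN]; exact hPt
    have hv : j + 1 ≤ (g ⟨t + 1, ht1N⟩).1 := by
      rw [hGval (t + 1) ht1N] at hPt1; omega
    have hlow : ∀ (s : ℕ) (hs : s < N), p.1 ≤ s → s ≤ q.1 → ∀ r,
        B r ⟨j, Nat.lt_of_succ_lt hj⟩ = true → B r ⟨j + 1, hj⟩ = true →
        col A ⟨s, hs⟩ r = true := by
      intro s hs hps hsq r h1 h2
      have hp' : A r p = true := by
        have := congrFun hp r; simpa [col] using this.trans h1
      have hq' : A r q = true := by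
        have := congrFun hq r; simpa [col] using this.trans h2
      exact hA.1 r p q ⟨s, hs⟩ hps hsq hp' hq'
    have hcomp := hA.2 t ht1N
    rcases core B hB j hj (g ⟨t, htN⟩) (g ⟨t + 1, ht1N⟩) hu hv
        (col A ⟨t, htN⟩) (col A ⟨t + 1, ht1N⟩) (hg _).symm (hg _).symm hcomp
        (fun r h1 h2 => hlow t htN htp (by omega) r h1 h2)
        (fun r h1 h2 => hlow (t + 1) ht1N (by omega) htq r h1 h2) with h | h
    · rw [h, ← Finset.mem_coe, ← hrA]; exact Set.mem_range_self _
    · rw [h, ← Finset.mem_coe, ← hrA]; exact Set.mem_range_self _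
  · -- q before p
    have hlt : q.1 < p.1 := by omega
    have hPa : j + 1 ≤ G q.1 := by rw [hGval q.1 q.isLt]; simp only [Fin.eta]; omega
    have hPb : ¬ j + 1 ≤ G p.1 := by rw [hGval p.1 p.isLt]; simp only [Fin.eta]; omega
    obtain ⟨t, htp, htq, hPt, hPt1⟩ := cross (P := fun t => j + 1 ≤ G t) (le_of_lt hlt) hPa hPb
    have ht1N : t + 1 < N := lt_of_le_of_lt htq p.isLt
    have htN : t < N := Nat.lt_of_succ_lt ht1N
    have hv : j + 1 ≤ (g ⟨t, htN⟩).1 := by rw [← hGval t htN]; exact hPt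
    have hu : (g ⟨t + 1, ht1N⟩).1 ≤ j := by
      rw [hGval (t + 1) ht1N] at hPt1; omega
    have hlow : ∀ (s : ℕ) (hs : s < N), q.1 ≤ s → s ≤ p.1 → ∀ r,
        B r ⟨j, Nat.lt_of_succ_lt hj⟩ = true → B r ⟨j + 1, hj⟩ = true →
        col A ⟨s, hs⟩ r = true := by
      intro s hs hqs hsp r h1 h2
      have hp' : A r p = true := by
        have := congrFun hp r; simpa [col] using this.trans h1
      have hq' : A r q = true := by
        have := congrFun hq r; simpa [col] using this.trans h2
      exact hA.1 r q p ⟨s, hs⟩ hqs hsp hq' hp'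
    have hcomp : Harmonious (col A ⟨t + 1, ht1N⟩) (col A ⟨t, htN⟩) := Or.symm (hA.2 t ht1N)
    rcases core B hB j hj (g ⟨t + 1, ht1N⟩) (g ⟨t, htN⟩) hu hv
        (col A ⟨t + 1, ht1N⟩) (col A ⟨t, htN⟩) (hg _).symm (hg _).symm hcomp
        (fun r h1 h2 => hlow (t + 1) ht1N (by omega) htq r h1 h2)
        (fun r h1 h2 => hlow t htN htp (by omega) r h1 h2) with h | h
    · rw [h, ← Finset.mem_coe, ← hrA]; exact Set.mem_range_self _
    · rw [h, ← Finset.mem_coe, ← hrA]; exact Set.mem_range_self _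

/-- If a finite set `L` admits an HCO multiordering, then every CO ordering of `L` extends
(via a strictly monotone map of column positions preserving columns) to an HCO multiordering
of `L`. -/
theorem CO_ordering_extends_to_HCO_multiordering (k : ℕ) (L : Finset (Fin k → Bool))
    (hex : ∃ (N : ℕ) (A : Fin k → Fin N → Bool), HCO A ∧ Set.range (col A) = ↑L)
    (n : ℕ) (B : Fin k → Fin n → Bool)
    (hB : CO B) (hinj : Function.Injective (col B)) (hrange : Set.range (col B) = ↑L) :
    ∃ (n' : ℕ) (B' : Fin k → Fin n' → Bool) (φ : Fin n → Fin n'),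
      HCO B' ∧ Set.range (col B') = ↑L ∧ StrictMono φ ∧ ∀ j, col B j = col B' (φ j) := by
  refine ⟨2 * n - 1,
    fun r m => B r ⟨m.1 / 2, by have := m.isLt; omega⟩ &&
               B r ⟨(m.1 + 1) / 2, by have := m.isLt; omega⟩,
    fun j => ⟨2 * j.1, by have := j.isLt; omega⟩, ⟨?_, ?_⟩, ?_, ?_, ?_⟩
  · -- CO
    intro r p q j hpj hjq h1 h2
    simp only [Bool.and_eq_true] at h1 h2 ⊢
    rw [Fin.le_def] at hpj hjq
    refine ⟨hB r _ _ _ ?_ ?_ h1.1 h2.1, hB r _ _ _ ?_ ?_ h1.2 h2.2⟩ <;>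
      · simp only [Fin.mk_le_mk]; omega
  · -- Harmonious adjacent columns
    intro m hm
    rcases Nat.even_or_odd m with ⟨a, ha⟩ | ⟨a, ha⟩
    · right
      intro r
      simp only [col]
      have e1 : (⟨m / 2, by omega⟩ : Fin n) = ⟨(m + 1) / 2, by omega⟩ := by
        apply Fin.ext; simp only; omega
      rw [e1, bool_le_iff]
      intro h
      rw [Bool.and_eq_true] at h ⊢
      exact ⟨h.1, h.1⟩
    · left
      intro r
      simp only [col]
      have e1 : (⟨(m + 1 + 1) / 2, by omega⟩ : Fin n) = ⟨(m + 1) / 2, by omega⟩ := by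
        apply Fin.ext; simp only; omega
      rw [e1, bool_le_iff]
      intro h
      rw [Bool.and_eq_true] at h ⊢
      exact ⟨h.2, h.2⟩
  · -- range = L
    apply Set.eq_of_subset_of_subset
    · rintro c ⟨m, rfl⟩
      rcases Nat.even_or_odd m.1 with ⟨a, ha⟩ | ⟨a, ha⟩
      · have han : a < n := by have := m.isLt; omega
        have : col (fun r (m : Fin (2 * n - 1)) =>
            B r ⟨m.1 / 2, by have := m.isLt; omega⟩ &&
            B r ⟨(m.1 + 1) / 2, by have := m.isLt; omega⟩) m = col B ⟨a, han⟩ := by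
          funext r
          simp only [col]
          have e1 : (⟨m.1 / 2, by have := m.isLt; omega⟩ : Fin n) = ⟨a, han⟩ := by
            apply Fin.ext; simp only; omega
          have e2 : (⟨(m.1 + 1) / 2, by have := m.isLt; omega⟩ : Fin n) = ⟨a, han⟩ := by
            apply Fin.ext; simp only; omega
          rw [e1, e2, Bool.and_self]
        rw [this, ← hrange]
        exact Set.mem_range_self _
      · have han : a + 1 < n := by have := m.isLt; omega
        have : col (fun r (m : Fin (2 * n - 1)) =>
            B r ⟨m.1 / 2, by have := m.isLt; omega⟩ &&
            B r ⟨(m.1 + 1) / 2, by have := m.isLt; omega⟩) m =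
            fun r => B r ⟨a, Nat.lt_of_succ_lt han⟩ && B r ⟨a + 1, han⟩ := by
          funext r
          simp only [col]
          have e1 : (⟨m.1 / 2, by have := m.isLt; omega⟩ : Fin n) =
              ⟨a, Nat.lt_of_succ_lt han⟩ := by
            apply Fin.ext; simp only; omega
          have e2 : (⟨(m.1 + 1) / 2, by have := m.isLt; omega⟩ : Fin n) = ⟨a + 1, han⟩ := by
            apply Fin.ext; simp only; omega
          rw [e1, e2]
        rw [this, Finset.mem_coe]
        exact meet_mem L hex B hB hinj hrange a han
    · intro c hc
      rw [← hrange] at hc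
      obtain ⟨j, rfl⟩ := hc
      refine ⟨⟨2 * j.1, by have := j.isLt; omega⟩, ?_⟩
      funext r
      simp only [col]
      have e1 : (⟨2 * j.1 / 2, by have := j.isLt; omega⟩ : Fin n) = j := by
        apply Fin.ext; simp only; omega
      have e2 : (⟨(2 * j.1 + 1) / 2, by have := j.isLt; omega⟩ : Fin n) = j := by
        apply Fin.ext; simp only; omega
      rw [e1, e2, Bool.and_self]
  · -- StrictMono
    intro a b hab
    rw [Fin.lt_def] at hab ⊢
    simp only
    omega
  · -- columns preserved
    intro j
    funext r
    simp only [col]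
    have e1 : (⟨2 * j.1 / 2, by have := j.isLt; omega⟩ : Fin n) = j := by
      apply Fin.ext; simp only; omega
    have e2 : (⟨(2 * j.1 + 1) / 2, by have := j.isLt; omega⟩ : Fin n) = j := by
      apply Fin.ext; simp only; omega
    rw [e1, e2, Bool.and_self]
end

section
/- Let L be a finite set of vectors in Fin k → Bool that admits an HCO multiordering. Let B be any CO ordering of L, and suppose the columns x and y of B at two adjacent positions are inharmonious. Then the coordinatewise Boolean AND of x and y (the vector fun r => x r && y r) belongs to L. -/
lemma bool_le_true' {a b : Bool} (h : a ≤ b) (ha : a = true) : b = true := by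
  subst ha; cases b
  · exact absurd h (by decide)
  · rfl

lemma aux_and_col {k N : ℕ} (L : Finset (Fin k → Bool)) (A : Fin k → Fin N → Bool)
    (hA : HCO A) (hrA : Set.range (col A) = ↑L)
    (PL PR : Fin k → Prop)
    (H1 : ∀ w ∈ L, ∀ r s : Fin k, w r = true → w s = true → PL r → PR s → False)
    (p q : Fin N) (hpq : p ≤ q) (x y : Fin k → Bool)
    (hp : col A p = x) (hq : col A q = y)
    (H2 : ∀ r, x r = true → y r = false → PL r)
    (H3 : ∀ r, x r = false → y r = true → PR r)
    (H4 : ∀ r, x r = false → y r = false → PL r ∨ PR r)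
    (r0 : Fin k) (hr01 : x r0 = true) (hr02 : y r0 = false)
    (s0 : Fin k) (hs01 : x s0 = false) (hs02 : y s0 = true) :
    (fun r => x r && y r) ∈ L := by
  classical
  subst hp; subst hq
  have memL : ∀ t : Fin N, col A t ∈ L := by
    intro t
    have : col A t ∈ (↑L : Set (Fin k → Bool)) := hrA ▸ Set.mem_range_self t
    exact_mod_cast this
  set S : Finset ℕ := (Finset.Icc p.1 q.1).filter
    (fun t => ∃ (h : t < N), ∃ r : Fin k, A r ⟨t, h⟩ = true ∧ PL r) with hSdef
  have hpS : p.1 ∈ S := by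
    refine Finset.mem_filter.2 ⟨Finset.mem_Icc.2 ⟨le_rfl, hpq⟩, p.2, r0, ?_, H2 r0 hr01 hr02⟩
    exact hr01
  have hqS : q.1 ∉ S := by
    intro hmem
    obtain ⟨-, h', r, hr, hPLr⟩ := Finset.mem_filter.1 hmem
    exact H1 (col A q) (memL q) r s0 hr hs02 hPLr (H3 s0 hs01 hs02)
  have hSne : S.Nonempty := ⟨p.1, hpS⟩
  set m := S.max' hSne with hm
  have hmS : m ∈ S := S.max'_mem hSne
  obtain ⟨hmIcc, hmN, r1, hr1, hPLr1⟩ := Finset.mem_filter.1 hmS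
  have hpm : p.1 ≤ m := (Finset.mem_Icc.1 hmIcc).1
  have hmq : m ≤ q.1 := (Finset.mem_Icc.1 hmIcc).2
  have hmne : m ≠ q.1 := fun h => hqS (h ▸ hmS)
  have hm1q : m + 1 ≤ q.1 := Nat.succ_le_of_lt (lt_of_le_of_ne hmq hmne)
  have hm1N : m + 1 < N := lt_of_le_of_lt hm1q q.2
  have hm1S : m + 1 ∉ S := fun h => by have := S.le_max' _ h; omega
  have hharm := hA.2 m hm1N
  have key : col A ⟨m + 1, hm1N⟩ = fun r => col A p r && col A q r := by
    funext r
    by_cases hz : col A p r = true ∧ col A q r = true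
    · have : col A ⟨m + 1, hm1N⟩ r = true :=
        hA.1 r p q ⟨m + 1, hm1N⟩ (by rw [Fin.le_def]; simpa using by omega)
          (by rw [Fin.le_def]; simpa using hm1q) hz.1 hz.2
      rw [this, hz.1, hz.2]; rfl
    · have hfalse : col A ⟨m + 1, hm1N⟩ r = false := by
        by_contra hc
        have hc : col A ⟨m + 1, hm1N⟩ r = true := by
          simpa using hc
        by_cases hPLr : PL r
        · exact hm1S (Finset.mem_filter.2
            ⟨Finset.mem_Icc.2 ⟨by omega, hm1q⟩, hm1N, r, hc, hPLr⟩)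
        · have hPRr : PR r := by
            rcases Bool.eq_false_or_eq_true (col A p r) with h1 | h1 <;>
              rcases Bool.eq_false_or_eq_true (col A q r) with h2 | h2
            · exact absurd ⟨h1, h2⟩ hz
            · exact absurd (H2 r h1 h2) hPLr
            · exact H3 r h1 h2
            · exact (H4 r h1 h2).resolve_left hPLr
          have hr1m : col A ⟨m, Nat.lt_of_succ_lt hm1N⟩ r1 = true := hr1
          rcases hharm with h | h
          · have hr1' : col A ⟨m + 1, hm1N⟩ r1 = true := bool_le_true' (h r1) hr1m
            exact H1 _ (memL ⟨m + 1, hm1N⟩) r1 r hr1' hc hPLr1 hPRr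
          · have hr' : col A ⟨m, Nat.lt_of_succ_lt hm1N⟩ r = true := bool_le_true' (h r) hc
            exact H1 _ (memL ⟨m, Nat.lt_of_succ_lt hm1N⟩) r1 r hr1m hr' hPLr1 hPRr
      rw [hfalse]
      rcases Bool.eq_false_or_eq_true (col A p r) with h1 | h1 <;>
        rcases Bool.eq_false_or_eq_true (col A q r) with h2 | h2
      · exact absurd ⟨h1, h2⟩ hz
      · rw [h1, h2]; rfl
      · rw [h1, h2]; rfl
      · rw [h1, h2]; rfl
  rw [← key]
  exact memL _

/-- If `L` admits an HCO multiordering, `B` is a CO ordering of `L`, and the columns of `B`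
at two adjacent positions are inharmonious, then their coordinatewise Boolean AND lies
in `L`. -/
theorem and_mem_of_adjacent_inharmonious (k : ℕ) (L : Finset (Fin k → Bool))
    (hex : ∃ (N : ℕ) (A : Fin k → Fin N → Bool), HCO A ∧ Set.range (col A) = ↑L)
    (n : ℕ) (B : Fin k → Fin n → Bool)
    (hB : CO B) (hinj : Function.Injective (col B)) (hrange : Set.range (col B) = ↑L)
    (j : ℕ) (hj : j + 1 < n)
    (hinh : ¬ Harmonious (col B ⟨j, Nat.lt_of_succ_lt hj⟩) (col B ⟨j + 1, hj⟩)) :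
    (fun r => col B ⟨j, Nat.lt_of_succ_lt hj⟩ r && col B ⟨j + 1, hj⟩ r) ∈ L := by
  classical
  obtain ⟨N, A, hA, hrA⟩ := hex
  set jn : Fin n := ⟨j, Nat.lt_of_succ_lt hj⟩ with hjn
  set jn1 : Fin n := ⟨j + 1, hj⟩ with hjn1
  set x : Fin k → Bool := col B jn with hx
  set y : Fin k → Bool := col B jn1 with hy
  -- witnesses from inharmoniousness
  rw [Harmonious] at hinh
  push_neg at hinh
  obtain ⟨⟨r0, hr0⟩, ⟨s0, hs0⟩⟩ := hinh
  have hr01 : x r0 = true := by revert hr0; cases h1 : x r0 <;> cases h2 : y r0 <;> simp [h1, h2]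
  have hr02 : y r0 = false := by revert hr0; cases h1 : x r0 <;> cases h2 : y r0 <;> simp [h1, h2]
  have hs01 : x s0 = false := by revert hs0; cases h1 : x s0 <;> cases h2 : y s0 <;> simp [h1, h2]
  have hs02 : y s0 = true := by revert hs0; cases h1 : x s0 <;> cases h2 : y s0 <;> simp [h1, h2]
  -- positions of x and y in A
  have hxL : x ∈ (↑L : Set (Fin k → Bool)) := hrange ▸ Set.mem_range_self jn
  have hyL : y ∈ (↑L : Set (Fin k → Bool)) := hrange ▸ Set.mem_range_self jn1
  obtain ⟨p, hp⟩ : x ∈ Set.range (col A) := hrA ▸ hxL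
  obtain ⟨q, hq⟩ : y ∈ Set.range (col A) := hrA ▸ hyL
  -- left/right row types
  set PL : Fin k → Prop := fun r => ∀ t : Fin n, j + 1 ≤ t.1 → B r t = false with hPL
  set PR : Fin k → Prop := fun r => ∀ t : Fin n, t.1 ≤ j → B r t = false with hPR
  have H1 : ∀ w ∈ L, ∀ r s : Fin k, w r = true → w s = true → PL r → PR s → False := by
    intro w hw r s hwr hws hplr hprs
    have : w ∈ Set.range (col B) := by rw [hrange]; exact_mod_cast hw
    obtain ⟨π, hπ⟩ := this
    rcases le_or_gt π.1 j with hle | hlt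
    · have := hprs π hle
      rw [← hπ] at hws
      exact absurd hws (by simp [col, this])
    · have := hplr π hlt
      rw [← hπ] at hwr
      exact absurd hwr (by simp [col, this])
  have H2 : ∀ r, x r = true → y r = false → PL r := by
    intro r h1 h2 t ht
    by_contra hbt
    have hbt : B r t = true := by simpa using hbt
    have : B r jn1 = true :=
      hB r jn t jn1 (by rw [Fin.le_def]; simp [hjn, hjn1]) (by rw [Fin.le_def]; simpa [hjn1]) h1 hbt
    exact absurd this (by simpa [hy, col] using h2)
  have H3 : ∀ r, x r = false → y r = true → PR r := by
    intro r h1 h2 t ht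
    by_contra hbt
    have hbt : B r t = true := by simpa using hbt
    have : B r jn = true :=
      hB r t jn1 jn (by rw [Fin.le_def]; simpa [hjn]) (by rw [Fin.le_def]; simp [hjn, hjn1]) hbt h2
    exact absurd this (by simpa [hx, col] using h1)
  have H4 : ∀ r, x r = false → y r = false → PL r ∨ PR r := by
    intro r h1 h2
    by_cases hpl : PL r
    · exact Or.inl hpl
    · right
      simp only [hPL, not_forall] at hpl
      obtain ⟨t1, ht1, hbt1⟩ := hpl
      have hbt1 : B r t1 = true := by simpa using hbt1
      intro t ht
      by_contra hbt
      have hbt : B r t = true := by simpa using hbt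
      have : B r jn = true :=
        hB r t t1 jn (by rw [Fin.le_def]; simpa [hjn]) (by rw [Fin.le_def]; simp [hjn]; omega) hbt hbt1
      exact absurd this (by simpa [hx, col] using h1)
  rcases le_total p q with hpq | hpq
  · exact aux_and_col L A hA hrA PL PR H1 p q hpq x y hp hq H2 H3 H4 r0 hr01 hr02 s0 hs01 hs02
  · have H1' : ∀ w ∈ L, ∀ r s : Fin k, w r = true → w s = true → PR r → PL s → False :=
      fun w hw r s h1 h2 hr hs => H1 w hw s r h2 h1 hs hr
    have := aux_and_col L A hA hrA PR PL H1' q p hpq y x hq hp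
      (fun r ha hb => H3 r hb ha) (fun r ha hb => H2 r hb ha)
      (fun r ha hb => (H4 r hb ha).symm) s0 hs02 hs01 r0 hr02 hr01
    have heq : (fun r => y r && x r) = fun r => x r && y r := by
      funext r; rw [Bool.and_comm]
    rw [heq] at this
    exact this
end

section
/- Let L be a finite set of vectors in Fin k → Bool. Then L admits an HCO multiordering if and only if there exists a CO ordering B of L such that for every pair of columns x, y of B at adjacent positions that are inharmonious, the coordinatewise Boolean AND of x and y belongs to L. -/
/-!
Forward direction: keep the first occurrence of every column of an HCO multiordering. If `x`
and `y` are the columns at two consecutive first occurrences `p < q`, every column strictly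
between them repeats an earlier one, so by the consecutive-ones property it lies below `x`; and
every column in `[p, q]` lies above `x ⊓ y`. Walking from `p` to `q` through comparable
neighbours, the first column below `y` has a predecessor that is not below `y`, hence lies below
that predecessor and so below `x`: it equals `x ⊓ y`, which therefore belongs to `L`.

Backward direction: interleave a CO ordering `b₀, …, bₙ₋₁` as `b₀, b₀ ⊓ b₁, b₁, b₁ ⊓ b₂, …`.
Neighbours are comparable, each row still has consecutive ones, and the inserted columns are
either old ones (for harmonious pairs) or lie in `L` by hypothesis.
-/

open Set Function

def AdjacentComparable {α : Type*} [Preorder α] {N : ℕ} (c : Fin N → α) : Prop :=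
  ∀ (j : ℕ) (h : j + 1 < N),
    c ⟨j, Nat.lt_of_succ_lt h⟩ ≤ c ⟨j + 1, h⟩ ∨ c ⟨j + 1, h⟩ ≤ c ⟨j, Nat.lt_of_succ_lt h⟩

section Lattice

variable {α : Type*} [SemilatticeInf α] {N : ℕ} {c : Fin N → α}

theorem AdjacentComparable.exists_eq_inf (hc : AdjacentComparable c) {p q : Fin N} (hpq : p ≤ q)
    (hle : ∀ m, p ≤ m → m < q → c m ≤ c p) (hge : ∀ m, p ≤ m → m ≤ q → c p ⊓ c q ≤ c m) :
    ∃ m, c m = c p ⊓ c q := by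
  -- induct on a position `n ∈ [p, q]` with `c n ≤ c q`: either the step into `n` goes up,
  -- or `c n` already lies below `c p`, hence equals `c p ⊓ c q`
  suffices h : ∀ n (hpn : p.1 ≤ n) (hn : n < N), n ≤ q.1 → c ⟨n, hn⟩ ≤ c q →
      ∃ m, c m = c p ⊓ c q from
    h q hpq q.2 le_rfl le_rfl
  intro n hpn
  induction n, hpn using Nat.le_induction with
  | base => exact fun _ _ hpq' => ⟨p, (inf_eq_left.2 hpq').symm⟩
  | succ n hpn ih =>
    intro hn hnq hcq
    rcases hc n hn with hstep | hstep
    · exact ih (by omega) (by omega) (hstep.trans hcq)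
    · have hp : p ≤ ⟨n + 1, hn⟩ := Fin.le_def.2 (show p.1 ≤ n + 1 by omega)
      refine ⟨⟨n + 1, hn⟩, le_antisymm (le_inf ?_ hcq) (hge _ hp hnq)⟩
      exact hstep.trans <|
        hle _ (Fin.le_def.2 (show p.1 ≤ n by omega)) (Fin.lt_def.2 (show n < q.1 by omega))

end Lattice

section ConsecutiveOnes

variable {k N M : ℕ}

theorem RowCO.and_comp {v : Fin N → Bool} (hv : RowCO v) {f g : Fin M → Fin N}
    (hf : Monotone f) (hg : Monotone g) (hfg : ∀ i, f i ≤ g i) :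
    RowCO fun i => v (f i) && v (g i) := by
  intro p q j hpj hjq hp hq
  simp only [Bool.and_eq_true] at hp hq ⊢
  have hlo : f p ≤ f j := hf hpj
  have hhi : g j ≤ g q := hg hjq
  exact ⟨hv _ _ _ hlo ((hfg j).trans hhi) hp.1 hq.2, hv _ _ _ (hlo.trans (hfg j)) hhi hp.1 hq.2⟩

theorem RowCO.comp_monotone {v : Fin N → Bool} (hv : RowCO v) {f : Fin M → Fin N}
    (hf : Monotone f) : RowCO (v ∘ f) :=
  fun _ _ _ hpj hjq => hv _ _ _ (hf hpj) (hf hjq)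

theorem CO.inf_col_le {A : Fin k → Fin N → Bool} (hA : CO A) {i j l : Fin N}
    (hij : i ≤ j) (hjl : j ≤ l) : col A i ⊓ col A l ≤ col A j := fun r =>
  Bool.le_iff_imp.2 fun h => by
    change (A r i && A r l) = true at h
    rw [Bool.and_eq_true] at h
    exact hA r i l j hij hjl h.1 h.2

theorem hco_iff {A : Fin k → Fin N → Bool} : HCO A ↔ CO A ∧ AdjacentComparable (col A) := Iff.rfl

end ConsecutiveOnes

section FirstOccurrences

variable {α : Type*} [DecidableEq α] {N : ℕ} (c : Fin N → α)

def firstOccurrences : Finset (Fin N) :=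
  Finset.univ.filter fun j => ∀ i < j, c i ≠ c j

theorem exists_mem_firstOccurrences_le (i : Fin N) :
    ∃ i' ∈ firstOccurrences c, i' ≤ i ∧ c i' = c i := by
  induction i using WellFoundedLT.induction with
  | _ i ih =>
    by_cases hi : i ∈ firstOccurrences c
    · exact ⟨i, hi, le_rfl, rfl⟩
    · simp only [firstOccurrences, Finset.mem_filter, Finset.mem_univ, true_and, not_forall,
        not_not] at hi
      obtain ⟨j, hji, hj⟩ := hi
      obtain ⟨i', hi', hle, heq⟩ := ih j hji
      exact ⟨i', hi', hle.trans hji.le, heq.trans hj⟩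

theorem injOn_firstOccurrences : InjOn c (firstOccurrences c) := by
  intro i hi j hj hij
  simp only [firstOccurrences, Finset.mem_coe, Finset.mem_filter, Finset.mem_univ, true_and]
    at hi hj
  rcases lt_trichotomy i j with h | h | h
  · exact absurd hij (hj i h)
  · exact h
  · exact absurd hij.symm (hi j h)

theorem image_firstOccurrences : c '' firstOccurrences c = range c := by
  refine (image_subset_range _ _).antisymm ?_
  rintro _ ⟨i, rfl⟩
  obtain ⟨i', hi', -, heq⟩ := exists_mem_firstOccurrences_le c i
  exact ⟨i', hi', heq⟩

abbrev firstOccurrenceEmb : Fin (firstOccurrences c).card ↪o Fin N :=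
  (firstOccurrences c).orderEmbOfFin rfl

theorem range_comp_firstOccurrenceEmb : range (c ∘ firstOccurrenceEmb c) = range c := by
  rw [range_comp, Finset.range_orderEmbOfFin, image_firstOccurrences]

theorem injective_comp_firstOccurrenceEmb : Injective (c ∘ firstOccurrenceEmb c) :=
  fun a b h => (firstOccurrenceEmb c).injective <| injOn_firstOccurrences c
    (Finset.orderEmbOfFin_mem _ rfl a) (Finset.orderEmbOfFin_mem _ rfl b) h

theorem exists_le_firstOccurrenceEmb_eq {j : ℕ} (hj : j + 1 < (firstOccurrences c).card)
    {m : Fin N} (hm : m < firstOccurrenceEmb c ⟨j + 1, hj⟩) :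
    ∃ m' ≤ firstOccurrenceEmb c ⟨j, Nat.lt_of_succ_lt hj⟩, c m' = c m := by
  obtain ⟨m', hm', hle, heq⟩ := exists_mem_firstOccurrences_le c m
  obtain ⟨t, rfl⟩ : m' ∈ range (firstOccurrenceEmb c) := by
    rw [Finset.range_orderEmbOfFin]
    exact hm'
  refine ⟨_, (firstOccurrenceEmb c).monotone ?_, heq⟩
  have ht : t < ⟨j + 1, hj⟩ := (firstOccurrenceEmb c).lt_iff_lt.1 (hle.trans_lt hm)
  simp only [Fin.lt_def, Fin.le_def] at ht ⊢
  omega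

end FirstOccurrences

theorem HCO.exists_injective_CO {k N : ℕ} {A : Fin k → Fin N → Bool} (hA : HCO A) :
    ∃ (n : ℕ) (B : Fin k → Fin n → Bool), CO B ∧ Injective (col B) ∧
      range (col B) = range (col A) ∧
      ∀ (j : ℕ) (hj : j + 1 < n),
        col B ⟨j, Nat.lt_of_succ_lt hj⟩ ⊓ col B ⟨j + 1, hj⟩ ∈ range (col A) := by
  obtain ⟨hCO, hadj⟩ := hco_iff.1 hA
  set e := firstOccurrenceEmb (col A)
  refine ⟨_, fun r j => A r (e j), fun r => (hCO r).comp_monotone e.monotone,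
    injective_comp_firstOccurrenceEmb _, range_comp_firstOccurrenceEmb _, fun j hj => ?_⟩
  have hpq : e ⟨j, Nat.lt_of_succ_lt hj⟩ ≤ e ⟨j + 1, hj⟩ := e.monotone (by simp [Fin.le_def])
  refine hadj.exists_eq_inf hpq (fun m hpm hmq => ?_) (fun m hpm hmq => hCO.inf_col_le hpm hmq)
  obtain ⟨m', hm'p, heq⟩ := exists_le_firstOccurrenceEmb_eq _ hj hmq
  simpa only [heq, inf_idem] using hCO.inf_col_le hm'p hpm

section Interleave

variable {n : ℕ}

def floorHalf (i : Fin (2 * n - 1)) : Fin n := ⟨i / 2, by omega⟩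

def ceilHalf (i : Fin (2 * n - 1)) : Fin n := ⟨(i + 1) / 2, by omega⟩

theorem floorHalf_mono : Monotone (floorHalf (n := n)) := fun a b h => by
  simp only [floorHalf, Fin.le_def] at h ⊢
  omega

theorem ceilHalf_mono : Monotone (ceilHalf (n := n)) := fun a b h => by
  simp only [ceilHalf, Fin.le_def] at h ⊢
  omega

theorem floorHalf_le_ceilHalf (i : Fin (2 * n - 1)) : floorHalf i ≤ ceilHalf i := by
  simp only [floorHalf, ceilHalf, Fin.le_def]
  omega

variable {α : Type*} [SemilatticeInf α] (c : Fin n → α)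

/-- The sequence `c 0, c 0 ⊓ c 1, c 1, c 1 ⊓ c 2, …, c (n - 1)`; empty when `n = 0`, since
`2 * 0 - 1 = 0` in `ℕ`. -/
def interleaveInf (i : Fin (2 * n - 1)) : α := c (floorHalf i) ⊓ c (ceilHalf i)

theorem interleaveInf_of_eq_two_mul {i : Fin (2 * n - 1)} {j : Fin n} (hij : i.1 = 2 * j.1) :
    interleaveInf c i = c j := by
  have hf : floorHalf i = j := Fin.ext (by simp only [floorHalf]; omega)
  have hc : ceilHalf i = j := Fin.ext (by simp only [ceilHalf]; omega)
  rw [interleaveInf, hf, hc, inf_idem]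

theorem interleaveInf_of_eq_two_mul_add_one {i : Fin (2 * n - 1)} {j : ℕ} (hj : j + 1 < n)
    (hij : i.1 = 2 * j + 1) :
    interleaveInf c i = c ⟨j, Nat.lt_of_succ_lt hj⟩ ⊓ c ⟨j + 1, hj⟩ := by
  have hf : floorHalf i = ⟨j, Nat.lt_of_succ_lt hj⟩ := Fin.ext (by simp only [floorHalf]; omega)
  have hc : ceilHalf i = ⟨j + 1, hj⟩ := Fin.ext (by simp only [ceilHalf]; omega)
  rw [interleaveInf, hf, hc]

theorem adjacentComparable_interleaveInf : AdjacentComparable (interleaveInf c) := by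
  intro i hi
  obtain ⟨j, hj | hj⟩ := Nat.even_or_odd' i
  · right
    rw [interleaveInf_of_eq_two_mul c (i := ⟨i, by omega⟩) (j := ⟨j, by omega⟩) hj,
      interleaveInf_of_eq_two_mul_add_one c (i := ⟨i + 1, hi⟩) (j := j) (by omega)
        (show i + 1 = 2 * j + 1 by omega)]
    exact inf_le_left
  · left
    rw [interleaveInf_of_eq_two_mul_add_one c (i := ⟨i, by omega⟩) (j := j) (by omega) hj,
      interleaveInf_of_eq_two_mul c (i := ⟨i + 1, hi⟩) (j := ⟨j + 1, by omega⟩)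
        (show i + 1 = 2 * (j + 1) by omega)]
    exact inf_le_right

theorem range_subset_range_interleaveInf : range c ⊆ range (interleaveInf c) := by
  rintro _ ⟨j, rfl⟩
  exact ⟨⟨2 * j, by omega⟩, interleaveInf_of_eq_two_mul c rfl⟩

theorem range_interleaveInf_subset {s : Set α} (hc : range c ⊆ s)
    (hinf : ∀ (j : ℕ) (hj : j + 1 < n),
      ¬ (c ⟨j, Nat.lt_of_succ_lt hj⟩ ≤ c ⟨j + 1, hj⟩ ∨
        c ⟨j + 1, hj⟩ ≤ c ⟨j, Nat.lt_of_succ_lt hj⟩) →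
      c ⟨j, Nat.lt_of_succ_lt hj⟩ ⊓ c ⟨j + 1, hj⟩ ∈ s) :
    range (interleaveInf c) ⊆ s := by
  rintro _ ⟨i, rfl⟩
  obtain ⟨j, hj | hj⟩ := Nat.even_or_odd' i
  · rw [interleaveInf_of_eq_two_mul c (j := ⟨j, by omega⟩) hj]
    exact hc ⟨_, rfl⟩
  · have hjn : j + 1 < n := by omega
    rw [interleaveInf_of_eq_two_mul_add_one c hjn hj]
    by_cases hcomp : c ⟨j, Nat.lt_of_succ_lt hjn⟩ ≤ c ⟨j + 1, hjn⟩ ∨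
        c ⟨j + 1, hjn⟩ ≤ c ⟨j, Nat.lt_of_succ_lt hjn⟩
    · rcases hcomp with hle | hle
      · rw [inf_eq_left.2 hle]
        exact hc ⟨_, rfl⟩
      · rw [inf_eq_right.2 hle]
        exact hc ⟨_, rfl⟩
    · exact hinf j hjn hcomp

end Interleave

theorem CO.hco_interleaveInf {k n : ℕ} {B : Fin k → Fin n → Bool} (hB : CO B) :
    HCO fun r i => interleaveInf (col B) i r :=
  hco_iff.2 ⟨fun r => (hB r).and_comp floorHalf_mono ceilHalf_mono floorHalf_le_ceilHalf,
    adjacentComparable_interleaveInf _⟩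

/-- A finite set `L` admits an HCO multiordering iff there exists a CO ordering `B` of `L`
such that for every adjacent inharmonious pair of columns of `B`, their coordinatewise
Boolean AND lies in `L`. -/
theorem HCO_multiordering_iff_CO_ordering_with_ands (k : ℕ) (L : Finset (Fin k → Bool)) :
    (∃ (N : ℕ) (A : Fin k → Fin N → Bool), HCO A ∧ Set.range (col A) = ↑L) ↔
    (∃ (n : ℕ) (B : Fin k → Fin n → Bool), CO B ∧ Function.Injective (col B) ∧
      Set.range (col B) = ↑L ∧
      ∀ (j : ℕ) (hj : j + 1 < n),
        ¬ Harmonious (col B ⟨j, Nat.lt_of_succ_lt hj⟩) (col B ⟨j + 1, hj⟩) →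
        (fun r => col B ⟨j, Nat.lt_of_succ_lt hj⟩ r && col B ⟨j + 1, hj⟩ r) ∈ L) := by
  constructor
  · rintro ⟨N, A, hA, hrange⟩
    obtain ⟨n, B, hB, hinj, hBrange, hinf⟩ := hA.exists_injective_CO
    refine ⟨n, B, hB, hinj, hBrange.trans hrange, fun j hj _ => ?_⟩
    rw [← Finset.mem_coe, ← hrange]
    exact hinf j hj
  · rintro ⟨n, B, hB, -, hrange, hand⟩
    refine ⟨2 * n - 1, fun r i => interleaveInf (col B) i r, hB.hco_interleaveInf, ?_⟩
    refine (range_interleaveInf_subset _ hrange.le hand).antisymm ?_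
    exact hrange ▸ range_subset_range_interleaveInf _
end

section
/- Let A be an HCO Boolean matrix and let v be a vector occurring exactly m times among the columns of A, with the property that deleting any single occurrence of v from A yields a matrix containing a pair of adjacent inharmonious columns. Then every HCO Boolean matrix whose set of columns equals the set of columns of A contains v as a column with multiplicity at least m. -/
lemma bool_lt {x y : Bool} (h : x < y) : x = false ∧ y = true := by
  revert h; cases x <;> cases y <;> decide

lemma bool_true_le {x : Bool} (h : true ≤ x) : x = true := by
  revert h; cases x <;> decide

lemma adj_harm {k n : ℕ} {M : Fin k → Fin n → Bool} (hM : HCO M) {a b : Fin n}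
    (hab : (a : ℕ) + 1 = (b : ℕ)) : Harmonious (col M a) (col M b) := by
  have hb : (a : ℕ) + 1 < n := hab ▸ b.isLt
  have h := hM.2 a.val hb
  have e1 : (⟨(a:ℕ), Nat.lt_of_succ_lt hb⟩ : Fin n) = a := rfl
  have e2 : (⟨(a:ℕ)+1, hb⟩ : Fin n) = b := Fin.ext hab
  rwa [e1, e2] at h

lemma succAbove_val {n : ℕ} (p : Fin (n+1)) (i : Fin n) :
    ((p.succAbove i : Fin (n+1)) : ℕ) = if (i:ℕ) < (p:ℕ) then (i:ℕ) else (i:ℕ)+1 := by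
  rw [Fin.succAbove]
  split
  · rename_i h; rw [if_pos (by simpa [Fin.lt_def] using h)]; rfl
  · rename_i h; rw [if_neg (by simpa [Fin.lt_def, not_lt] using h)]; rfl

lemma count_aux {n : ℕ} (T Q : Finset (Fin n))
    (hQT : ∀ q ∈ Q, ∀ q' ∈ Q, q < q' → ∃ j ∈ T, q < j ∧ j < q') :
    Q.card ≤ T.card + 1 := by
  classical
  rcases Q.eq_empty_or_nonempty with rfl | hne
  · simp
  set q0 := Q.min' hne with hq0
  have hq0m : q0 ∈ Q := Q.min'_mem hne
  have hmaps : ∀ q ∈ Q.erase q0, (T.filter (fun x => x < q)).Nonempty := by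
    intro q hq
    have hqQ : q ∈ Q := Finset.mem_of_mem_erase hq
    have hlt : q0 < q := lt_of_le_of_ne (Q.min'_le q hqQ) (Ne.symm (Finset.ne_of_mem_erase hq))
    obtain ⟨j, hjT, _, hj2⟩ := hQT q0 hq0m q hqQ hlt
    exact ⟨j, Finset.mem_filter.2 ⟨hjT, hj2⟩⟩
  set g : Fin n → Fin n := fun q =>
    if h : (T.filter (fun x => x < q)).Nonempty then (T.filter (fun x => x < q)).max' h else q
    with hg
  have hgval : ∀ q ∈ Q.erase q0, g q ∈ T.filter (fun x => x < q) := by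
    intro q hq
    have := hmaps q hq
    simp only [hg, dif_pos this]
    exact Finset.max'_mem _ this
  have hmono : ∀ q ∈ Q.erase q0, ∀ q' ∈ Q.erase q0, q < q' → g q < g q' := by
    intro q hq q' hq' hlt
    obtain ⟨j, hjT, hj1, hj2⟩ := hQT q (Finset.mem_of_mem_erase hq) q' (Finset.mem_of_mem_erase hq') hlt
    have h1 : g q < q := (Finset.mem_filter.1 (hgval q hq)).2
    have h2 : j ≤ g q' := by
      have hne2 := hmaps q' hq'
      have hmem : j ∈ T.filter (fun x => x < q') := Finset.mem_filter.2 ⟨hjT, hj2⟩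
      have := Finset.le_max' (T.filter (fun x => x < q')) j hmem
      simpa only [hg, dif_pos hne2] using this
    exact lt_of_lt_of_le (lt_trans h1 hj1) h2
  have hinj : Set.InjOn g (Q.erase q0) := by
    intro q hq q' hq' heq
    by_contra hne'
    rcases lt_or_gt_of_ne hne' with h | h
    · exact absurd heq (ne_of_lt (hmono _ hq _ hq' h))
    · exact absurd heq.symm (ne_of_lt (hmono _ hq' _ hq h))
  have hcard : (Q.erase q0).card ≤ T.card := by
    apply Finset.card_le_card_of_injOn g
    · intro q hq; exact Finset.mem_of_mem_filter _ (hgval q hq)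
    · exact hinj
  have hpos : 0 < Q.card := Finset.card_pos.2 hne
  have : (Q.erase q0).card = Q.card - 1 := Finset.card_erase_of_mem hq0m
  omega

/-- If a vector `v` occurs exactly `m` times among the columns of an HCO matrix `A`, and
deleting any single occurrence of `v` leaves a pair of adjacent inharmonious columns, then
every HCO matrix with the same column set contains `v` with multiplicity at least `m`. -/
theorem multiplicity_le_of_essential_column (k N : ℕ) (A : Fin k → Fin (N + 1) → Bool)
    (hA : HCO A) (v : Fin k → Bool) (m : ℕ)
    (hm : (Finset.univ.filter (fun j => col A j = v)).card = m)
    (hdel : ∀ j0 : Fin (N + 1), col A j0 = v →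
      ∃ (j : ℕ) (hj : j + 1 < N),
        ¬ Harmonious (fun r => A r (j0.succAbove ⟨j, Nat.lt_of_succ_lt hj⟩))
          (fun r => A r (j0.succAbove ⟨j + 1, hj⟩)))
    (N' : ℕ) (B : Fin k → Fin N' → Bool) (hB : HCO B)
    (hset : Set.range (col B) = Set.range (col A)) :
    m ≤ (Finset.univ.filter (fun j => col B j = v)).card := by
  classical
  rcases Nat.eq_zero_or_pos m with rfl | hm0
  · exact Nat.zero_le _
  set P : Finset (Fin (N+1)) := Finset.univ.filter (fun j => col A j = v) with hPdef
  set T : Finset (Fin N') := Finset.univ.filter (fun j => col B j = v) with hTdef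
  have hPcard : P.card = m := hm
  have hPmem : ∀ p, p ∈ P ↔ col A p = v := by
    intro p; simp [hPdef, Finset.mem_filter]
  have hTmem : ∀ b, b ∈ T ↔ col B b = v := by
    intro b; simp [hTdef, Finset.mem_filter]
  have hBA : ∀ b : Fin N', ∃ q : Fin (N+1), col A q = col B b := by
    intro b
    have : col B b ∈ Set.range (col A) := hset ▸ Set.mem_range_self b
    exact this
  have hAB : ∀ q : Fin (N+1), ∃ b : Fin N', col B b = col A q := by
    intro q
    have : col A q ∈ Set.range (col B) := hset.symm ▸ Set.mem_range_self q
    exact this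
  choose qq hqq using hBA
  choose bb hbb using hAB
  have hPne : P.Nonempty := Finset.card_pos.1 (by omega)
  obtain ⟨p0, hp0⟩ := hPne
  have hT1 : 1 ≤ T.card := by
    apply Finset.card_pos.2
    refine ⟨bb p0, (hTmem _).2 ?_⟩
    rw [hbb p0, (hPmem p0).1 hp0]
  rcases Nat.lt_or_ge m 2 with hm2 | hm2
  · omega
  -- key : each occurrence is interior with inharmonious neighbors
  have key : ∀ p ∈ P, ∃ a b : Fin (N+1), (a:ℕ)+1 = (p:ℕ) ∧ (p:ℕ)+1 = (b:ℕ) ∧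
      ¬ Harmonious (col A a) (col A b) := by
    intro p hp
    obtain ⟨j, hj, hnh⟩ := hdel p ((hPmem p).1 hp)
    set i1 : Fin N := ⟨j, Nat.lt_of_succ_lt hj⟩ with hi1
    set i2 : Fin N := ⟨j+1, hj⟩ with hi2
    have hv1 : ((p.succAbove i1 : Fin (N+1)) : ℕ) = if j < (p:ℕ) then j else j+1 := by
      have := succAbove_val p i1; simpa [hi1] using this
    have hv2 : ((p.succAbove i2 : Fin (N+1)) : ℕ) = if j+1 < (p:ℕ) then j+1 else (j+1)+1 := by
      have := succAbove_val p i2; simpa [hi2] using this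
    have hnh' : ¬ Harmonious (col A (p.succAbove i1)) (col A (p.succAbove i2)) := hnh
    rcases lt_trichotomy (j+1) (p:ℕ) with hc | hc | hc
    · exfalso
      apply hnh'
      apply adj_harm hA
      rw [hv1, hv2, if_pos (by omega), if_pos hc]
    · refine ⟨p.succAbove i1, p.succAbove i2, ?_, ?_, hnh'⟩
      · rw [hv1, if_pos (by omega)]; omega
      · rw [hv2, if_neg (by omega)]; omega
    · exfalso
      apply hnh'
      apply adj_harm hA
      rw [hv1, hv2, if_neg (by omega), if_neg (by omega)]
  -- valley : v is below both neighbors (uses m ≥ 2)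
  have valley : ∀ p ∈ P, ∀ a b : Fin (N+1), (a:ℕ)+1 = (p:ℕ) → (p:ℕ)+1 = (b:ℕ) →
      (∀ r, v r ≤ A r a) ∧ (∀ r, v r ≤ A r b) := by
    intro p hp a b ha hb
    obtain ⟨a', b', ha', hb', hnh⟩ := key p hp
    have haa : a' = a := Fin.ext (by omega)
    have hbb2 : b' = b := Fin.ext (by omega)
    subst haa; subst hbb2
    have hpv : col A p = v := (hPmem p).1 hp
    have h1 : Harmonious (col A a') (col A p) := adj_harm hA (by omega)
    have h2 : Harmonious (col A p) (col A b') := adj_harm hA (by omega)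
    rw [hpv] at h1 h2
    rcases h1 with h1 | h1
    · rcases h2 with h2 | h2
      · -- x ≤ v, v ≤ y : x ≤ y harmonious, contra
        exact absurd (Or.inl (fun r => le_trans (h1 r) (h2 r))) hnh
      · -- peak: x ≤ v, y ≤ v
        exfalso
        have hnx : ¬ (∀ r, col A a' r ≤ col A b' r) := fun h => hnh (Or.inl h)
        have hny : ¬ (∀ r, col A b' r ≤ col A a' r) := fun h => hnh (Or.inr h)
        push_neg at hnx hny
        obtain ⟨r, hr⟩ := hnx
        obtain ⟨s, hs⟩ := hny
        obtain ⟨hr2, hr1⟩ := bool_lt hr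
        obtain ⟨hs2, hs1⟩ := bool_lt hs
        obtain ⟨p', hp'P, hp'ne⟩ := Finset.exists_mem_ne (by omega : 1 < P.card) p
        have hp'v : col A p' = v := (hPmem p').1 hp'P
        have hvr : v r = true := by
          have h := h1 r; rw [hr1] at h; exact bool_true_le h
        have hvs : v s = true := by
          have h := h2 s; rw [hs1] at h; exact bool_true_le h
        rcases lt_or_gt_of_ne hp'ne with hlt | hgt
        · have e1 : A s p' = true := by
            have := congrFun hp'v s; simp only [col] at this; rw [this]; exact hvs
          have e2 : A s p = true := by
            have := congrFun hpv s; simp only [col] at this; rw [this]; exact hvs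
          have hle1 : p' ≤ a' := by
            rw [Fin.le_def]; have := Fin.lt_def.1 hlt; omega
          have hle2 : a' ≤ p := by rw [Fin.le_def]; omega
          have := hA.1 s p' p a' hle1 hle2 e1 e2
          have hcs : col A a' s = true := this
          rw [hs2] at hcs; exact Bool.false_ne_true hcs
        · have e1 : A r p = true := by
            have := congrFun hpv r; simp only [col] at this; rw [this]; exact hvr
          have e2 : A r p' = true := by
            have := congrFun hp'v r; simp only [col] at this; rw [this]; exact hvr
          have hle1 : p ≤ b' := by rw [Fin.le_def]; omega
          have hle2 : b' ≤ p' := by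
            rw [Fin.le_def]; have := Fin.lt_def.1 hgt; omega
          have := hA.1 r p p' b' hle1 hle2 e1 e2
          have hcr : col A b' r = true := this
          rw [hr2] at hcr; exact Bool.false_ne_true hcr
    · rcases h2 with h2 | h2
      · exact ⟨h1, h2⟩
      · -- v ≤ x, y ≤ v : y ≤ x harmonious, contra
        exact absurd (Or.inr (fun r => le_trans (h2 r) (h1 r))) hnh
  -- neighbors are ≠ v
  have nev : ∀ p ∈ P, ∀ c : Fin (N+1), ((c:ℕ)+1 = (p:ℕ) ∨ (p:ℕ)+1 = (c:ℕ)) → col A c ≠ v := by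
    intro p hp c hc hcv
    obtain ⟨a', b', ha', hb', hnh⟩ := key p hp
    have hpv : col A p = v := (hPmem p).1 hp
    rcases hc with hc | hc
    · have hac : a' = c := Fin.ext (by omega)
      subst hac
      apply hnh
      have := adj_harm hA (M := A) (a := p) (b := b') (by omega)
      rwa [hpv, ← hcv] at this
    · have hbc : b' = c := Fin.ext (by omega)
      subst hbc
      apply hnh
      have := adj_harm hA (M := A) (a := a') (b := p) (by omega)
      rwa [hpv, ← hcv] at this
  -- class counting function
  set cnt : Fin (N+1) → ℕ := fun s => (P.filter (fun p => p < s)).card with hcnt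
  have cnt_mono : ∀ s s' : Fin (N+1), s ≤ s' → cnt s ≤ cnt s' := by
    intro s s' h
    apply Finset.card_le_card
    intro p hp
    simp only [Finset.mem_filter] at *
    exact ⟨hp.1, lt_of_lt_of_le hp.2 h⟩
  have cnt_exists : ∀ s s' : Fin (N+1), cnt s < cnt s' → ∃ p ∈ P, s ≤ p ∧ p < s' := by
    intro s s' h
    by_contra hcon
    push_neg at hcon
    have hsub : P.filter (fun p => p < s') ⊆ P.filter (fun p => p < s) := by
      intro p hp
      simp only [Finset.mem_filter] at *
      refine ⟨hp.1, ?_⟩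
      by_contra hps
      push_neg at hps
      exact absurd hp.2 (not_lt.2 (hcon p hp.1 hps))
    exact absurd (Finset.card_le_card hsub) (not_le.2 h)
  have core : ∀ s s' : Fin (N+1), col A s = col A s' → cnt s < cnt s' →
      (∀ r, v r ≤ A r s) → col A s ≠ v → False := by
    intro s s' hcol h hle hne'
    obtain ⟨p, hpP, hp1, hp2⟩ := cnt_exists s s' h
    have hpv : col A p = v := (hPmem p).1 hpP
    have hps : p ≠ s := fun e => hne' (e ▸ hpv)
    have hlt : s < p := lt_of_le_of_ne hp1 (Ne.symm hps)
    apply hne'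
    funext r
    have h1 : A r s ≤ v r := by
      cases hAr : A r s with
      | false => simp
      | true =>
        have h2 : A r s' = true := by
          have e := congrFun hcol r
          simp only [col] at e
          rw [← e]; exact hAr
        have h3 : A r p = true := hA.1 r s s' p (le_of_lt hlt) (le_of_lt hp2) hAr h2
        have e := congrFun hpv r
        simp only [col] at e
        rw [← e, h3]
    exact le_antisymm h1 (hle r)
  have cnt_eq_col : ∀ s s' : Fin (N+1), col A s = col A s' → (∀ r, v r ≤ A r s) →
      col A s ≠ v → cnt s = cnt s' := by
    intro s s' hcol hle hne'
    rcases lt_trichotomy (cnt s) (cnt s') with h | h | h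
    · exact absurd (core s s' hcol h hle hne') id
    · exact h
    · exfalso
      apply core s' s hcol.symm h
      · intro r; have e := congrFun hcol r; simp only [col] at e; rw [← e]; exact hle r
      · rw [← hcol]; exact hne'
  -- columns of different classes (dominating v) are inharmonious
  have inh : ∀ s s' : Fin (N+1), cnt s < cnt s' → (∀ r, v r ≤ A r s) → (∀ r, v r ≤ A r s') →
      col A s ≠ v → col A s' ≠ v → ¬ Harmonious (col A s) (col A s') := by
    intro s s' h hle hle' hne1 hne2 hH
    obtain ⟨p, hpP, hp1, hp2⟩ := cnt_exists s s' h
    have hpv : col A p = v := (hPmem p).1 hpP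
    have hps : p ≠ s := fun e => hne1 (e ▸ hpv)
    have hlt : s < p := lt_of_le_of_ne hp1 (Ne.symm hps)
    have hmeet : ∀ r, A r s = true → A r s' = true → v r = true := by
      intro r h1 h2
      have h3 : A r p = true := hA.1 r s s' p (le_of_lt hlt) (le_of_lt hp2) h1 h2
      have e := congrFun hpv r; simp only [col] at e; rw [← e]; exact h3
    rcases hH with hH | hH
    · apply hne1
      funext r
      refine le_antisymm ?_ (hle r)
      cases hAr : A r s with
      | false => show A r s ≤ v r; rw [hAr]; simp
      | true =>
        have h2 : A r s' = true := by
          have := hH r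
          simp only [col] at this
          rw [hAr] at this
          exact bool_true_le this
        show A r s ≤ v r
        rw [hAr, hmeet r hAr h2]
    · apply hne2
      funext r
      refine le_antisymm ?_ (hle' r)
      cases hAr : A r s' with
      | false => show A r s' ≤ v r; rw [hAr]; simp
      | true =>
        have h2 : A r s = true := by
          have := hH r
          simp only [col] at this
          rw [hAr] at this
          exact bool_true_le this
        show A r s' ≤ v r
        rw [hAr, hmeet r h2 hAr]
  -- adjacent columns in B (dominating v, not v) have equal class
  have cross : ∀ x x' : Fin N', (x:ℕ)+1 = (x':ℕ) → (∀ r, v r ≤ B r x) → (∀ r, v r ≤ B r x') →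
      col B x ≠ v → col B x' ≠ v → cnt (qq x) = cnt (qq x') := by
    intro x x' hadj h1 h2 hn1 hn2
    have hH : Harmonious (col B x) (col B x') := adj_harm hB hadj
    have e1 : col A (qq x) = col B x := hqq x
    have e2 : col A (qq x') = col B x' := hqq x'
    have hle1 : ∀ r, v r ≤ A r (qq x) := by
      intro r; have e := congrFun e1 r; simp only [col] at e; rw [e]; exact h1 r
    have hle2 : ∀ r, v r ≤ A r (qq x') := by
      intro r; have e := congrFun e2 r; simp only [col] at e; rw [e]; exact h2 r
    have hnv1 : col A (qq x) ≠ v := by rw [e1]; exact hn1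
    have hnv2 : col A (qq x') ≠ v := by rw [e2]; exact hn2
    have hH' : Harmonious (col A (qq x)) (col A (qq x')) := by rw [e1, e2]; exact hH
    rcases lt_trichotomy (cnt (qq x)) (cnt (qq x')) with h | h | h
    · exact absurd hH' (inh _ _ h hle1 hle2 hnv1 hnv2)
    · exact h
    · exfalso
      apply inh _ _ h hle2 hle1 hnv2 hnv1
      rcases hH' with hh | hh
      · exact Or.inr hh
      · exact Or.inl hh
  -- along a v-free stretch of B the class is constant
  have run : ∀ d : ℕ, ∀ x x' : Fin N', (x:ℕ) + d = (x':ℕ) → (∀ r, v r ≤ B r x) →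
      (∀ r, v r ≤ B r x') → (∀ j : Fin N', x ≤ j → j ≤ x' → col B j ≠ v) →
      cnt (qq x) = cnt (qq x') := by
    intro d
    induction d with
    | zero =>
      intro x x' he _ _ _
      have : x = x' := Fin.ext (by omega)
      rw [this]
    | succ d ih =>
      intro x x' he h1 h2 h3
      have hxlt : (x:ℕ) + 1 < N' := by have := x'.isLt; omega
      set xm : Fin N' := ⟨(x:ℕ)+1, hxlt⟩ with hxm
      have hx_le : x ≤ xm := by rw [Fin.le_def]; simp [hxm]
      have hm_le : xm ≤ x' := by rw [Fin.le_def]; simp [hxm]; omega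
      have hvm : ∀ r, v r ≤ B r xm := by
        intro r
        cases hvr : v r with
        | false => simp
        | true =>
          have hb1 : B r x = true := by
            have := h1 r; rw [hvr] at this; exact bool_true_le this
          have hb2 : B r x' = true := by
            have := h2 r; rw [hvr] at this; exact bool_true_le this
          have := hB.1 r x x' xm hx_le hm_le hb1 hb2
          rw [this]
      have h3m : col B xm ≠ v := h3 xm hx_le hm_le
      have h3x : col B x ≠ v := h3 x le_rfl (by rw [Fin.le_def]; omega)
      have step := cross x xm (by simp [hxm]) h1 hvm h3x h3m
      rw [step]
      exact ih xm x' (by simp [hxm]; omega) hvm h2 (fun j hj1 hj2 => h3 j (le_trans hx_le hj1) hj2)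
  -- different classes in B are separated by an occurrence of v
  have btwn : ∀ x x' : Fin N', x < x' → (∀ r, v r ≤ B r x) → (∀ r, v r ≤ B r x') →
      col B x ≠ v → col B x' ≠ v → cnt (qq x) ≠ cnt (qq x') → ∃ j ∈ T, x < j ∧ j < x' := by
    intro x x' hlt h1 h2 hn1 hn2 hne'
    by_contra hcon
    push_neg at hcon
    apply hne'
    apply run ((x':ℕ) - (x:ℕ)) x x' (by have := Fin.lt_def.1 hlt; omega) h1 h2
    intro j hj1 hj2 hjv
    have hjT : j ∈ T := (hTmem j).2 hjv
    have hne1 : j ≠ x := fun e => hn1 (e ▸ hjv)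
    have hne2 : j ≠ x' := fun e => hn2 (e ▸ hjv)
    have hxj : x < j := lt_of_le_of_ne hj1 (Ne.symm hne1)
    exact absurd (lt_of_le_of_ne hj2 hne2) (not_lt.2 (hcon j hjT hxj))
  -- markers
  set p1 := P.min' ⟨p0, hp0⟩ with hp1def
  have hp1P : p1 ∈ P := P.min'_mem _
  obtain ⟨a1, b1, ha1, hb1, hnh1⟩ := key p1 hp1P
  have hnbex : ∀ p, p ∈ P → ∃ c : Fin (N+1), (p:ℕ)+1 = (c:ℕ) := by
    intro p hp; obtain ⟨a', b', _, hb', _⟩ := key p hp; exact ⟨b', hb'⟩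
  choose! nb hnb using hnbex
  have haex : ∀ p, p ∈ P → ∃ c : Fin (N+1), (c:ℕ)+1 = (p:ℕ) := by
    intro p hp; obtain ⟨a', b', ha', _, _⟩ := key p hp; exact ⟨a', ha'⟩
  set M0 : Finset (Fin (N+1)) := insert a1 (P.image nb) with hM0
  have hM0mem : ∀ s ∈ M0, (∀ r, v r ≤ A r s) ∧ col A s ≠ v := by
    intro s hs
    rw [hM0, Finset.mem_insert] at hs
    rcases hs with rfl | hs
    · have hv := valley p1 hp1P s (nb p1) ha1 (hnb p1 hp1P)
      exact ⟨hv.1, nev p1 hp1P s (Or.inl ha1)⟩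
    · obtain ⟨p, hpP, rfl⟩ := Finset.mem_image.1 hs
      obtain ⟨a', hA'⟩ := haex p hpP
      have hv := valley p hpP a' (nb p) hA' (hnb p hpP)
      exact ⟨hv.2, nev p hpP (nb p) (Or.inr (hnb p hpP))⟩
  have hwit : ∀ s ∈ M0, ∀ s' ∈ M0, s < s' → ∃ p ∈ P, s ≤ p ∧ p < s' := by
    intro s hs s' hs' hlt
    rw [hM0, Finset.mem_insert] at hs hs'
    rcases hs with rfl | hs
    · rcases hs' with rfl | hs'
      · exact absurd hlt (lt_irrefl _)
      · obtain ⟨p, hpP, rfl⟩ := Finset.mem_image.1 hs'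
        refine ⟨p1, hp1P, ?_, ?_⟩
        · rw [Fin.le_def]; omega
        · have h1 := Fin.le_def.1 (P.min'_le p hpP)
          have h2 := hnb p hpP
          rw [Fin.lt_def]; omega
    · obtain ⟨p, hpP, rfl⟩ := Finset.mem_image.1 hs
      rcases hs' with rfl | hs'
      · exfalso
        have h1 := Fin.le_def.1 (P.min'_le p hpP)
        have h2 := hnb p hpP
        have := Fin.lt_def.1 hlt
        omega
      · obtain ⟨p', hp'P, rfl⟩ := Finset.mem_image.1 hs'
        refine ⟨p', hp'P, ?_, ?_⟩
        · have e1 := hnb p hpP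
          have e2 := hnb p' hp'P
          have := Fin.lt_def.1 hlt
          rw [Fin.le_def]; omega
        · have := hnb p' hp'P
          rw [Fin.lt_def]; omega
  have hstrict : ∀ s ∈ M0, ∀ s' ∈ M0, s < s' → cnt s < cnt s' := by
    intro s hs s' hs' hlt
    obtain ⟨p, hpP, hw1, hw2⟩ := hwit s hs s' hs' hlt
    simp only [hcnt]
    apply Finset.card_lt_card
    rw [Finset.ssubset_def]
    constructor
    · intro q hq
      simp only [Finset.mem_filter] at *
      exact ⟨hq.1, lt_trans hq.2 hlt⟩
    · intro hsub
      have hmem : p ∈ P.filter (fun q => q < s) := hsub (Finset.mem_filter.2 ⟨hpP, hw2⟩)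
      have := (Finset.mem_filter.1 hmem).2
      exact absurd this (not_lt.2 hw1)
  have hdist : ∀ s ∈ M0, ∀ s' ∈ M0, s ≠ s' → cnt s ≠ cnt s' := by
    intro s hs s' hs' hne'
    rcases lt_or_gt_of_ne hne' with h | h
    · exact ne_of_lt (hstrict s hs s' hs' h)
    · exact (ne_of_lt (hstrict s' hs' s hs h)).symm
  have hnbinj : Set.InjOn nb P := by
    intro p hp p' hp' he
    have e1 := hnb p hp
    have e2 := hnb p' hp'
    rw [he] at e1
    exact Fin.ext (by omega)
  have hnotmem : a1 ∉ P.image nb := by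
    intro hmem
    obtain ⟨p, hpP, he⟩ := Finset.mem_image.1 hmem
    have e1 := hnb p hpP
    have h2 := Fin.le_def.1 (P.min'_le p hpP)
    have := congrArg Fin.val he
    omega
  have hM0card : M0.card = m + 1 := by
    rw [hM0, Finset.card_insert_of_notMem hnotmem, Finset.card_image_of_injOn hnbinj, hPcard]
  set Q : Finset (Fin N') := M0.image bb with hQ
  have hbbinj : Set.InjOn bb M0 := by
    intro s hs s' hs' he
    by_contra hne'
    apply hdist s hs s' hs' hne'
    have hcol : col A s = col A s' := by rw [← hbb s, ← hbb s', he]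
    exact cnt_eq_col s s' hcol (hM0mem s hs).1 (hM0mem s hs).2
  have hQcard : Q.card = m + 1 := by
    rw [hQ, Finset.card_image_of_injOn hbbinj, hM0card]
  have hclq : ∀ s ∈ M0, cnt (qq (bb s)) = cnt s := by
    intro s hs
    have hcol : col A (qq (bb s)) = col A s := by rw [hqq (bb s), hbb s]
    apply cnt_eq_col
    · exact hcol
    · intro r; have e := congrFun hcol r; simp only [col] at e; rw [e]
      exact (hM0mem s hs).1 r
    · rw [hcol]; exact (hM0mem s hs).2
  have hQprop : ∀ x ∈ Q, ∀ x' ∈ Q, x < x' → ∃ j ∈ T, x < j ∧ j < x' := by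
    intro x hx x' hx' hlt
    rw [hQ] at hx hx'
    obtain ⟨s, hs, rfl⟩ := Finset.mem_image.1 hx
    obtain ⟨s', hs', rfl⟩ := Finset.mem_image.1 hx'
    obtain ⟨hle_s, hnv_s⟩ := hM0mem s hs
    obtain ⟨hle_s', hnv_s'⟩ := hM0mem s' hs'
    have hc1 : col B (bb s) = col A s := hbb s
    have hc2 : col B (bb s') = col A s' := hbb s'
    apply btwn _ _ hlt
    · intro r; have e := congrFun hc1 r; simp only [col] at e; rw [e]; exact hle_s r
    · intro r; have e := congrFun hc2 r; simp only [col] at e; rw [e]; exact hle_s' r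
    · rw [hc1]; exact hnv_s
    · rw [hc2]; exact hnv_s'
    · have hs_ne : s ≠ s' := by
        rintro rfl
        exact absurd hlt (lt_irrefl _)
      rw [hclq s hs, hclq s' hs']
      exact hdist s hs s' hs' hs_ne
  have hfin := count_aux T Q hQprop
  omega
end

section
/- Let L be a finite set of vectors in Fin k → Bool that admits an HCO multiordering. Then there exists a function m' : (Fin k → Bool) → ℕ with m' v ≥ 1 for all v ∈ L, such that for every function m : (Fin k → Bool) → ℕ, there exists an HCO Boolean matrix whose columns are exactly the elements of L with each v ∈ L occurring exactly m v times, if and only if m v ≥ m' v for all v ∈ L. -/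
/-!
Read a matrix as the word of its columns and fix `v ∈ L`. The occurrences of `v` cut an HCO
multiordering into `mult v + 1` segments. By the consecutive-ones property two comparable
columns strictly above `v` lie in the same segment, and conversely all columns between two
columns above `v` in one segment are themselves above `v`. Hence the segments containing a
column above `v` correspond to the connected components of the comparability graph on
`{x ∈ L | v < x}`; their number `c v` does not depend on the multiordering, and every
multiordering has `mult v ≥ max 1 (c v - 1)`.

Conversely, in a shortest multiordering no occurrence of a repeated `v` can be deleted, so
its two neighbors are incomparable; then both lie above `v`, and every one of the
`mult v + 1` segments contains a column above `v`, i.e. `mult v = max 1 (c v - 1)`.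
Duplicating columns realizes every larger multiplicity.
-/

open Finset Relation

lemma Fin.val_succAbove {N : ℕ} (p : Fin (N + 1)) (i : Fin N) :
    (p.succAbove i : ℕ) = if (i : ℕ) < p then (i : ℕ) else i + 1 := by
  unfold Fin.succAbove
  split_ifs <;> simp_all [Fin.lt_def]

lemma Fin.val_predAbove {N : ℕ} (p : Fin N) (i : Fin (N + 1)) :
    (p.predAbove i : ℕ) = if (p : ℕ) < i then (i : ℕ) - 1 else i := by
  unfold Fin.predAbove
  split_ifs with h₁ h₂ h₂ <;> rw [Fin.lt_def, Fin.val_castSucc] at h₁ <;> simp <;> omega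

lemma Fin.covBy_iff_val_add_one_eq {N : ℕ} {i j : Fin N} : i ⋖ j ↔ (i : ℕ) + 1 = j :=
  Fin.covBy_iff.trans Nat.covBy_iff_add_one_eq

lemma Finset.card_image_eq_of_forall_eq_iff {ι β γ : Type*} [DecidableEq β] [DecidableEq γ]
    {s : Finset ι} {f : ι → β} {g : ι → γ} (h : ∀ i ∈ s, ∀ j ∈ s, f i = f j ↔ g i = g j) :
    #(s.image f) = #(s.image g) := by
  set P := s.image fun i => (f i, g i)
  have hf : Set.InjOn Prod.fst (P : Set (β × γ)) := by
    simp only [P, coe_image, Set.InjOn, Set.mem_image, mem_coe]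
    rintro _ ⟨i, hi, rfl⟩ _ ⟨j, hj, rfl⟩ hij
    exact Prod.ext hij ((h i hi j hj).1 hij)
  have hg : Set.InjOn Prod.snd (P : Set (β × γ)) := by
    simp only [P, coe_image, Set.InjOn, Set.mem_image, mem_coe]
    rintro _ ⟨i, hi, rfl⟩ _ ⟨j, hj, rfl⟩ hij
    exact Prod.ext ((h i hi j hj).2 hij) hij
  calc #(s.image f) = #(P.image Prod.fst) := by rw [image_image]; rfl
    _ = #(P.image Prod.snd) := by rw [card_image_of_injOn hf, card_image_of_injOn hg]
    _ = #(s.image g) := by rw [image_image]; rfl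

namespace ConsecutiveOnes

variable {α : Type*} {N : ℕ}

lemma range_comp_succAbove {w : Fin (N + 1) → α} {p : Fin (N + 1)} (h : ∃ q ≠ p, w q = w p) :
    Set.range (w ∘ p.succAbove) = Set.range w := by
  rw [Set.range_comp, Fin.range_succAbove]
  refine (Set.image_subset_range _ _).antisymm ?_
  rintro _ ⟨r, rfl⟩
  by_cases hr : r = p
  · obtain ⟨q, hq, hqp⟩ := h
    exact ⟨q, hq, hr ▸ hqp⟩
  · exact ⟨r, hr, rfl⟩

section Counting

variable [DecidableEq α] {w : Fin N → α} {v : α} {i j : Fin N}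

def mult (w : Fin N → α) (v : α) : ℕ := #{j | w j = v}

def countBefore (w : Fin N → α) (v : α) (j : Fin N) : ℕ := #{i | i < j ∧ w i = v}

lemma countBefore_mono (h : i ≤ j) : countBefore w v i ≤ countBefore w v j :=
  card_le_card fun l => by simpa using fun hl hv => ⟨hl.trans_le h, hv⟩

lemma countBefore_le_mult : countBefore w v j ≤ mult w v :=
  card_le_card fun l => by simp +contextual

lemma countBefore_eq_iff (h : i ≤ j) :
    countBefore w v i = countBefore w v j ↔ ∀ l, i ≤ l → l < j → w l ≠ v := by
  have hsub : ({l | l < i ∧ w l = v} : Finset (Fin N)) ⊆ ({l | l < j ∧ w l = v} : Finset _) :=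
    fun l => by simpa using fun hl hv => ⟨hl.trans_le h, hv⟩
  constructor
  · intro heq l hil hlj hl
    have hmem : l ∈ ({l | l < j ∧ w l = v} : Finset _) := by simp [hlj, hl]
    rw [← eq_of_subset_of_card_le hsub heq.ge] at hmem
    exact (mem_filter.1 hmem).2.1.not_ge hil
  · intro hno
    refine congrArg card (subset_antisymm hsub fun l => ?_)
    simp only [mem_filter, mem_univ, true_and]
    exact fun ⟨hlj, hl⟩ => ⟨lt_of_not_ge fun hil => hno l hil hlj hl, hl⟩

lemma countBefore_lt_of_lt (h : i < j) (hi : w i = v) : countBefore w v i < countBefore w v j :=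
  (countBefore_mono h.le).lt_of_ne fun heq => (countBefore_eq_iff h.le).1 heq i le_rfl h hi

lemma one_le_mult (hv : v ∈ Set.range w) : 1 ≤ mult w v := by
  obtain ⟨j, rfl⟩ := hv
  exact card_pos.2 ⟨j, by simp⟩

lemma exists_ne_eq_of_two_le_mult (hv : 2 ≤ mult w v) (p : Fin N) : ∃ q ≠ p, w q = v := by
  obtain ⟨q, hq, hqp⟩ := exists_mem_ne hv p
  exact ⟨q, hqp, (mem_filter.1 hq).2⟩

lemma sum_mult {L : Finset α} (hL : Set.range w = L) : ∑ v ∈ L, mult w v = N := by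
  have hmaps : Set.MapsTo w (univ : Finset (Fin N)) L := fun j _ => hL ▸ ⟨j, rfl⟩
  simpa [mult] using (card_eq_sum_card_fiberwise hmaps).symm

lemma mult_comp_predAbove (w : Fin N → α) (p : Fin N) (v : α) :
    mult (w ∘ p.predAbove) v = mult w v + if w p = v then 1 else 0 := by
  simp only [mult, card_filter, Fin.sum_univ_succAbove _ p.castSucc, Function.comp_apply,
    Fin.predAbove_castSucc_self, Fin.predAbove_succAbove, add_comm]

end Counting

section Words

variable [SemilatticeInf α]

/-- For `α = Fin k → Bool`, `co` is the consecutive-ones property of the rows (`⊓` is the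
rowwise `and`) and `adj` says that adjacent columns are harmonious. -/
structure IsHCOWord (w : Fin N → α) : Prop where
  co : ∀ ⦃p j q⦄, p ≤ j → j ≤ q → w p ⊓ w q ≤ w j
  adj : ∀ ⦃i j⦄, i ⋖ j → SymmGen (· ≤ ·) (w i) (w j)

def NeighborsComparable (w : Fin N → α) (p : Fin N) : Prop :=
  ∀ ⦃i j⦄, i ⋖ p → p ⋖ j → SymmGen (· ≤ ·) (w i) (w j)

variable {w : Fin N → α}

lemma IsHCOWord.comp_predAbove (hw : IsHCOWord w) (p : Fin N) : IsHCOWord (w ∘ p.predAbove) where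
  co _ _ _ h₁ h₂ := hw.co (Fin.predAbove_right_monotone p h₁) (Fin.predAbove_right_monotone p h₂)
  adj i j hij := by
    rw [Fin.covBy_iff_val_add_one_eq] at hij
    by_cases h : p.predAbove i = p.predAbove j
    · simp only [Function.comp_apply, h, SymmGen.refl]
    · refine hw.adj (Fin.covBy_iff_val_add_one_eq.2 ?_)
      rw [Fin.ext_iff, Fin.val_predAbove, Fin.val_predAbove] at h
      rw [Fin.val_predAbove, Fin.val_predAbove]
      split_ifs at h ⊢ <;> omega

lemma IsHCOWord.comp_succAbove {w : Fin (N + 1) → α} (hw : IsHCOWord w) {p : Fin (N + 1)}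
    (hp : NeighborsComparable w p) : IsHCOWord (w ∘ p.succAbove) where
  co _ _ _ h₁ h₂ := hw.co ((Fin.strictMono_succAbove p).monotone h₁)
    ((Fin.strictMono_succAbove p).monotone h₂)
  adj i j hij := by
    rw [Fin.covBy_iff_val_add_one_eq] at hij
    rcases lt_or_ge ((i : ℕ) + 1) p with h | h
    · refine hw.adj (Fin.covBy_iff_val_add_one_eq.2 ?_)
      rw [Fin.val_succAbove, Fin.val_succAbove]
      split_ifs <;> omega
    rcases h.eq_or_lt with h | h
    · refine hp ?_ ?_ <;> rw [Fin.covBy_iff_val_add_one_eq, Fin.val_succAbove] <;>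
        split_ifs <;> omega
    · refine hw.adj (Fin.covBy_iff_val_add_one_eq.2 ?_)
      rw [Fin.val_succAbove, Fin.val_succAbove]
      split_ifs <;> omega

variable {v : α} {L : Finset α}

def AboveComparable (L : Finset α) (v x y : α) : Prop :=
  x ∈ L ∧ v < x ∧ y ∈ L ∧ v < y ∧ SymmGen (· ≤ ·) x y

instance (L : Finset α) (v : α) : Std.Symm (AboveComparable L v) where
  symm _ _ := fun ⟨hx, hvx, hy, hvy, h⟩ => ⟨hy, hvy, hx, hvx, h.symm⟩

lemma AboveComparable.not_inf_le {x y : α} (h : AboveComparable L v x y) : ¬ x ⊓ y ≤ v := by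
  obtain ⟨-, hx, -, hy, hxy | hyx⟩ := h
  · rw [inf_eq_left.2 hxy]
    exact hx.not_ge
  · rw [inf_eq_right.2 hyx]
    exact hy.not_ge

variable [DecidableEq α]

lemma IsHCOWord.countBefore_eq_of_not_inf_le (hw : IsHCOWord w) {i j : Fin N}
    (h : ¬ w i ⊓ w j ≤ v) : countBefore w v i = countBefore w v j := by
  wlog hij : i ≤ j generalizing i j
  · exact (this (by rwa [inf_comm]) (le_of_not_ge hij)).symm
  exact (countBefore_eq_iff hij).2 fun l hil hlj hl => h (hl ▸ hw.co hil hlj.le)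

lemma IsHCOWord.reflTransGen_of_countBefore_eq (hw : IsHCOWord w) (hL : Set.range w = L)
    {i j : Fin N} (hij : i ≤ j) (hi : v < w i) (hj : v < w j)
    (h : countBefore w v i = countBefore w v j) :
    ReflTransGen (AboveComparable L v) (w i) (w j) := by
  have hmem : ∀ l, w l ∈ L := fun l => by rw [← mem_coe, ← hL]; exact ⟨l, rfl⟩
  have habove : ∀ l, i ≤ l → l ≤ j → v < w l := by
    intro l hil hlj
    refine ((le_inf hi.le hj.le).trans (hw.co hil hlj)).lt_of_ne fun hl => ?_
    rcases hlj.lt_or_eq with hlj | rfl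
    · exact (countBefore_eq_iff hij).1 h l hil hlj hl.symm
    · exact hj.ne hl
  refine ReflTransGen.lift w (fun _ _ h => h) _ _
    (reflTransGen_of_succ_of_le _ (fun l hl => ?_) hij)
  have hcov : l ⋖ Order.succ l := Order.covBy_succ_of_not_isMax hl.2.not_isMax
  exact ⟨hmem l, habove l hl.1 hl.2.le, hmem _,
    habove _ (hl.1.trans hcov.le) (Order.succ_le_of_lt hl.2), hw.adj hcov⟩

lemma IsHCOWord.countBefore_eq_iff_reflTransGen (hw : IsHCOWord w) (hL : Set.range w = L)
    {i j : Fin N} (hi : v < w i) (hj : v < w j) :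
    countBefore w v i = countBefore w v j ↔ ReflTransGen (AboveComparable L v) (w i) (w j) := by
  refine ⟨fun h => ?_, fun h => ?_⟩
  · rcases le_total i j with hij | hji
    · exact hw.reflTransGen_of_countBefore_eq hL hij hi hj h
    · exact symm (hw.reflTransGen_of_countBefore_eq hL hji hj hi h.symm)
  suffices ∀ y, ReflTransGen (AboveComparable L v) (w i) y →
      ∀ j, w j = y → countBefore w v i = countBefore w v j from this _ h j rfl
  intro y hy
  induction hy with
  | refl =>
    intro j hj
    exact hw.countBefore_eq_of_not_inf_le (by rw [hj, inf_idem]; exact hi.not_ge)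
  | @tail y _ _ hyz ih =>
    intro j hj
    obtain ⟨l, rfl⟩ : y ∈ Set.range w := by rw [hL]; exact hyz.1
    exact (ih l rfl).trans (hw.countBefore_eq_of_not_inf_le (hj ▸ hyz.not_inf_le))

open Classical in
/-- The occurrences of `v` cut `w` into `mult w v + 1` segments, numbered by `countBefore`;
these are the numbers of the segments containing a column strictly above `v`. -/
noncomputable def aboveSegments (w : Fin N → α) (v : α) : Finset ℕ :=
  ({j | v < w j} : Finset (Fin N)).image (countBefore w v)

open Classical in
/-- The number of connected components of the comparability graph on `{x ∈ L | v < x}`. -/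
noncomputable def numAboveComponents (L : Finset α) (v : α) : ℕ :=
  #({x ∈ L | v < x}.image (Quot.mk (AboveComparable L v)))

lemma card_aboveSegments_le : #(aboveSegments w v) ≤ mult w v + 1 := by
  refine (card_le_card fun n hn => ?_).trans (card_range _).le
  obtain ⟨j, -, rfl⟩ := mem_image.1 hn
  exact mem_range.2 (Nat.lt_succ_of_le countBefore_le_mult)

lemma IsHCOWord.card_aboveSegments (hw : IsHCOWord w) (hL : Set.range w = L) :
    #(aboveSegments w v) = numAboveComponents L v := by
  classical
  have himage : ({j | v < w j} : Finset (Fin N)).image w = {x ∈ L | v < x} := by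
    ext x
    simp only [mem_image, mem_filter, mem_univ, true_and]
    rw [← mem_coe, ← hL]
    constructor
    · rintro ⟨j, hj, rfl⟩
      exact ⟨⟨j, rfl⟩, hj⟩
    · rintro ⟨⟨j, rfl⟩, hj⟩
      exact ⟨j, hj, rfl⟩
  rw [aboveSegments, numAboveComponents,
    card_image_eq_of_forall_eq_iff (g := Quot.mk (AboveComparable L v) ∘ w), ← image_image,
    himage]
  intro i hi j hj
  rw [Function.comp_apply, Function.comp_apply, Quot.eq, EqvGen.eqvGen_eq_reflTransGen]
  exact hw.countBefore_eq_iff_reflTransGen hL (mem_filter.1 hi).2 (mem_filter.1 hj).2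

lemma IsHCOWord.exists_above_neighbors (hw : IsHCOWord w) (hv : 2 ≤ mult w v) {p : Fin N}
    (hp : w p = v) (hnc : ¬ NeighborsComparable w p) :
    ∃ i j, i ⋖ p ∧ p ⋖ j ∧ v < w i ∧ v < w j := by
  simp only [NeighborsComparable, not_forall] at hnc
  obtain ⟨i, j, hi, hj, hij⟩ := hnc
  refine ⟨i, j, hi, hj, ?_⟩
  have hvi : SymmGen (· ≤ ·) v (w i) := hp ▸ (hw.adj hi).symm
  have hvj : SymmGen (· ≤ ·) v (w j) := hp ▸ hw.adj hj
  have hi_ne : v ≠ w i := fun h => hij (h ▸ hvj)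
  have hj_ne : v ≠ w j := fun h => hij (h ▸ hvi.symm)
  have hi_of_j (hvj' : v < w j) : v < w i := by
    rcases hvi with h | h
    · exact h.lt_of_ne hi_ne
    · exact absurd (.of_le (h.trans hvj'.le)) hij
  have hj_of_i (hvi' : v < w i) : v < w j := by
    rcases hvj with h | h
    · exact h.lt_of_ne hj_ne
    · exact absurd (.of_ge (h.trans hvi'.le)) hij
  -- Another occurrence of `v` on one side of `p` forces that neighbor above `v` by convexity.
  obtain ⟨q, hqp, hq⟩ := exists_ne_eq_of_two_le_mult hv p
  rcases hqp.lt_or_gt with hqp | hpq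
  · have hvi' : v < w i := by
      refine lt_of_le_of_ne ?_ hi_ne
      simpa [hp, hq] using hw.co (hi.le_of_lt hqp) hi.le
    exact ⟨hvi', hj_of_i hvi'⟩
  · have hvj' : v < w j := by
      refine lt_of_le_of_ne ?_ hj_ne
      simpa [hp, hq] using hw.co hj.le (hj.ge_of_gt hpq)
    exact ⟨hi_of_j hvj', hvj'⟩

lemma IsHCOWord.mult_add_one_le_card_aboveSegments (hw : IsHCOWord w) (hv : 2 ≤ mult w v)
    (h : ∀ p, w p = v → ¬ NeighborsComparable w p) : mult w v + 1 ≤ #(aboveSegments w v) := by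
  set occ : Finset (Fin N) := {p | w p = v}
  have hocc : ∀ p ∈ occ, (∃ i, i ⋖ p ∧ v < w i) ∧ p ⋖ Order.succ p ∧ v < w (Order.succ p) := by
    intro p hp
    have hp : w p = v := (mem_filter.1 hp).2
    obtain ⟨i, j, hi, hj, hvi, hvj⟩ := hw.exists_above_neighbors hv hp (h p hp)
    rw [hj.succ_eq]
    exact ⟨⟨i, hi, hvi⟩, hj, hvj⟩
  have hmono : ∀ p ∈ occ, ∀ q ∈ occ, p < q →
      countBefore w v (Order.succ p) < countBefore w v (Order.succ q) := fun p _ q hq hpq =>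
    (countBefore_mono (Order.succ_le_of_lt hpq)).trans_lt
      (countBefore_lt_of_lt (hocc q hq).2.1.lt (mem_filter.1 hq).2)
  have hinj : Set.InjOn (fun p => countBefore w v (Order.succ p)) occ := by
    intro p hp q hq hpq
    by_contra hne
    rcases lt_or_gt_of_ne hne with hlt | hlt
    · exact (hmono p hp q hq hlt).ne hpq
    · exact (hmono q hq p hp hlt).ne hpq.symm
  have hsub : occ.image (fun p => countBefore w v (Order.succ p)) ⊆ aboveSegments w v := by
    intro n hn
    obtain ⟨p, hp, rfl⟩ := mem_image.1 hn
    exact mem_image.2 ⟨_, by simpa using (hocc p hp).2.2, rfl⟩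
  have hocc_ne : occ.Nonempty := card_pos.1 (by change 0 < mult w v; omega)
  -- The segment before the first occurrence of `v` also contains a column above `v`.
  have hzero : 0 ∈ aboveSegments w v := by
    obtain ⟨i, hi, hvi⟩ := (hocc _ (occ.min'_mem hocc_ne)).1
    refine mem_image.2 ⟨i, by simpa using hvi, card_eq_zero.2 (filter_eq_empty_iff.2 ?_)⟩
    exact fun l _ ⟨hli, hl⟩ => (occ.min'_le l (by simpa [occ] using hl)).not_gt (hli.trans hi.lt)
  have hzero_notMem : 0 ∉ occ.image (fun p => countBefore w v (Order.succ p)) := by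
    simp only [mem_image, not_exists, not_and]
    exact fun p hp h0 =>
      (Nat.zero_lt_of_lt (countBefore_lt_of_lt (hocc p hp).2.1.lt (mem_filter.1 hp).2)).ne' h0
  calc mult w v + 1 = #(occ.image fun p => countBefore w v (Order.succ p)) + 1 := by
        rw [card_image_of_injOn hinj]; rfl
    _ = #(insert 0 (occ.image fun p => countBefore w v (Order.succ p))) :=
        (card_insert_of_notMem hzero_notMem).symm
    _ ≤ #(aboveSegments w v) := card_le_card (insert_subset hzero hsub)

noncomputable def minMult (L : Finset α) (v : α) : ℕ := max 1 (numAboveComponents L v - 1)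

lemma IsHCOWord.minMult_le_mult (hw : IsHCOWord w) (hL : Set.range w = L) (hv : v ∈ L) :
    minMult L v ≤ mult w v := by
  have := card_aboveSegments_le (w := w) (v := v)
  rw [hw.card_aboveSegments hL] at this
  exact max_le (one_le_mult (by rwa [hL])) (by omega)

lemma exists_isHCOWord_mult_eq_minMult
    (h : ∃ N, ∃ w : Fin N → α, IsHCOWord w ∧ Set.range w = L) :
    ∃ N, ∃ w : Fin N → α, IsHCOWord w ∧ Set.range w = L ∧ ∀ v ∈ L, mult w v = minMult L v := by
  classical
  -- A shortest word admits no removable repeated column.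
  obtain ⟨N, ⟨w, hw, hL⟩, hmin⟩ : ∃ N, (∃ w : Fin N → α, IsHCOWord w ∧ Set.range w = L) ∧
      ∀ n < N, ¬ ∃ w : Fin n → α, IsHCOWord w ∧ Set.range w = L :=
    ⟨Nat.find h, Nat.find_spec h, fun _ => Nat.find_min h⟩
  refine ⟨N, w, hw, hL, fun v hv => (le_antisymm ?_ (hw.minMult_le_mult hL hv))⟩
  by_cases hv2 : mult w v ≤ 1
  · exact hv2.trans (le_max_left _ _)
  have hnc : ∀ p, w p = v → ¬ NeighborsComparable w p := by
    intro p hp hnc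
    obtain ⟨n, rfl⟩ := Nat.exists_eq_add_one_of_ne_zero p.pos.ne'
    obtain ⟨q, hqp, hq⟩ := exists_ne_eq_of_two_le_mult (w := w) (v := v) (by omega) p
    exact hmin n n.lt_add_one ⟨w ∘ p.succAbove, hw.comp_succAbove hnc,
      (range_comp_succAbove ⟨q, hqp, hq.trans hp.symm⟩).trans hL⟩
  have := hw.mult_add_one_le_card_aboveSegments (by omega) hnc
  rw [hw.card_aboveSegments hL] at this
  unfold minMult
  omega

lemma IsHCOWord.exists_mult_eq (hw : IsHCOWord w) (hL : Set.range w = L) {m : α → ℕ}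
    (hm : ∀ v ∈ L, mult w v ≤ m v) :
    ∃ N', ∃ w' : Fin N' → α, IsHCOWord w' ∧ Set.range w' = L ∧ ∀ v ∈ L, mult w' v = m v := by
  obtain ⟨d, hd⟩ : ∃ d, ∑ v ∈ L, m v - N = d := ⟨_, rfl⟩
  induction d generalizing N with
  | zero =>
    have hsum : ∑ v ∈ L, mult w v = ∑ v ∈ L, m v :=
      (sum_le_sum hm).antisymm (by rw [sum_mult hL]; omega)
    exact ⟨N, w, hw, hL, (sum_eq_sum_iff_of_le hm).1 hsum⟩
  | succ d ih =>
    obtain ⟨v, hv, hlt⟩ : ∃ v ∈ L, mult w v < m v := by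
      by_contra! hge
      have := sum_le_sum hge
      rw [sum_mult hL] at this
      omega
    obtain ⟨p, rfl⟩ : v ∈ Set.range w := by rwa [hL]
    refine ih (hw.comp_predAbove p) ((Fin.predAbove_surjective p).range_comp w ▸ hL)
      (fun u hu => ?_) (by omega)
    rw [mult_comp_predAbove]
    split_ifs with h
    · exact h ▸ hlt
    · simpa using hm u hu

theorem exists_isHCOWord_mult_eq_iff (h : ∃ N, ∃ w : Fin N → α, IsHCOWord w ∧ Set.range w = L)
    (m : α → ℕ) :
    (∃ N, ∃ w : Fin N → α, IsHCOWord w ∧ Set.range w = L ∧ ∀ v ∈ L, mult w v = m v) ↔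
      ∀ v ∈ L, minMult L v ≤ m v := by
  refine ⟨fun ⟨N, w, hw, hL, hwm⟩ v hv => hwm v hv ▸ hw.minMult_le_mult hL hv, fun hm => ?_⟩
  obtain ⟨N, w, hw, hL, hwm⟩ := exists_isHCOWord_mult_eq_minMult h
  exact hw.exists_mult_eq hL fun v hv => (hwm v hv).trans_le (hm v hv)

end Words

end ConsecutiveOnes

open ConsecutiveOnes

lemma harmonious_iff_symmGen {k : ℕ} {x y : Fin k → Bool} :
    Harmonious x y ↔ SymmGen (· ≤ ·) x y :=
  Iff.rfl

lemma hCO_iff_isHCOWord_col {k N : ℕ} (M : Fin k → Fin N → Bool) :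
    HCO M ↔ IsHCOWord (col M) := by
  refine ⟨fun ⟨hco, hadj⟩ => ⟨fun p j q hpj hjq r => ?_, fun i j hij => ?_⟩,
    fun ⟨hco, hadj⟩ => ⟨fun r p q j hpj hjq hp hq => ?_,
      fun j hj => harmonious_iff_symmGen.2 (hadj ?_)⟩⟩
  · simpa [col, Bool.le_iff_imp] using hco r p q j hpj hjq
  · obtain ⟨i, hi⟩ := i
    obtain ⟨j, hj⟩ := j
    obtain rfl := Fin.covBy_iff_val_add_one_eq.1 hij
    exact harmonious_iff_symmGen.1 (hadj i hj)
  · simpa [col, hp, hq, Bool.le_iff_imp] using hco hpj hjq r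
  · exact Fin.covBy_iff_val_add_one_eq.2 rfl

/-- If a finite set `L` admits an HCO multiordering, there is a minimal multiplicity
`m'` (with `m' v ≥ 1` on `L`) such that a multiplicity `m` is realizable by an HCO matrix
with column set `L` iff `m v ≥ m' v` for all `v ∈ L`. -/
theorem HCO_minimal_multiplicity (k : ℕ) (L : Finset (Fin k → Bool))
    (hex : ∃ (N : ℕ) (A : Fin k → Fin N → Bool), HCO A ∧ Set.range (col A) = ↑L) :
    ∃ m' : (Fin k → Bool) → ℕ, (∀ v ∈ L, 1 ≤ m' v) ∧
      ∀ m : (Fin k → Bool) → ℕ,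
        (∃ (N : ℕ) (M : Fin k → Fin N → Bool), HCO M ∧ Set.range (col M) = ↑L ∧
          ∀ v ∈ L, (Finset.univ.filter (fun j => col M j = v)).card = m v) ↔
        (∀ v ∈ L, m' v ≤ m v) := by
  obtain ⟨N, A, hA, hAL⟩ := hex
  refine ⟨minMult L, fun v _ => le_max_left _ _, fun m => ?_⟩
  rw [← exists_isHCOWord_mult_eq_iff ⟨N, col A, (hCO_iff_isHCOWord_col A).1 hA, hAL⟩ m]
  refine exists_congr fun N => ⟨fun ⟨M, hM, hML, hm⟩ => ?_, fun ⟨w, hw, hwL, hm⟩ => ?_⟩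
  · exact ⟨col M, (hCO_iff_isHCOWord_col M).1 hM, hML, hm⟩
  · exact ⟨Function.swap w, (hCO_iff_isHCOWord_col _).2 hw, hwL, hm⟩
end

section
/- For every natural number n, the number of sets R of vectors in Fin n → Bool such that every r ∈ R is a discrete interval and no two elements r, s ∈ R satisfy first(r) = last(s) + 1, equals the number of subspaces W of the ZMod 2-vector space Fin (n+1) → ZMod 2 with full support, i.e., such that for every coordinate i ∈ Fin (n+1) there exists w ∈ W with w i ≠ 0. -/
/-- `IntervalSpec r a b` says the `true` positions of `r` are exactly `{a, …, b}` (with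
`a ≤ b`); so `a` is the first and `b` the last `true` position of `r`. -/
def IntervalSpec {n : ℕ} (r : Fin n → Bool) (a b : Fin n) : Prop :=
  a ≤ b ∧ ∀ i, r i = true ↔ (a ≤ i ∧ i ≤ b)

open scoped Classical
open Finset

noncomputable section

namespace HCOaux


variable {m : ℕ}

def Good (f : Fin m → Finset (Fin m)) : Prop := ∀ y, ∀ x ∈ f y, x < y ∧ f x = ∅

def Wof (f : Fin m → Finset (Fin m)) : Submodule (ZMod 2) (Fin m → ZMod 2) where
  carrier := {w | ∀ j, f j ≠ ∅ → w j = ∑ x ∈ f j, w x}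
  add_mem' := by
    intro a b ha hb j hj
    simp only [Pi.add_apply, ha j hj, hb j hj, Finset.sum_add_distrib]
  zero_mem' := by intro j hj; simp
  smul_mem' := by
    intro c a ha j hj
    simp only [Pi.smul_apply, ha j hj, Finset.smul_sum]

lemma mem_Wof {f : Fin m → Finset (Fin m)} {w : Fin m → ZMod 2} :
    w ∈ Wof f ↔ ∀ j, f j ≠ ∅ → w j = ∑ x ∈ f j, w x := Iff.rfl

def extV (f : Fin m → Finset (Fin m)) (g : Fin m → ZMod 2) : Fin m → ZMod 2 :=
  fun j => if f j = ∅ then g j else ∑ x ∈ f j, g x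

lemma extV_mem {f : Fin m → Finset (Fin m)} (hf : Good f) (g : Fin m → ZMod 2) :
    extV f g ∈ Wof f := by
  intro j hj
  simp only [extV, if_neg hj]
  exact Finset.sum_congr rfl fun x hx => by rw [if_pos ((hf j x hx).2)]

lemma full_Wof {f : Fin m → Finset (Fin m)} (hf : Good f) :
    ∀ i, ∃ w ∈ Wof f, w i ≠ 0 := by
  intro i
  by_cases h : f i = ∅
  · refine ⟨extV f (Pi.single i 1), extV_mem hf _, ?_⟩
    simp [extV, h]
  · obtain ⟨x0, hx0⟩ := Finset.nonempty_iff_ne_empty.2 h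
    refine ⟨extV f (Pi.single x0 1), extV_mem hf _, ?_⟩
    simp only [extV, if_neg h]
    rw [Finset.sum_pi_single']
    simp [hx0]

def Piv (W : Submodule (ZMod 2) (Fin m → ZMod 2)) : Finset (Fin m) :=
  univ.filter fun i => ∃ w ∈ W, w i ≠ 0 ∧ ∀ j, j < i → w j = 0

lemma mem_Piv {W : Submodule (ZMod 2) (Fin m → ZMod 2)} {i : Fin m} :
    i ∈ Piv W ↔ ∃ w ∈ W, w i ≠ 0 ∧ ∀ j, j < i → w j = 0 := by
  simp [Piv]

lemma exists_lead (w : Fin m → ZMod 2) (hw : w ≠ 0) :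
    ∃ i, w i ≠ 0 ∧ ∀ j, j < i → w j = 0 := by
  have hne : (univ.filter fun i => w i ≠ 0).Nonempty := by
    rcases Function.ne_iff.1 hw with ⟨i, hi⟩
    refine ⟨i, ?_⟩
    simp only [Finset.mem_filter, Finset.mem_univ, true_and]
    simpa using hi
  refine ⟨(univ.filter fun i => w i ≠ 0).min' hne, ?_, ?_⟩
  · have := Finset.min'_mem _ hne; simpa using this
  · intro j hj
    by_contra hjne
    have : (univ.filter fun i => w i ≠ 0).min' hne ≤ j :=
      Finset.min'_le _ _ (by simp [hjne])
    exact absurd (lt_of_le_of_lt this hj) (lt_irrefl _)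

lemma eq_zero_of_piv {W : Submodule (ZMod 2) (Fin m → ZMod 2)} {w : Fin m → ZMod 2}
    (hw : w ∈ W) (h : ∀ q ∈ Piv W, w q = 0) : w = 0 := by
  by_contra hne
  obtain ⟨i, hi, hlead⟩ := exists_lead w hne
  exact hi (h i (mem_Piv.2 ⟨w, hw, hi, hlead⟩))

lemma zmod2_add_one {a b : ZMod 2} (h : a ≠ b) : a + 1 = b := by revert h; revert a b; decide

lemma zmod2_one {a : ZMod 2} (h : a ≠ 0) : a = 1 := by revert h; revert a; decide

lemma exists_match (W : Submodule (ZMod 2) (Fin m → ZMod 2)) (g : Fin m → ZMod 2) :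
    ∃ w ∈ W, ∀ q ∈ Piv W, w q = g q := by
  suffices h : ∀ t : ℕ, ∃ w ∈ W, ∀ q ∈ Piv W, (q : ℕ) < t → w q = g q by
    obtain ⟨w, hw, hq⟩ := h m
    exact ⟨w, hw, fun q hq' => hq q hq' q.isLt⟩
  intro t
  induction t with
  | zero => exact ⟨0, W.zero_mem, by simp⟩
  | succ t ih =>
    obtain ⟨w, hw, hmatch⟩ := ih
    by_cases hc : ∃ q0 ∈ Piv W, (q0 : ℕ) = t ∧ w q0 ≠ g q0
    · obtain ⟨q0, hq0, hq0t, hne⟩ := hc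
      obtain ⟨u, hu, hu0, hulead⟩ := mem_Piv.1 hq0
      have hu1 : u q0 = 1 := zmod2_one hu0
      refine ⟨w + u, W.add_mem hw hu, ?_⟩
      intro q hq hqt
      rcases lt_or_eq_of_le (Nat.lt_succ_iff.1 hqt) with h' | h'
      · have : q < q0 := by
          rw [Fin.lt_def, hq0t]; exact h'
        simp [hulead q this, hmatch q hq h']
      · have : q = q0 := Fin.ext (h'.trans hq0t.symm)
        subst this
        simp only [Pi.add_apply, hu1]
        exact zmod2_add_one hne
    · refine ⟨w, hw, ?_⟩
      intro q hq hqt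
      rcases lt_or_eq_of_le (Nat.lt_succ_iff.1 hqt) with h' | h'
      · exact hmatch q hq h'
      · by_contra hne
        exact hc ⟨q, hq, h', hne⟩

def canon (W : Submodule (ZMod 2) (Fin m → ZMod 2)) (p : Fin m) : Fin m → ZMod 2 :=
  (exists_match W (Pi.single p 1)).choose

lemma canon_mem (W : Submodule (ZMod 2) (Fin m → ZMod 2)) (p : Fin m) : canon W p ∈ W :=
  (exists_match W (Pi.single p 1)).choose_spec.1

lemma canon_spec (W : Submodule (ZMod 2) (Fin m → ZMod 2)) (p : Fin m) :
    ∀ q ∈ Piv W, canon W p q = (Pi.single p 1 : Fin m → ZMod 2) q :=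
  (exists_match W (Pi.single p 1)).choose_spec.2

lemma sum_canon_apply (W : Submodule (ZMod 2) (Fin m → ZMod 2)) (c : Fin m → ZMod 2)
    {q : Fin m} (hq : q ∈ Piv W) :
    (∑ p ∈ Piv W, c p • canon W p) q = c q := by
  rw [Finset.sum_apply]
  rw [Finset.sum_eq_single q]
  · rw [Pi.smul_apply, canon_spec W q q hq, Pi.single_eq_same, smul_eq_mul, mul_one]
  · intro p hp hpq
    rw [Pi.smul_apply, canon_spec W p q hq, Pi.single_eq_of_ne (Ne.symm hpq), smul_eq_mul, mul_zero]
  · intro h; exact absurd hq h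

lemma repr_canon (W : Submodule (ZMod 2) (Fin m → ZMod 2)) {w : Fin m → ZMod 2}
    (hw : w ∈ W) : w = ∑ p ∈ Piv W, w p • canon W p := by
  have hmem : (∑ p ∈ Piv W, w p • canon W p) ∈ W :=
    Submodule.sum_mem W fun p _ => W.smul_mem _ (canon_mem W p)
  have hd : w - ∑ p ∈ Piv W, w p • canon W p = 0 := by
    apply eq_zero_of_piv (W.sub_mem hw hmem)
    intro q hq
    rw [Pi.sub_apply, sum_canon_apply W w hq, sub_self]
  exact sub_eq_zero.mp hd


lemma canon_lead {W : Submodule (ZMod 2) (Fin m → ZMod 2)} {p : Fin m} (hp : p ∈ Piv W) :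
    ∀ j, j < p → canon W p j = 0 := by
  have hne : canon W p ≠ 0 := by
    intro h
    have := canon_spec W p p hp
    rw [h] at this
    simp at this
  obtain ⟨i, hi, hlead⟩ := exists_lead _ hne
  have hiPiv : i ∈ Piv W := mem_Piv.2 ⟨canon W p, canon_mem W p, hi, hlead⟩
  have : canon W p i = (Pi.single p 1 : Fin m → ZMod 2) i := canon_spec W p i hiPiv
  have hip : i = p := by
    by_contra hne'
    rw [this, Pi.single_eq_of_ne hne'] at hi
    exact hi rfl
  subst hip
  exact hlead

def fof (W : Submodule (ZMod 2) (Fin m → ZMod 2)) : Fin m → Finset (Fin m) := fun j =>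
  if j ∈ Piv W then ∅ else (Piv W).filter fun p => canon W p j ≠ 0

lemma mem_fof {W : Submodule (ZMod 2) (Fin m → ZMod 2)} {j x : Fin m} :
    x ∈ fof W j ↔ j ∉ Piv W ∧ x ∈ Piv W ∧ canon W x j ≠ 0 := by
  unfold fof
  by_cases h : j ∈ Piv W <;> simp [h, Finset.mem_filter, and_comm]

lemma good_fof (W : Submodule (ZMod 2) (Fin m → ZMod 2)) : Good (fof W) := by
  intro y x hx
  obtain ⟨hy, hxP, hc⟩ := mem_fof.1 hx
  constructor
  · rcases lt_trichotomy x y with h | h | h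
    · exact h
    · exact absurd (h ▸ hxP) hy
    · exact absurd (canon_lead hxP y h) hc
  · simp [fof, hxP]

lemma piv_Wof {f : Fin m → Finset (Fin m)} (hf : Good f) (j : Fin m) :
    j ∈ Piv (Wof f) ↔ f j = ∅ := by
  constructor
  · intro hj
    obtain ⟨w, hw, hwj, hlead⟩ := mem_Piv.1 hj
    by_contra hne
    have := mem_Wof.1 hw j hne
    rw [Finset.sum_eq_zero (fun x hx => hlead x (hf j x hx).1)] at this
    exact hwj this
  · intro hj
    refine mem_Piv.2 ⟨extV f (Pi.single j 1), extV_mem hf _, ?_, ?_⟩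
    · simp [extV, hj]
    · intro k hk
      by_cases h : f k = ∅
      · have : k ≠ j := ne_of_lt hk
        simp [extV, h, Pi.single_eq_of_ne this]
      · simp only [extV, if_neg h]
        apply Finset.sum_eq_zero
        intro x hx
        have hxk : x < k := (hf k x hx).1
        have : x ≠ j := ne_of_lt (hxk.trans hk)
        exact Pi.single_eq_of_ne this 1

lemma canon_Wof {f : Fin m → Finset (Fin m)} (hf : Good f) {p : Fin m} :
    canon (Wof f) p = extV f (Pi.single p 1) := by
  have h1 : canon (Wof f) p - extV f (Pi.single p 1) ∈ Wof f :=
    (Wof f).sub_mem (canon_mem _ p) (extV_mem hf _)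
  have h2 : ∀ q ∈ Piv (Wof f), (canon (Wof f) p - extV f (Pi.single p 1)) q = 0 := by
    intro q hq
    have hq' : f q = ∅ := (piv_Wof hf q).1 hq
    rw [Pi.sub_apply, canon_spec _ p q hq]
    simp [extV, hq']
  exact sub_eq_zero.mp (eq_zero_of_piv h1 h2)

lemma fof_Wof {f : Fin m → Finset (Fin m)} (hf : Good f) : fof (Wof f) = f := by
  funext j
  by_cases hj : f j = ∅
  · rw [hj]
    simp [fof, (piv_Wof hf j).2 hj]
  · ext x
    rw [mem_fof]
    have hco : ∀ x : Fin m, canon (Wof f) x j = if x ∈ f j then 1 else 0 := by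
      intro x
      rw [canon_Wof hf]
      simp only [extV, if_neg hj]
      rw [Finset.sum_pi_single']
    constructor
    · rintro ⟨-, hxP, hc⟩
      rw [hco x] at hc
      by_contra h
      rw [if_neg h] at hc
      exact hc rfl
    · intro hx
      refine ⟨fun h => hj ((piv_Wof hf j).1 h), (piv_Wof hf x).2 (hf j x hx).2, ?_⟩
      rw [hco x, if_pos hx]
      exact one_ne_zero

lemma le_Wof_fof (W : Submodule (ZMod 2) (Fin m → ZMod 2)) : W ≤ Wof (fof W) := by
  intro w hw
  rw [mem_Wof]
  intro j hj
  have hjP : j ∉ Piv W := by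
    intro h
    simp [fof, h] at hj
  have hrepr := repr_canon W hw
  conv_lhs => rw [hrepr]
  rw [Finset.sum_apply]
  have hfof : fof W j = (Piv W).filter fun p => canon W p j ≠ 0 := by
    simp [fof, hjP]
  rw [hfof]
  rw [← Finset.sum_filter_of_ne (p := fun p => canon W p j ≠ 0)
    (f := fun p => (w p • canon W p) j)]
  · apply Finset.sum_congr rfl
    intro p hp
    have : canon W p j = 1 := zmod2_one (Finset.mem_filter.1 hp).2
    rw [Pi.smul_apply, this, smul_eq_mul, mul_one]
  · intro p _ hne hc
    apply hne
    rw [Pi.smul_apply, hc, smul_zero]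

lemma Wof_fof_le {W : Submodule (ZMod 2) (Fin m → ZMod 2)}
    (hfull : ∀ i, ∃ w ∈ W, w i ≠ 0) : Wof (fof W) ≤ W := by
  intro u hu
  set w := ∑ p ∈ Piv W, u p • canon W p with hwdef
  have hwW : w ∈ W := Submodule.sum_mem W fun p _ => W.smul_mem _ (canon_mem W p)
  have hagree : ∀ q ∈ Piv W, w q = u q := fun q hq => sum_canon_apply W u hq
  have : u = w := by
    funext j
    by_cases hj : j ∈ Piv W
    · exact (hagree j hj).symm
    · have hne : fof W j ≠ ∅ := by
        obtain ⟨v, hv, hvj⟩ := hfull j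
        have hrepr := repr_canon W hv
        have : ∃ p ∈ Piv W, canon W p j ≠ 0 := by
          by_contra hc
          push_neg at hc
          apply hvj
          rw [hrepr, Finset.sum_apply]
          apply Finset.sum_eq_zero
          intro p hp
          rw [Pi.smul_apply, hc p hp, smul_zero]
        obtain ⟨p, hp, hpc⟩ := this
        rw [← Finset.nonempty_iff_ne_empty]
        exact ⟨p, mem_fof.2 ⟨hj, hp, hpc⟩⟩
      have h1 : u j = ∑ x ∈ fof W j, u x := mem_Wof.1 hu j hne
      have h2 : w j = ∑ x ∈ fof W j, w x := mem_Wof.1 (le_Wof_fof W hwW) j hne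
      rw [h1, h2]
      apply Finset.sum_congr rfl
      intro x hx
      exact (hagree x (mem_fof.1 hx).2.1).symm
  rw [this]
  exact hwW

lemma Wof_fof {W : Submodule (ZMod 2) (Fin m → ZMod 2)}
    (hfull : ∀ i, ∃ w ∈ W, w i ≠ 0) : Wof (fof W) = W :=
  le_antisymm (Wof_fof_le hfull) (le_Wof_fof W)

/-- The equivalence between good functions and full-support subspaces. -/
def goodEquiv (m : ℕ) :
    {f : Fin m → Finset (Fin m) // Good f} ≃
    {W : Submodule (ZMod 2) (Fin m → ZMod 2) // ∀ i, ∃ w ∈ W, w i ≠ 0} where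
  toFun f := ⟨Wof f.1, full_Wof f.2⟩
  invFun W := ⟨fof W.1, good_fof W.1⟩
  left_inv f := Subtype.ext (fof_Wof f.2)
  right_inv W := Subtype.ext (Wof_fof W.2)



variable {n : ℕ}

def LPred (n : ℕ) (R : Finset (Fin n → Bool)) : Prop :=
  (∀ r ∈ R, ∃ a b, IntervalSpec r a b) ∧
  ∀ r ∈ R, ∀ s ∈ R, ∀ a b a' b' : Fin n,
    IntervalSpec r a b → IntervalSpec s a' b' → (a : ℕ) ≠ (b' : ℕ) + 1


lemma spec_unique {r : Fin n → Bool} {a b a' b' : Fin n}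
    (h : IntervalSpec r a b) (h' : IntervalSpec r a' b') : a = a' ∧ b = b' := by
  obtain ⟨hab, hr⟩ := h
  obtain ⟨hab', hr'⟩ := h'
  have h1 : r a = true := (hr a).2 ⟨le_refl _, hab⟩
  have h2 : r a' = true := (hr' a').2 ⟨le_refl _, hab'⟩
  have h3 : r b = true := (hr b).2 ⟨hab, le_refl _⟩
  have h4 : r b' = true := (hr' b').2 ⟨hab', le_refl _⟩
  exact ⟨le_antisymm ((hr a').1 h2).1 ((hr' a).1 h1).1,
    le_antisymm ((hr' b).1 h3).2 ((hr b').1 h4).2⟩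

lemma spec_fun_eq {r r' : Fin n → Bool} {a b : Fin n}
    (h : IntervalSpec r a b) (h' : IntervalSpec r' a b) : r = r' := by
  funext i
  have := (h.2 i).trans (h'.2 i).symm
  cases hri : r i <;> cases hri' : r' i <;> simp_all

lemma spec_exists {a b : Fin n} (h : a ≤ b) :
    IntervalSpec (fun i => decide (a ≤ i ∧ i ≤ b)) a b :=
  ⟨h, fun i => by simp⟩

def toF (R : Finset (Fin n → Bool)) : Fin (n+1) → Finset (Fin (n+1)) := fun y =>
  univ.filter fun x => ∃ r ∈ R, ∃ a b : Fin n, IntervalSpec r a b ∧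
    a.castSucc = x ∧ b.succ = y

lemma mem_toF {R : Finset (Fin n → Bool)} {x y : Fin (n+1)} :
    x ∈ toF R y ↔ ∃ r ∈ R, ∃ a b : Fin n, IntervalSpec r a b ∧ a.castSucc = x ∧ b.succ = y := by
  simp [toF]

def toR (f : Fin (n+1) → Finset (Fin (n+1))) : Finset (Fin n → Bool) :=
  univ.filter fun r => ∃ a b : Fin n, IntervalSpec r a b ∧ a.castSucc ∈ f b.succ

lemma mem_toR {f : Fin (n+1) → Finset (Fin (n+1))} {r : Fin n → Bool} :
    r ∈ toR f ↔ ∃ a b : Fin n, IntervalSpec r a b ∧ a.castSucc ∈ f b.succ := by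
  simp [toR]

lemma good_toF {R : Finset (Fin n → Bool)} (hR : LPred n R) : Good (toF R) := by
  intro y x hx
  obtain ⟨r, hrR, a, b, hspec, hax, hby⟩ := mem_toF.1 hx
  constructor
  · have hab := hspec.1
    rw [Fin.le_def] at hab
    rw [← hax, ← hby, Fin.lt_def]
    simp only [Fin.coe_castSucc, Fin.val_succ]
    omega
  · rw [Finset.eq_empty_iff_forall_notMem]
    intro x' hx'
    obtain ⟨r', hr'R, a', b', hspec', hax', hbx⟩ := mem_toF.1 hx'
    -- b'.succ = x = a.castSucc : contradiction with hR.2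
    have : (a : ℕ) = (b' : ℕ) + 1 := by
      have := hbx.trans hax.symm
      have := congrArg Fin.val this
      simpa using this.symm
    exact hR.2 r hrR r' hr'R a b a' b' hspec hspec' this

lemma lpred_toR {f : Fin (n+1) → Finset (Fin (n+1))} (hf : Good f) : LPred n (toR f) := by
  constructor
  · intro r hr
    obtain ⟨a, b, hspec, -⟩ := mem_toR.1 hr
    exact ⟨a, b, hspec⟩
  · intro r hr s hs a b a' b' hspec hspec' hcontra
    obtain ⟨a0, b0, hspec0, hmem0⟩ := mem_toR.1 hr
    obtain ⟨a1, b1, hspec1, hmem1⟩ := mem_toR.1 hs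
    obtain ⟨ha0, hb0⟩ := spec_unique hspec0 hspec
    obtain ⟨ha1, hb1⟩ := spec_unique hspec1 hspec'
    rw [ha0, hb0] at hmem0
    rw [ha1, hb1] at hmem1
    have heq : a.castSucc = b'.succ := Fin.ext (by simpa using hcontra)
    have h1 := (hf b.succ a.castSucc hmem0).2
    rw [heq] at h1
    rw [h1] at hmem1
    exact absurd hmem1 (Finset.notMem_empty _)

lemma toR_toF {R : Finset (Fin n → Bool)} (hR : LPred n R) : toR (toF R) = R := by
  ext r
  rw [mem_toR]
  constructor
  · rintro ⟨a, b, hspec, hmem⟩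
    obtain ⟨r', hr'R, a', b', hspec', hax, hby⟩ := mem_toF.1 hmem
    have ha : a' = a := Fin.castSucc_injective _ hax
    have hb : b' = b := Fin.succ_injective _ hby
    subst ha; subst hb
    rwa [spec_fun_eq hspec hspec']
  · intro hr
    obtain ⟨a, b, hspec⟩ := hR.1 r hr
    exact ⟨a, b, hspec, mem_toF.2 ⟨r, hr, a, b, hspec, rfl, rfl⟩⟩

lemma toF_toR {f : Fin (n+1) → Finset (Fin (n+1))} (hf : Good f) : toF (toR f) = f := by
  funext y
  ext x
  rw [mem_toF]
  constructor
  · rintro ⟨r, hr, a, b, hspec, hax, hby⟩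
    obtain ⟨a0, b0, hspec0, hmem0⟩ := mem_toR.1 hr
    obtain ⟨ha, hb⟩ := spec_unique hspec0 hspec
    subst ha; subst hb
    rw [hax, hby] at hmem0
    exact hmem0
  · intro hx
    have hxy : x < y := (hf y x hx).1
    have hyn : (y : ℕ) ≤ n := Nat.lt_succ_iff.1 y.isLt
    have hxn : (x : ℕ) < n := lt_of_lt_of_le hxy hyn
    have hy1 : 1 ≤ (y : ℕ) := by
      have := hxy
      rw [Fin.lt_def] at this
      omega
    set a : Fin n := ⟨x, hxn⟩ with ha
    set b : Fin n := ⟨(y : ℕ) - 1, by omega⟩ with hb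
    have hab : a ≤ b := by
      rw [Fin.le_def]
      simp only [ha, hb]
      omega
    have hax : a.castSucc = x := Fin.ext rfl
    have hby : b.succ = y := Fin.ext (by simp [hb]; omega)
    refine ⟨fun i => decide (a ≤ i ∧ i ≤ b), ?_, a, b, spec_exists hab, hax, hby⟩
    rw [mem_toR]
    exact ⟨a, b, spec_exists hab, by rw [hax, hby]; exact hx⟩


def mainEquiv (n : ℕ) :
    {R : Finset (Fin n → Bool) // LPred n R} ≃
    {W : Submodule (ZMod 2) (Fin (n + 1) → ZMod 2) // ∀ i, ∃ w ∈ W, w i ≠ 0} :=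
  Equiv.trans
    { toFun := fun R => ⟨toF R.1, good_toF R.2⟩
      invFun := fun f => ⟨toR f.1, lpred_toR f.2⟩
      left_inv := fun R => Subtype.ext (toR_toF R.2)
      right_inv := fun f => Subtype.ext (toF_toR f.2) }
    (goodEquiv (n + 1))

end HCOaux

end

/-- The number of sets `R` of discrete intervals of length `n` such that no `r, s ∈ R`
satisfy `first r = last s + 1` (equivalently, `R` is the row set of an HCO sensor matrix
with `n` columns) equals the number of subspaces of `(ZMod 2)^(n+1)` with full support. -/
theorem card_HCO_row_sets_eq_card_full_support_subspaces (n : ℕ) :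
    {R : Finset (Fin n → Bool) |
        (∀ r ∈ R, ∃ a b, IntervalSpec r a b) ∧
        ∀ r ∈ R, ∀ s ∈ R, ∀ a b a' b' : Fin n,
          IntervalSpec r a b → IntervalSpec s a' b' → (a : ℕ) ≠ (b' : ℕ) + 1}.ncard =
    {W : Submodule (ZMod 2) (Fin (n + 1) → ZMod 2) |
        ∀ i, ∃ w ∈ W, w i ≠ 0}.ncard := by
  rw [← Nat.card_coe_set_eq, ← Nat.card_coe_set_eq]
  exact Nat.card_congr (HCOaux.mainEquiv n)
end

section
/- Let n ≥ 1 be a natural number. (a) The number of sets R of vectors in Fin n → Bool such that every r ∈ R is a cyclic discrete interval that is not the all-true vector, and no two elements r, s ∈ R satisfy first(r) = last(s) + 1 with indices taken cyclically modulo n, equals ∑_{m=0}^{n} (Nat.choose n m) * (2^(n-m) - 1)^m. (b) The number of such sets R in which the all-true vector is additionally allowed as an element equals 2 * ∑_{m=0}^{n} (Nat.choose n m) * (2^(n-m) - 1)^m. -/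
/-- `CyclicSpec r a b` says the `true` positions of `r` are exactly the cyclic block of
indices running from `a` to `b` (wrapping around modulo `n` when `b < a`); so `a` is the
first and `b` the last position of the cyclic block of `true` entries of `r`. -/
def CyclicSpec {n : ℕ} (r : Fin n → Bool) (a b : Fin n) : Prop :=
  ∀ i, r i = true ↔ (if a ≤ b then (a ≤ i ∧ i ≤ b) else (a ≤ i ∨ i ≤ b))

namespace HCCOaux

def memN (a b i : ℕ) : Prop :=
  (a ≤ b → (a ≤ i ∧ i ≤ b)) ∧ (b < a → (a ≤ i ∨ i ≤ b))

instance (a b i : ℕ) : Decidable (memN a b i) := by unfold memN; infer_instance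

set_option maxHeartbeats 1000000 in
lemma keyUnique {n a b a' b' : ℕ} (ha : a < n) (hb : b < n) (ha' : a' < n) (hb' : b' < n)
    (e1 : (b + 1) % n ≠ a) (e2 : (b' + 1) % n ≠ a')
    (H : ∀ i < n, (memN a b i ↔ memN a' b' i)) : a = a' ∧ b = b' := by
  have hn : 0 < n := by omega
  have e1' : ¬ (b + 1 = a ∨ (b = n - 1 ∧ a = 0)) := by
    rcases Nat.lt_or_ge (b+1) n with h | h
    · rw [Nat.mod_eq_of_lt h] at e1; omega
    · have : b + 1 = n := by omega
      rw [this, Nat.mod_self] at e1; omega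
  have e2' : ¬ (b' + 1 = a' ∨ (b' = n - 1 ∧ a' = 0)) := by
    rcases Nat.lt_or_ge (b'+1) n with h | h
    · rw [Nat.mod_eq_of_lt h] at e2; omega
    · have : b' + 1 = n := by omega
      rw [this, Nat.mod_self] at e2; omega
  clear e1 e2
  constructor
  · have h1 := H a ha
    have h2 := H a' ha'
    have h5 := H (a-1) (by omega)
    have h6 := H (a'-1) (by omega)
    have h10 := H (n-1) (by omega)
    unfold memN at *
    omega
  · have h3 := H b hb
    have h4 := H b' hb'
    have h7 : b+1 < n → _ := fun h => H (b+1) h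
    have h8 : b'+1 < n → _ := fun h => H (b'+1) h
    have h9 := H 0 hn
    unfold memN at *
    omega

lemma covers_iff {n a b : ℕ} (ha : a < n) (hb : b < n) :
    ((b + 1) % n = a) ↔ ∀ i < n, memN a b i := by
  have hn : 0 < n := by omega
  have hmod : (b + 1) % n = a ↔ (b + 1 = a ∨ (b = n - 1 ∧ a = 0)) := by
    rcases Nat.lt_or_ge (b+1) n with h | h
    · rw [Nat.mod_eq_of_lt h]; omega
    · have h2 : b + 1 = n := by omega
      rw [h2, Nat.mod_self]; omega
  rw [hmod]
  constructor
  · intro h i hi; unfold memN; omega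
  · intro H
    have h1 := H (a-1) (by omega)
    have h2 := H (n-1) (by omega)
    unfold memN at *
    omega

variable {n : ℕ}

/-- canonical interval vector -/
def Ivec (a b : Fin n) : Fin n → Bool := fun i => decide (memN a.val b.val i.val)

lemma if_mem_iff (a b i : Fin n) :
    (if a ≤ b then (a ≤ i ∧ i ≤ b) else (a ≤ i ∨ i ≤ b)) ↔ memN a.val b.val i.val := by
  unfold memN
  split_ifs with h <;> simp only [Fin.le_def] at * <;> omega

lemma spec_iff_mem (r : Fin n → Bool) (a b : Fin n) :
    CyclicSpec r a b ↔ ∀ i : Fin n, (r i = true ↔ memN a.val b.val i.val) := by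
  unfold CyclicSpec
  exact forall_congr' fun i => iff_congr Iff.rfl (if_mem_iff a b i)

lemma spec_iff_vec (r : Fin n → Bool) (a b : Fin n) :
    CyclicSpec r a b ↔ r = Ivec a b := by
  rw [spec_iff_mem]
  constructor
  · intro h; funext i; have := h i; unfold Ivec
    cases hr : r i <;> simp [hr] at this <;> simp [this]
  · intro h i; subst h; unfold Ivec; simp

lemma spec_Ivec (a b : Fin n) : CyclicSpec (Ivec a b) a b := (spec_iff_vec _ a b).mpr rfl

lemma Ivec_eq_allT_iff (a b : Fin n) :
    Ivec a b = (fun _ => true) ↔ ((b : ℕ) + 1) % n = (a : ℕ) := by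
  rw [covers_iff a.isLt b.isLt]
  constructor
  · intro h i hi
    have := congrFun h ⟨i, hi⟩
    unfold Ivec at this
    simpa using this
  · intro h; funext i; unfold Ivec; simp [h i.val i.isLt]

lemma spec_unique {r : Fin n → Bool} {a b a' b' : Fin n} (hr : r ≠ (fun _ => true))
    (s1 : CyclicSpec r a b) (s2 : CyclicSpec r a' b') : a = a' ∧ b = b' := by
  rw [spec_iff_vec] at s1 s2
  have e1 : ((b : ℕ) + 1) % n ≠ (a : ℕ) := fun h => hr (s1.trans ((Ivec_eq_allT_iff a b).mpr h))
  have e2 : ((b' : ℕ) + 1) % n ≠ (a' : ℕ) := fun h => hr (s2.trans ((Ivec_eq_allT_iff a' b').mpr h))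
  have H : ∀ i < n, (memN a.val b.val i ↔ memN a'.val b'.val i) := by
    intro i hi
    have := congrFun (s1.symm.trans s2) ⟨i, hi⟩
    unfold Ivec at this
    constructor <;> intro h
    · exact of_decide_eq_true (this ▸ decide_eq_true h)
    · exact of_decide_eq_true (this ▸ decide_eq_true h)
  have := keyUnique a.isLt b.isLt a'.isLt b'.isLt e1 e2 H
  exact ⟨Fin.ext this.1, Fin.ext this.2⟩

lemma val_add_one [NeZero n] (b : Fin n) : ((b + 1 : Fin n) : ℕ) = ((b : ℕ) + 1) % n := by
  rw [Fin.add_def, Fin.val_one']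
  conv_rhs => rw [Nat.add_mod, Nat.mod_eq_of_lt b.isLt]


def allowed [NeZero n] (A : Finset (Fin n)) : Finset (Fin n) :=
  Finset.univ.filter (fun b => b + 1 ∉ A)

lemma card_allowed [NeZero n] (A : Finset (Fin n)) : (allowed A).card = n - A.card := by
  classical
  have h1 : (Finset.univ.filter (fun b : Fin n => b + 1 ∈ A)).card = A.card := by
    apply Finset.card_bij (fun b _ => b + 1)
    · intro b hb; exact (Finset.mem_filter.mp hb).2
    · intro b hb b' hb' h; exact add_right_cancel h
    · intro c hc
      refine ⟨c - 1, Finset.mem_filter.mpr ⟨Finset.mem_univ _, by simpa [sub_add_cancel] using hc⟩, (sub_add_cancel c 1)⟩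
  have h2 := Finset.card_filter_add_card_filter_not
    (s := (Finset.univ : Finset (Fin n))) (p := fun b => b + 1 ∈ A)
  have h3 : (Finset.univ : Finset (Fin n)).card = n := by simp
  unfold allowed
  omega

lemma countG [NeZero n] :
    Nat.card {g : Fin n → Finset (Fin n) // ∀ a : Fin n, ∀ b ∈ g a, g (b + 1) = ∅} =
      ∑ m ∈ Finset.range (n + 1), Nat.choose n m * (2 ^ (n - m) - 1) ^ m := by
  classical
  rw [Nat.card_eq_fintype_card, Fintype.card_subtype]
  rw [Finset.card_eq_sum_card_fiberwise
    (f := fun g : Fin n → Finset (Fin n) => Finset.univ.filter (fun a => g a ≠ ∅))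
    (t := Finset.univ) (fun _ _ => Finset.mem_univ _)]
  have key : ∀ A : Finset (Fin n),
      (((Finset.univ.filter (fun g : Fin n → Finset (Fin n) => ∀ a : Fin n, ∀ b ∈ g a, g (b + 1) = ∅)).filter
        (fun g => Finset.univ.filter (fun a => g a ≠ ∅) = A)).card)
        = (2 ^ (n - A.card) - 1) ^ A.card := by
    intro A
    have hset : ((Finset.univ.filter (fun g : Fin n → Finset (Fin n) => ∀ a : Fin n, ∀ b ∈ g a, g (b + 1) = ∅)).filter
        (fun g => Finset.univ.filter (fun a => g a ≠ ∅) = A))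
        = Fintype.piFinset (fun a => if a ∈ A then ((allowed A).powerset.erase ∅) else {∅}) := by
      ext g
      simp only [Finset.mem_filter, Finset.mem_univ, true_and, Fintype.mem_piFinset]
      constructor
      · rintro ⟨hP, hsupp⟩ a
        by_cases ha : a ∈ A
        · simp only [ha, if_true, Finset.mem_erase, Finset.mem_powerset]
          constructor
          · have : a ∈ Finset.univ.filter (fun a => g a ≠ ∅) := hsupp ▸ ha
            simpa using this
          · intro b hb
            have h1 : g (b + 1) = ∅ := hP a b hb
            simp only [allowed, Finset.mem_filter, Finset.mem_univ, true_and]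
            intro hmem
            have : b + 1 ∈ Finset.univ.filter (fun a => g a ≠ ∅) := hsupp ▸ hmem
            simp only [Finset.mem_filter] at this
            exact this.2 h1
        · simp only [ha, if_false, Finset.mem_singleton]
          by_contra hne
          have : a ∈ Finset.univ.filter (fun a => g a ≠ ∅) := by simpa using hne
          exact ha (hsupp ▸ this)
      · intro h
        constructor
        · intro a b hb
          have ha : a ∈ A := by
            by_contra ha
            have := h a; simp only [ha, if_false, Finset.mem_singleton] at this
            rw [this] at hb; exact absurd hb (Finset.notMem_empty b)
          have := h a
          simp only [ha, if_true, Finset.mem_erase, Finset.mem_powerset] at this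
          have hb1 : b ∈ allowed A := this.2 hb
          simp only [allowed, Finset.mem_filter] at hb1
          have hb2 : b + 1 ∉ A := hb1.2
          have := h (b + 1)
          simp only [hb2, if_false, Finset.mem_singleton] at this
          exact this
        · ext a
          simp only [Finset.mem_filter, Finset.mem_univ, true_and]
          constructor
          · intro hne
            by_contra ha
            have := h a; simp only [ha, if_false, Finset.mem_singleton] at this
            exact hne this
          · intro ha
            have := h a; simp only [ha, if_true, Finset.mem_erase, Finset.mem_powerset] at this
            exact this.1
    rw [hset, Fintype.card_piFinset]
    have hcard : ∀ a : Fin n, (if a ∈ A then ((allowed A).powerset.erase ∅) else ({∅} : Finset (Finset (Fin n)))).card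
        = if a ∈ A then 2 ^ (n - A.card) - 1 else 1 := by
      intro a
      split_ifs with ha
      · rw [Finset.card_erase_of_mem (Finset.mem_powerset.mpr (Finset.empty_subset _)),
          Finset.card_powerset, card_allowed]
      · simp
    simp only [hcard]
    rw [Finset.prod_ite_mem, Finset.univ_inter, Finset.prod_const]
  simp only [key]
  rw [← Finset.powerset_univ, Finset.sum_powerset]
  have huniv : (Finset.univ : Finset (Fin n)).card = n := by simp
  rw [huniv]
  refine Finset.sum_congr rfl fun m hm => ?_
  rw [Finset.sum_congr rfl (fun A hA => by
    rw [(Finset.mem_powersetCard.mp hA).2]), Finset.sum_const, Finset.card_powersetCard, huniv,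
    smul_eq_mul]


lemma ne_allT_of_P [NeZero n] {g : Fin n → Finset (Fin n)}
    (hg : ∀ a : Fin n, ∀ b ∈ g a, g (b + 1) = ∅) {a b : Fin n} (hb : b ∈ g a) :
    Ivec a b ≠ (fun _ => true) := by
  intro h
  have h1 : ((b : ℕ) + 1) % n = (a : ℕ) := (Ivec_eq_allT_iff a b).mp h
  have h2 : a = b + 1 := Fin.ext (by rw [val_add_one]; exact h1.symm)
  have h3 : g a = ∅ := h2 ▸ hg a b hb
  rw [h3] at hb
  exact absurd hb (Finset.notMem_empty b)

lemma spec_allT [NeZero n] :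
    CyclicSpec (fun _ => true : Fin n → Bool) ⟨0, Nat.pos_of_ne_zero (NeZero.ne n)⟩
      ⟨n - 1, by have := Nat.pos_of_ne_zero (NeZero.ne n); omega⟩ := by
  rw [spec_iff_mem]
  intro i
  have := i.isLt
  unfold memN
  simp only [true_iff]
  omega

def EquivA (n : ℕ) [NeZero n] :
    {R : Finset (Fin n → Bool) //
        (∀ r ∈ R, r ≠ (fun _ => true) ∧ ∃ a b, CyclicSpec r a b) ∧
        ∀ r ∈ R, ∀ s ∈ R, ∀ a b a' b' : Fin n,
          CyclicSpec r a b → CyclicSpec s a' b' → (a : ℕ) ≠ ((b' : ℕ) + 1) % n} ≃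
    {g : Fin n → Finset (Fin n) // ∀ a : Fin n, ∀ b ∈ g a, g (b + 1) = ∅} where
  toFun := fun ⟨R, hR⟩ => ⟨fun a => Finset.univ.filter (fun b => Ivec a b ∈ R), by
    intro a b hb
    simp only [Finset.mem_filter, Finset.mem_univ, true_and] at hb
    rw [Finset.eq_empty_iff_forall_notMem]
    intro c hc
    simp only [Finset.mem_filter, Finset.mem_univ, true_and] at hc
    exact hR.2 (Ivec (b+1) c) hc (Ivec a b) hb (b+1) c a b (spec_Ivec _ _) (spec_Ivec _ _)
      (val_add_one b)⟩
  invFun := fun ⟨g, hg⟩ => ⟨Finset.univ.filter (fun r => ∃ a b, b ∈ g a ∧ r = Ivec a b), by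
    constructor
    · intro r hr
      simp only [Finset.mem_filter, Finset.mem_univ, true_and] at hr
      obtain ⟨a, b, hb, rfl⟩ := hr
      exact ⟨ne_allT_of_P hg hb, a, b, spec_Ivec a b⟩
    · intro r hr s hs a b a' b' h1 h2
      simp only [Finset.mem_filter, Finset.mem_univ, true_and] at hr hs
      obtain ⟨c, d, hd, rfl⟩ := hr
      obtain ⟨c', d', hd', rfl⟩ := hs
      obtain ⟨hac, -⟩ := spec_unique (ne_allT_of_P hg hd) h1 (spec_Ivec c d)
      obtain ⟨-, hbd⟩ := spec_unique (ne_allT_of_P hg hd') h2 (spec_Ivec c' d')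
      intro he
      rw [hac, hbd] at he
      have h3 : c = d' + 1 := Fin.ext (by rw [val_add_one]; exact he)
      have h4 : g c = ∅ := h3 ▸ hg c' d' hd'
      rw [h4] at hd
      exact absurd hd (Finset.notMem_empty d)⟩
  left_inv := by
    rintro ⟨R, hR⟩
    apply Subtype.ext
    ext r
    simp only [Finset.mem_filter, Finset.mem_univ, true_and]
    constructor
    · rintro ⟨a, b, hb, rfl⟩
      exact hb
    · intro hr
      obtain ⟨hne, a, b, hs⟩ := hR.1 r hr
      have he : r = Ivec a b := (spec_iff_vec r a b).mp hs
      exact ⟨a, b, by rw [← he]; exact hr, he⟩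
  right_inv := by
    rintro ⟨g, hg⟩
    apply Subtype.ext
    funext a
    ext b
    simp only [Finset.mem_filter, Finset.mem_univ, true_and]
    constructor
    · rintro ⟨a'', b'', hb'', he⟩
      have hne : Ivec a b ≠ (fun _ => true) := by
        rw [he]; exact ne_allT_of_P hg hb''
      obtain ⟨h1, h2⟩ := spec_unique hne (spec_Ivec a b) ((spec_iff_vec _ _ _).mpr he)
      subst h1; subst h2
      exact hb''
    · intro hb
      exact ⟨a, b, hb, rfl⟩


lemma cardA (n : ℕ) (hn : 1 ≤ n) :
    ({R : Finset (Fin n → Bool) |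
        (∀ r ∈ R, r ≠ (fun _ => true) ∧ ∃ a b, CyclicSpec r a b) ∧
        ∀ r ∈ R, ∀ s ∈ R, ∀ a b a' b' : Fin n,
          CyclicSpec r a b → CyclicSpec s a' b' → (a : ℕ) ≠ ((b' : ℕ) + 1) % n}.ncard =
      ∑ m ∈ Finset.range (n + 1), Nat.choose n m * (2 ^ (n - m) - 1) ^ m) := by
  haveI : NeZero n := ⟨by omega⟩
  rw [← Nat.card_coe_set_eq]
  exact (Nat.card_congr (EquivA n)).trans countG

def EquivB (n : ℕ) [NeZero n] :
    {R : Finset (Fin n → Bool) //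
        (∀ r ∈ R, ∃ a b, CyclicSpec r a b) ∧
        ∀ r ∈ R, ∀ s ∈ R, r ≠ (fun _ => true) → s ≠ (fun _ => true) →
          ∀ a b a' b' : Fin n,
            CyclicSpec r a b → CyclicSpec s a' b' → (a : ℕ) ≠ ((b' : ℕ) + 1) % n} ≃
    {R : Finset (Fin n → Bool) //
        (∀ r ∈ R, r ≠ (fun _ => true) ∧ ∃ a b, CyclicSpec r a b) ∧
        ∀ r ∈ R, ∀ s ∈ R, ∀ a b a' b' : Fin n,
          CyclicSpec r a b → CyclicSpec s a' b' → (a : ℕ) ≠ ((b' : ℕ) + 1) % n} × Bool where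
  toFun := fun ⟨R, hR⟩ => (⟨R.erase (fun _ => true), by
    constructor
    · intro r hr
      rw [Finset.mem_erase] at hr
      exact ⟨hr.1, hR.1 r hr.2⟩
    · intro r hr s hs a b a' b' h1 h2
      rw [Finset.mem_erase] at hr hs
      exact hR.2 r hr.2 s hs.2 hr.1 hs.1 a b a' b' h1 h2⟩, decide ((fun _ => true) ∈ R))
  invFun := fun p => ⟨if p.2 then insert (fun _ => true) p.1.1 else p.1.1, by
    obtain ⟨⟨R, hR⟩, t⟩ := p
    cases t
    · simp only [Bool.false_eq_true, if_false]
      exact ⟨fun r hr => (hR.1 r hr).2, fun r hr s hs _ _ => hR.2 r hr s hs⟩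
    · simp only [if_true]
      constructor
      · intro r hr
        rw [Finset.mem_insert] at hr
        rcases hr with rfl | hr
        · exact ⟨_, _, spec_allT⟩
        · exact (hR.1 r hr).2
      · intro r hr s hs hrne hsne
        rw [Finset.mem_insert] at hr hs
        rcases hr with rfl | hr
        · exact absurd rfl hrne
        rcases hs with rfl | hs
        · exact absurd rfl hsne
        exact hR.2 r hr s hs⟩
  left_inv := by
    rintro ⟨R, hR⟩
    apply Subtype.ext
    simp only
    by_cases h : (fun _ => true : Fin n → Bool) ∈ R
    · simp only [decide_eq_true h, if_true]
      exact Finset.insert_erase h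
    · simp only [decide_eq_false h, Bool.false_eq_true, if_false]
      exact Finset.erase_eq_of_notMem h
  right_inv := by
    rintro ⟨⟨R, hR⟩, t⟩
    have hnot : (fun _ => true : Fin n → Bool) ∉ R := fun h => (hR.1 _ h).1 rfl
    cases t
    · simp only [Bool.false_eq_true, if_false]
      refine Prod.ext (Subtype.ext ?_) ?_
      · exact Finset.erase_eq_of_notMem hnot
      · simp [hnot]
    · simp only [if_true]
      refine Prod.ext (Subtype.ext ?_) ?_
      · exact Finset.erase_insert hnot
      · simp

lemma cardB (n : ℕ) (hn : 1 ≤ n) :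
    ({R : Finset (Fin n → Bool) |
        (∀ r ∈ R, ∃ a b, CyclicSpec r a b) ∧
        ∀ r ∈ R, ∀ s ∈ R, r ≠ (fun _ => true) → s ≠ (fun _ => true) →
          ∀ a b a' b' : Fin n,
            CyclicSpec r a b → CyclicSpec s a' b' → (a : ℕ) ≠ ((b' : ℕ) + 1) % n}.ncard =
      2 * ∑ m ∈ Finset.range (n + 1), Nat.choose n m * (2 ^ (n - m) - 1) ^ m) := by
  haveI : NeZero n := ⟨by omega⟩
  have hA : Nat.card {R : Finset (Fin n → Bool) //
        (∀ r ∈ R, r ≠ (fun _ => true) ∧ ∃ a b, CyclicSpec r a b) ∧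
        ∀ r ∈ R, ∀ s ∈ R, ∀ a b a' b' : Fin n,
          CyclicSpec r a b → CyclicSpec s a' b' → (a : ℕ) ≠ ((b' : ℕ) + 1) % n}
      = ∑ m ∈ Finset.range (n + 1), Nat.choose n m * (2 ^ (n - m) - 1) ^ m :=
    (Nat.card_coe_set_eq _).trans (cardA n hn)
  rw [← Nat.card_coe_set_eq]
  refine (Nat.card_congr (EquivB n)).trans ?_
  rw [Nat.card_prod, hA, Nat.card_eq_fintype_card (α := Bool), Fintype.card_bool, mul_comm]

end HCCOaux

/-- (a) The number of sets `R` of cyclic discrete intervals of length `n ≥ 1`, none equal to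
the all-`true` vector, such that no `r, s ∈ R` satisfy `first r = last s + 1` (mod `n`),
equals `∑_{m=0}^{n} C(n,m) (2^(n-m) - 1)^m`.
(b) Allowing the all-`true` vector as an element doubles the count. -/
theorem card_HCCO_row_sets (n : ℕ) (hn : 1 ≤ n) :
    ({R : Finset (Fin n → Bool) |
        (∀ r ∈ R, r ≠ (fun _ => true) ∧ ∃ a b, CyclicSpec r a b) ∧
        ∀ r ∈ R, ∀ s ∈ R, ∀ a b a' b' : Fin n,
          CyclicSpec r a b → CyclicSpec s a' b' → (a : ℕ) ≠ ((b' : ℕ) + 1) % n}.ncard =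
      ∑ m ∈ Finset.range (n + 1), Nat.choose n m * (2 ^ (n - m) - 1) ^ m) ∧
    ({R : Finset (Fin n → Bool) |
        (∀ r ∈ R, ∃ a b, CyclicSpec r a b) ∧
        ∀ r ∈ R, ∀ s ∈ R, r ≠ (fun _ => true) → s ≠ (fun _ => true) →
          ∀ a b a' b' : Fin n,
            CyclicSpec r a b → CyclicSpec s a' b' → (a : ℕ) ≠ ((b' : ℕ) + 1) % n}.ncard =
      2 * ∑ m ∈ Finset.range (n + 1), Nat.choose n m * (2 ^ (n - m) - 1) ^ m) :=
  ⟨HCCOaux.cardA n hn, HCCOaux.cardB n hn⟩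
end

section
/- Let C be a finite set of vectors in Fin k → Bool. The following are equivalent: (i) there exist U : Fin k → Set ℝ with each U i open and convex and a finite set S ⊆ ℝ such that the code of U over S equals C; (ii) there exist U : Fin k → Set ℝ with each U i closed and convex and a finite set S ⊆ ℝ such that the code of U over S equals C; (iii) there exist U : Fin k → Set ℝ with each U i convex and a finite set S ⊆ ℝ such that the code of U over S equals C. -/
lemma exists_gap_below (S : Set ℝ) (hS : S.Finite) (a : ℝ) :
    ∃ c < a, ∀ s ∈ S, s < a → s ≤ c := by
  classical
  set F := (hS.inter_of_left (Set.Iio a)).toFinset with hF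
  by_cases h : F.Nonempty
  · have hm : F.max' h < a := by
      exact (Set.Finite.mem_toFinset _).mp (F.max'_mem h) |>.2
    refine ⟨(F.max' h + a) / 2, by linarith, fun s hs hsa => ?_⟩
    have hsF : s ∈ F := (Set.Finite.mem_toFinset _).mpr ⟨hs, hsa⟩
    have := F.le_max' s hsF
    linarith
  · refine ⟨a - 1, by linarith, fun s hs hsa => absurd ⟨s, ?_⟩ h⟩
    exact (Set.Finite.mem_toFinset _).mpr ⟨hs, hsa⟩

lemma exists_gap_above (S : Set ℝ) (hS : S.Finite) (b : ℝ) :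
    ∃ d, b < d ∧ ∀ s ∈ S, b < s → d ≤ s := by
  classical
  set F := (hS.inter_of_left (Set.Ioi b)).toFinset with hF
  by_cases h : F.Nonempty
  · have hm : b < F.min' h := by
      exact (Set.Finite.mem_toFinset _).mp (F.min'_mem h) |>.2
    refine ⟨(b + F.min' h) / 2, by linarith, fun s hs hsb => ?_⟩
    have hsF : s ∈ F := (Set.Finite.mem_toFinset _).mpr ⟨hs, hsb⟩
    have := F.min'_le s hsF
    linarith
  · refine ⟨b + 1, by linarith, fun s hs hsb => absurd ⟨s, ?_⟩ h⟩
    exact (Set.Finite.mem_toFinset _).mpr ⟨hs, hsb⟩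

lemma exists_agree {k : ℕ} (U : Fin k → Set ℝ) (S : Set ℝ) (hS : S.Finite)
    (hU : ∀ i, Convex ℝ (U i)) :
    ∃ V W : Fin k → Set ℝ,
      (∀ i, IsOpen (V i)) ∧ (∀ i, Convex ℝ (V i)) ∧
      (∀ i, IsClosed (W i)) ∧ (∀ i, Convex ℝ (W i)) ∧
      (∀ s ∈ S, ∀ i, (s ∈ V i ↔ s ∈ U i) ∧ (s ∈ W i ↔ s ∈ U i)) := by
  classical
  have key : ∀ i : Fin k, ∃ V W : Set ℝ, IsOpen V ∧ Convex ℝ V ∧ IsClosed W ∧ Convex ℝ W ∧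
      ∀ s ∈ S, (s ∈ V ↔ s ∈ U i) ∧ (s ∈ W ↔ s ∈ U i) := by
    intro i
    set F := (hS.inter_of_right (U i)).toFinset with hF
    by_cases h : F.Nonempty
    · set a := F.min' h with ha
      set b := F.max' h with hb
      have haU : a ∈ U i ∧ a ∈ S := by
        have h' : a ∈ U i ∩ S := (Set.Finite.mem_toFinset _).mp (F.min'_mem h)
        exact h'
      have hbU : b ∈ U i ∧ b ∈ S := by
        have h' : b ∈ U i ∩ S := (Set.Finite.mem_toFinset _).mp (F.max'_mem h)
        exact h'
      have hIcc : Set.Icc a b ⊆ U i := (hU i).ordConnected.out haU.1 hbU.1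
      obtain ⟨c, hc, hcs⟩ := exists_gap_below S hS a
      obtain ⟨d, hd, hds⟩ := exists_gap_above S hS b
      have hmem : ∀ s ∈ S, s ∈ U i ↔ a ≤ s ∧ s ≤ b := by
        intro s hs
        constructor
        · intro hsU
          have hsF : s ∈ F := (Set.Finite.mem_toFinset _).mpr ⟨hsU, hs⟩
          exact ⟨F.min'_le s hsF, F.le_max' s hsF⟩
        · intro hab
          exact hIcc ⟨hab.1, hab.2⟩
      refine ⟨Set.Ioo c d, Set.Icc a b, isOpen_Ioo, convex_Ioo c d, isClosed_Icc,
        convex_Icc a b, fun s hs => ⟨?_, ?_⟩⟩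
      · rw [hmem s hs]
        constructor
        · rintro ⟨h1, h2⟩
          constructor
          · by_contra hlt
            have := hcs s hs (lt_of_not_ge hlt)
            linarith
          · by_contra hgt
            have := hds s hs (lt_of_not_ge hgt)
            linarith
        · rintro ⟨h1, h2⟩
          exact ⟨lt_of_lt_of_le hc h1, lt_of_le_of_lt h2 hd⟩
      · rw [hmem s hs]; rfl
    · refine ⟨∅, ∅, isOpen_empty, convex_empty, isClosed_empty, convex_empty,
        fun s hs => ?_⟩
      have hnot : s ∉ U i := fun hsU =>
        absurd ⟨s, (Set.Finite.mem_toFinset _).mpr ⟨hsU, hs⟩⟩ h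
      simp [hnot]
  choose V W h1 h2 h3 h4 h5 using key
  exact ⟨V, W, h1, h2, h3, h4, fun s hs i => h5 i s hs⟩

lemma code_congr {k : ℕ} {U V : Fin k → Set ℝ} {S : Set ℝ}
    (h : ∀ s ∈ S, ∀ i, (s ∈ V i ↔ s ∈ U i)) : code V S = code U S := by
  unfold code
  apply Set.image_congr
  intro s hs
  funext i
  simp only [codeword, decide_eq_decide]
  exact h s hs i

/-- In the sensor-sparse regime in `ℝ¹`, the codes realizable by open convex sets, by closed
convex sets, and by arbitrary convex sets coincide. -/
theorem sparse_open_closed_convex_same_codes (k : ℕ) (C : Finset (Fin k → Bool)) :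
    ((∃ (U : Fin k → Set ℝ) (S : Set ℝ), (∀ i, IsOpen (U i)) ∧ (∀ i, Convex ℝ (U i)) ∧
        S.Finite ∧ code U S = ↑C) ↔
      (∃ (U : Fin k → Set ℝ) (S : Set ℝ), (∀ i, IsClosed (U i)) ∧ (∀ i, Convex ℝ (U i)) ∧
        S.Finite ∧ code U S = ↑C)) ∧
    ((∃ (U : Fin k → Set ℝ) (S : Set ℝ), (∀ i, IsClosed (U i)) ∧ (∀ i, Convex ℝ (U i)) ∧
        S.Finite ∧ code U S = ↑C) ↔
      (∃ (U : Fin k → Set ℝ) (S : Set ℝ), (∀ i, Convex ℝ (U i)) ∧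
        S.Finite ∧ code U S = ↑C)) := by
  have hopen : (∃ (U : Fin k → Set ℝ) (S : Set ℝ), (∀ i, Convex ℝ (U i)) ∧
      S.Finite ∧ code U S = ↑C) →
      (∃ (U : Fin k → Set ℝ) (S : Set ℝ), (∀ i, IsOpen (U i)) ∧ (∀ i, Convex ℝ (U i)) ∧
        S.Finite ∧ code U S = ↑C) := by
    rintro ⟨U, S, hconv, hfin, hcode⟩
    obtain ⟨V, W, h1, h2, _, _, h5⟩ := exists_agree U S hfin hconv
    exact ⟨V, S, h1, h2, hfin,
      (code_congr fun s hs i => (h5 s hs i).1).trans hcode⟩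
  have hclosed : (∃ (U : Fin k → Set ℝ) (S : Set ℝ), (∀ i, Convex ℝ (U i)) ∧
      S.Finite ∧ code U S = ↑C) →
      (∃ (U : Fin k → Set ℝ) (S : Set ℝ), (∀ i, IsClosed (U i)) ∧ (∀ i, Convex ℝ (U i)) ∧
        S.Finite ∧ code U S = ↑C) := by
    rintro ⟨U, S, hconv, hfin, hcode⟩
    obtain ⟨V, W, _, _, h3, h4, h5⟩ := exists_agree U S hfin hconv
    exact ⟨W, S, h3, h4, hfin,
      (code_congr fun s hs i => (h5 s hs i).2).trans hcode⟩
  constructor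
  · constructor
    · rintro ⟨U, S, _, hconv, hfin, hcode⟩
      exact hclosed ⟨U, S, hconv, hfin, hcode⟩
    · rintro ⟨U, S, _, hconv, hfin, hcode⟩
      exact hopen ⟨U, S, hconv, hfin, hcode⟩
  · constructor
    · rintro ⟨U, S, _, hconv, hfin, hcode⟩
      exact ⟨U, S, hconv, hfin, hcode⟩
    · exact hclosed
end
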